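/- arXiv:1904.04988 — 8 statements merged into one kernel-verified Lean document; each statement's English description precedes it below -/
import Mathlib

section
/- If ∑_{i=1}^n b_i/a_i = 1 (as rational numbers), then there exist positive integers r_1, …, r_n such that, setting r_{n+1} = ∑_{i=1}^n r_i, the ideal J is generated by the single binomial z_{n+1}^{r_{n+1}} − ∏_{i=1}^n z_i^{r_i}, i.e. J = (z_{n+1}^{r_{n+1}} − ∏_{i=1}^n z_i^{r_i}). -/
open MvPolynomial

namespace Stmt1

variable {K : Type*} [Field K] {n : ℕ}

lemma prod_X_pow {m : ℕ} (c : Fin m →₀ ℕ) :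
    (∏ j, (X j : MvPolynomial (Fin m) K) ^ c j) = monomial c 1 := by
  rw [monomial_eq, Finsupp.prod_fintype _ _ (fun i => pow_zero _)]
  simp

lemma degree_eq_sum {m : ℕ} (c : Fin m →₀ ℕ) : c.degree = ∑ j, c j :=
  Finset.sum_subset (Finset.subset_univ _)
    (fun x _ hx => Finsupp.notMem_support_iff.1 hx)

def W (a : Fin n → ℕ) (w : Fin n →₀ ℕ) : ℕ := ∑ i, w i * ((∏ j, a j) / a i)

lemma W_add (a : Fin n → ℕ) (x y : Fin n →₀ ℕ) : W a (x + y) = W a x + W a y := by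
  simp [W, add_mul, Finset.sum_add_distrib]

def Mideal (K : Type*) [Field K] {n : ℕ} (a : Fin n → ℕ) (t : ℕ) :
    Ideal (MvPolynomial (Fin n) K) where
  carrier := {p | ∀ m ∈ p.support, t ≤ W a m}
  zero_mem' := by simp
  add_mem' := by
    intro p q hp hq m hm
    rcases Finset.mem_union.1 (MvPolynomial.support_add hm) with h | h
    · exact hp _ h
    · exact hq _ h
  smul_mem' := by
    intro q p hp m hm
    rw [smul_eq_mul] at hm
    obtain ⟨x, hx, y, hy, rfl⟩ := Finset.mem_add.1 (MvPolynomial.support_mul _ _ hm)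
    calc t ≤ W a y := hp _ hy
    _ ≤ W a x + W a y := le_add_self
    _ = W a (x + y) := (W_add a x y).symm

lemma mem_Mideal {a : Fin n → ℕ} {t : ℕ} {p : MvPolynomial (Fin n) K} :
    p ∈ Mideal K a t ↔ ∀ m ∈ p.support, t ≤ W a m := Iff.rfl

lemma Mideal_mul (a : Fin n → ℕ) (s t : ℕ) :
    Mideal K a s * Mideal K a t ≤ Mideal K a (s + t) := by
  rw [Ideal.mul_le]
  intro p hp q hq m hm
  obtain ⟨x, hx, y, hy, rfl⟩ := Finset.mem_add.1 (MvPolynomial.support_mul _ _ hm)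
  rw [W_add]
  exact add_le_add (hp _ hx) (hq _ hy)

lemma Mideal_pow (a : Fin n → ℕ) (s d : ℕ) :
    (Mideal K a s) ^ d ≤ Mideal K a (d * s) := by
  induction d with
  | zero => intro p _ m _; simpa using Nat.zero_le (W a m)
  | succ d ih =>
      rw [pow_succ]
      refine le_trans (Ideal.mul_mono ih le_rfl) ?_
      refine le_trans (Mideal_mul a (d * s) s) ?_
      rw [Nat.succ_mul]


noncomputable def Vmap (a b : Fin n → ℕ) (c : Fin (n + 1) →₀ ℕ) : Fin n →₀ ℕ :=
  Finsupp.equivFunOnFinite.symm (fun i => a i * c i.castSucc + b i * c (Fin.last n))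

lemma Vmap_apply (a b : Fin n → ℕ) (c : Fin (n + 1) →₀ ℕ) (i : Fin n) :
    Vmap a b c i = a i * c i.castSucc + b i * c (Fin.last n) := rfl

lemma aeval_monomial_eq (a b : Fin n → ℕ) (u : Fin (n + 1) → MvPolynomial (Fin n) K)
    (hu : ∀ i : Fin n, u i.castSucc = X i ^ a i)
    (hulast : u (Fin.last n) = ∏ i, X i ^ b i)
    (c : Fin (n + 1) →₀ ℕ) (k : K) :
    aeval u (monomial c k) = monomial (Vmap a b c) k := by
  rw [aeval_monomial, Finsupp.prod_fintype _ _ (fun i => pow_zero _),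
    Fin.prod_univ_castSucc]
  simp only [hu, hulast]
  have h1 : (∏ i : Fin n, ((X i : MvPolynomial (Fin n) K) ^ a i) ^ c i.castSucc) *
      ((∏ i, (X i : MvPolynomial (Fin n) K) ^ b i) ^ c (Fin.last n)) =
      ∏ i : Fin n, (X i : MvPolynomial (Fin n) K) ^ (Vmap a b c i) := by
    rw [← Finset.prod_pow, ← Finset.prod_mul_distrib]
    refine Finset.prod_congr rfl fun i _ => ?_
    rw [← pow_mul, ← pow_mul, ← pow_add, Vmap_apply]
  rw [h1, prod_X_pow]
  simp [algebraMap_eq, C_mul_monomial]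

lemma aeval_eq (a b : Fin n → ℕ) (u : Fin (n + 1) → MvPolynomial (Fin n) K)
    (hu : ∀ i : Fin n, u i.castSucc = X i ^ a i)
    (hulast : u (Fin.last n) = ∏ i, X i ^ b i)
    (f : MvPolynomial (Fin (n + 1)) K) :
    aeval u f = ∑ c ∈ f.support, monomial (Vmap a b c) (coeff c f) := by
  conv_lhs => rw [f.as_sum]
  rw [map_sum]
  exact Finset.sum_congr rfl fun c _ => aeval_monomial_eq a b u hu hulast c _

lemma W_Vmap (a b : Fin n → ℕ) (ha : ∀ i, a i ∣ ∏ j, a j)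
    (hbP : ∑ i, b i * ((∏ j, a j) / a i) = ∏ j, a j)
    (c : Fin (n + 1) →₀ ℕ) :
    W a (Vmap a b c) = (∑ j, c j) * ∏ j, a j := by
  have : ∀ i : Fin n, (Vmap a b c i) * ((∏ j, a j) / a i) =
      c i.castSucc * ∏ j, a j + c (Fin.last n) * (b i * ((∏ j, a j) / a i)) := by
    intro i
    rw [Vmap_apply, add_mul]
    congr 1
    · rw [mul_comm (a i), mul_assoc, Nat.mul_div_cancel' (ha i)]
    · ring
  rw [W, Finset.sum_congr rfl (fun i _ => this i), Finset.sum_add_distrib,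
    ← Finset.sum_mul, ← Finset.mul_sum, hbP, Fin.sum_univ_castSucc, add_mul]


noncomputable def Rc (r : Fin n → ℕ) : Fin (n + 1) →₀ ℕ :=
  Finsupp.equivFunOnFinite.symm (fun j => Fin.lastCases 0 r j)

@[simp] lemma Rc_castSucc (r : Fin n → ℕ) (i : Fin n) : Rc r i.castSucc = r i := by
  simp [Rc]

@[simp] lemma Rc_last (r : Fin n → ℕ) : Rc r (Fin.last n) = 0 := by
  simp [Rc]

lemma prod_X_castSucc (r : Fin n → ℕ) :
    (∏ i, (X i.castSucc : MvPolynomial (Fin (n + 1)) K) ^ r i) = monomial (Rc r) 1 := by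
  rw [← prod_X_pow (Rc r), Fin.prod_univ_castSucc]
  simp

lemma binomial_mem (a b : Fin n → ℕ) (ha : ∀ i, 0 < a i)
    (r : Fin n → ℕ) (L : ℕ) (hL : 0 < L) (hrL : ∀ i, a i * r i = b i * L)
    (hLdvd : ∀ t, (∀ i, a i ∣ b i * t) → L ∣ t)
    (B : MvPolynomial (Fin (n + 1)) K)
    (hB : B = monomial (Finsupp.single (Fin.last n) L) 1 - monomial (Rc r) 1) :
    ∀ t : ℕ, ∀ c c' : Fin (n + 1) →₀ ℕ,
      c (Fin.last n) = c' (Fin.last n) + t →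
      (∀ i : Fin n, a i * c i.castSucc + b i * t = a i * c' i.castSucc) →
      monomial c (1 : K) - monomial c' 1 ∈ Ideal.span {B} := by
  intro t
  induction t using Nat.strong_induction_on with
  | _ t ih =>
    intro c c' hlast hrel
    rcases Nat.eq_zero_or_pos t with rfl | ht
    · have hcc : c = c' := by
        ext j
        induction j using Fin.lastCases with
        | last => simpa using hlast
        | cast i =>
            have h := hrel i
            simp only [Nat.mul_zero, Nat.add_zero] at h
            exact Nat.eq_of_mul_eq_mul_left (ha i) h
      rw [hcc, sub_self]
      exact Ideal.zero_mem _
    · -- L divides t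
      have hdvd : L ∣ t := by
        refine hLdvd t (fun i => ?_)
        have h := hrel i
        have hle : a i * c i.castSucc ≤ a i * c' i.castSucc := by omega
        refine ⟨c' i.castSucc - c i.castSucc, ?_⟩
        rw [Nat.mul_sub, ← h]
        omega
      have hLt : L ≤ t := Nat.le_of_dvd ht hdvd
      have hcl : L ≤ c (Fin.last n) := by omega
      set m : Fin (n + 1) →₀ ℕ := c - Finsupp.single (Fin.last n) L with hm
      have hmc : m + Finsupp.single (Fin.last n) L = c :=
        tsub_add_cancel_of_le (Finsupp.single_le_iff.2 hcl)
      set c'' : Fin (n + 1) →₀ ℕ := m + Rc r with hc''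
      have hc''last : c'' (Fin.last n) = c (Fin.last n) - L := by
        simp [hc'', hm, Finsupp.tsub_apply]
      have hc''cast : ∀ i : Fin n, c'' i.castSucc = c i.castSucc + r i := by
        intro i
        have hne : (i.castSucc : Fin (n + 1)) ≠ Fin.last n := Fin.castSucc_lt_last i |>.ne
        simp [hc'', hm, Finsupp.tsub_apply, Finsupp.single_apply, hne.symm,
          (Fin.castSucc_lt_last i).ne]
      have step1 : monomial c (1 : K) - monomial c'' 1 ∈ Ideal.span {B} := by
        have heq : monomial c (1 : K) - monomial c'' 1 = monomial m 1 * B := by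
          rw [hB, mul_sub, monomial_mul, monomial_mul, mul_one, hmc, hc'']
        rw [heq]
        exact Ideal.mul_mem_left _ _ (Ideal.subset_span rfl)
      have step2 : monomial c'' (1 : K) - monomial c' 1 ∈ Ideal.span {B} := by
        have h1 : c'' (Fin.last n) = c' (Fin.last n) + (t - L) := by omega
        have h2 : ∀ i : Fin n, a i * c'' i.castSucc + b i * (t - L) = a i * c' i.castSucc := by
          intro i
          obtain ⟨s, rfl⟩ := Nat.exists_eq_add_of_le hLt
          have h := hrel i
          have hr := hrL i
          have hs : L + s - L = s := by omega
          rw [hc''cast i, Nat.mul_add, hs]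
          rw [Nat.mul_add] at h
          omega
        exact ih (t - L) (by omega) c'' c' h1 h2
      have : monomial c (1 : K) - monomial c' 1 =
          (monomial c (1 : K) - monomial c'' 1) + (monomial c'' (1 : K) - monomial c' 1) := by
        ring
      rw [this]
      exact Ideal.add_mem _ step1 step2


lemma kernel_mem (a b : Fin n → ℕ) (ha : ∀ i, 0 < a i)
    (u : Fin (n + 1) → MvPolynomial (Fin n) K)
    (hu : ∀ i : Fin n, u i.castSucc = X i ^ a i)
    (hulast : u (Fin.last n) = ∏ i, X i ^ b i)
    (r : Fin n → ℕ) (L : ℕ) (hL : 0 < L) (hrL : ∀ i, a i * r i = b i * L)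
    (hLdvd : ∀ t, (∀ i, a i ∣ b i * t) → L ∣ t)
    (B : MvPolynomial (Fin (n + 1)) K)
    (hB : B = monomial (Finsupp.single (Fin.last n) L) 1 - monomial (Rc r) 1) :
    ∀ N : ℕ, ∀ f : MvPolynomial (Fin (n + 1)) K, f.support.card ≤ N →
      aeval u f = 0 → f ∈ Ideal.span {B} := by
  intro N
  induction N with
  | zero =>
      intro f hcard _
      have : f = 0 := by
        rw [← support_eq_empty, ← Finset.card_eq_zero]
        omega
      rw [this]; exact Ideal.zero_mem _
  | succ N ihN =>
      intro f hcard hf0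
      rcases eq_or_ne f 0 with rfl | hf
      · exact Ideal.zero_mem _
      obtain ⟨c, hc⟩ : f.support.Nonempty :=
        Finset.nonempty_iff_ne_empty.2 (mt support_eq_empty.1 hf)
      have hco : coeff c f ≠ 0 := mem_support_iff.1 hc
      have hcoeffsum :
          ∑ e ∈ f.support, (if Vmap a b e = Vmap a b c then coeff e f else 0) = 0 := by
        have h := congrArg (coeff (Vmap a b c)) hf0
        rw [aeval_eq a b u hu hulast] at h
        simpa [coeff_sum, coeff_monomial] using h
      have hexists : ∃ c' ∈ f.support, c' ≠ c ∧ Vmap a b c' = Vmap a b c := by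
        by_contra hcon
        push_neg at hcon
        have heq : ∑ e ∈ f.support, (if Vmap a b e = Vmap a b c then coeff e f else 0)
            = coeff c f := by
          rw [Finset.sum_eq_single c]
          · simp
          · intro e he hne
            rw [if_neg (hcon e he hne)]
          · intro hnc
            exact absurd hc hnc
        rw [heq] at hcoeffsum
        exact hco hcoeffsum
      obtain ⟨c', hc'su, hne, hV⟩ := hexists
      have hVrel : ∀ t : ℕ, ∀ x y : Fin (n + 1) →₀ ℕ, Vmap a b x = Vmap a b y →
          x (Fin.last n) = y (Fin.last n) + t →
          (∀ i : Fin n, a i * x i.castSucc + b i * t = a i * y i.castSucc) := by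
        intro t x y hxy hlast i
        have h := congrArg (fun w => w i) hxy
        simp only [Vmap_apply] at h
        rw [hlast, Nat.mul_add] at h
        omega
      have hbin : monomial c (1 : K) - monomial c' 1 ∈ Ideal.span {B} := by
        rcases le_total (c' (Fin.last n)) (c (Fin.last n)) with hle | hle
        · have hlast : c (Fin.last n) = c' (Fin.last n) + (c (Fin.last n) - c' (Fin.last n)) := by
            omega
          exact binomial_mem a b ha r L hL hrL hLdvd B hB _ c c' hlast
            (hVrel _ c c' hV.symm hlast)
        · have hlast : c' (Fin.last n) = c (Fin.last n) + (c' (Fin.last n) - c (Fin.last n)) := by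
            omega
          have := binomial_mem a b ha r L hL hrL hLdvd B hB _ c' c hlast
            (hVrel _ c' c hV hlast)
          have hneg := Submodule.neg_mem _ this
          rwa [neg_sub] at hneg
      set f' : MvPolynomial (Fin (n + 1)) K :=
        f - C (coeff c f) * (monomial c 1 - monomial c' 1) with hf'
      have haeval' : aeval u f' = 0 := by
        rw [hf', map_sub, map_mul, map_sub, hf0,
          aeval_monomial_eq a b u hu hulast, aeval_monomial_eq a b u hu hulast, hV,
          sub_self, mul_zero, sub_zero]
      have hsupp' : f'.support ⊆ f.support.erase c := by
        intro e he
        have hce : coeff e f' ≠ 0 := mem_support_iff.1 he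
        have hcoe : coeff e f' = coeff e f -
            coeff c f * ((if c = e then (1:K) else 0) - if c' = e then 1 else 0) := by
          simp [hf', coeff_sub, coeff_C_mul, coeff_monomial]
        rcases eq_or_ne e c with rfl | hec
        · rw [if_pos rfl, if_neg hne, sub_zero, mul_one, sub_self] at hcoe
          exact absurd hcoe hce
        · refine Finset.mem_erase.2 ⟨hec, ?_⟩
          rcases eq_or_ne e c' with rfl | hec'
          · exact hc'su
          · rw [if_neg (Ne.symm hec), if_neg (Ne.symm hec'), sub_self, mul_zero,
              sub_zero] at hcoe
            rw [mem_support_iff]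
            rwa [hcoe] at hce
      have hcard' : f'.support.card ≤ N := by
        have h1 := Finset.card_le_card hsupp'
        rw [Finset.card_erase_of_mem hc] at h1
        have h2 := Finset.card_pos.2 ⟨c, hc⟩
        omega
      have hmem' := ihN f' hcard' haeval'
      have : f = f' + C (coeff c f) * (monomial c 1 - monomial c' 1) := by
        rw [hf']; ring
      rw [this]
      exact Ideal.add_mem _ hmem' (Ideal.mul_mem_left _ _ hbin)


lemma W_single (a : Fin n → ℕ) (j : Fin n) (e : ℕ) :
    W a (Finsupp.single j e) = e * ((∏ j, a j) / a j) := by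
  rw [W, Finset.sum_eq_single j]
  · rw [Finsupp.single_apply, if_pos rfl]
  · intro i _ hij
    rw [Finsupp.single_apply, if_neg (Ne.symm hij), zero_mul]
  · intro h
    exact absurd (Finset.mem_univ j) h

lemma aeval_homog_eq_zero (a b : Fin n → ℕ) (ha : ∀ i, 0 < a i)
    (hbP : ∑ i, b i * ((∏ j, a j) / a i) = ∏ j, a j)
    (u : Fin (n + 1) → MvPolynomial (Fin n) K)
    (hu : ∀ i : Fin n, u i.castSucc = X i ^ a i)
    (hulast : u (Fin.last n) = ∏ i, X i ^ b i)
    (I mm : Ideal (MvPolynomial (Fin n) K))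
    (hI : I = Ideal.span (Set.range (fun i => (X i : MvPolynomial (Fin n) K) ^ a i) ∪
      {∏ i, (X i : MvPolynomial (Fin n) K) ^ b i}))
    (hmm : mm = Ideal.span (Set.range (X : Fin n → MvPolynomial (Fin n) K)))
    (d : ℕ) (f : MvPolynomial (Fin (n + 1)) K) (hf : f.IsHomogeneous d)
    (hmem : aeval u f ∈ mm * I ^ d) : aeval u f = 0 := by
  set P := ∏ j, a j with hPdef
  have hPpos : 0 < P := Finset.prod_pos (fun i _ => ha i)
  have haP : ∀ i, a i ∣ P := fun i => Finset.dvd_prod_of_mem a (Finset.mem_univ i)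
  have hmmle : mm ≤ Mideal K a 1 := by
    rw [hmm, Ideal.span_le]
    rintro _ ⟨j, rfl⟩ m hm
    rw [support_X, Finset.mem_singleton] at hm
    subst hm
    rw [W_single]
    simpa using (Nat.one_le_div_iff (ha j)).2 (Nat.le_of_dvd hPpos (haP j))
  have hIle : I ≤ Mideal K a P := by
    rw [hI, Ideal.span_le]
    rintro q hq
    rcases hq with ⟨j, rfl⟩ | rfl
    · intro m hm
      simp only [X_pow_eq_monomial] at hm
      have := support_monomial_subset hm
      rw [Finset.mem_singleton] at this
      subst this
      rw [W_single, Nat.mul_div_cancel' (haP j)]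
    · intro m hm
      have hprod : (∏ i, (X i : MvPolynomial (Fin n) K) ^ b i) =
          monomial (Finsupp.equivFunOnFinite.symm b) 1 := by
        rw [← prod_X_pow (Finsupp.equivFunOnFinite.symm b)]
        rfl
      rw [hprod] at hm
      have := support_monomial_subset hm
      rw [Finset.mem_singleton] at this
      subst this
      have : W a (Finsupp.equivFunOnFinite.symm b) = P := by
        rw [W]
        exact hbP
      rw [this]
  have hfinal : aeval u f ∈ Mideal K a (1 + d * P) :=
    Mideal_mul a 1 (d * P) (Ideal.mul_mono hmmle
      (le_trans (Ideal.pow_right_mono hIle d) (Mideal_pow a P d)) hmem)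
  by_contra hne
  obtain ⟨m, hm⟩ : (aeval u f).support.Nonempty :=
    Finset.nonempty_iff_ne_empty.2 (mt support_eq_empty.1 hne)
  rw [aeval_eq a b u hu hulast] at hm
  obtain ⟨c, hcf, hmc⟩ := Finset.mem_biUnion.1 (support_sum hm)
  have hmeq := Finset.mem_singleton.1 (support_monomial_subset hmc)
  subst hmeq
  have hdeg : ∑ j, c j = d := by
    have h1 : (Finsupp.weight 1) c = d := hf (mem_support_iff.1 hcf)
    rw [← degree_eq_sum]
    rw [Finsupp.degree_eq_weight_one]
    exact h1
  have hWm : W a (Vmap a b c) = d * P := by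
    rw [W_Vmap a b haP hbP c, hdeg]
  have hge := mem_Mideal.1 hfinal _ (by rw [aeval_eq a b u hu hulast]; exact hm)
  omega

end Stmt1

open Stmt1 in
theorem stmt_1 {K : Type*} [Field K] (n : ℕ) (hn : 2 ≤ n)
    (a b : Fin n → ℕ) (hba : ∀ i, b i < a i) (hb : ∀ i, 0 < b i)
    (I mm : Ideal (MvPolynomial (Fin n) K))
    (hI : I = Ideal.span (Set.range (fun i => (X i : MvPolynomial (Fin n) K) ^ a i) ∪
      {∏ i, (X i : MvPolynomial (Fin n) K) ^ b i}))
    (hmm : mm = Ideal.span (Set.range (X : Fin n → MvPolynomial (Fin n) K)))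
    (u : Fin (n + 1) → MvPolynomial (Fin n) K)
    (hu : ∀ i : Fin n, u i.castSucc = X i ^ a i)
    (hulast : u (Fin.last n) = ∏ i, X i ^ b i)
    (J : Ideal (MvPolynomial (Fin (n + 1)) K))
    (hJ : ∀ f : MvPolynomial (Fin (n + 1)) K,
      f ∈ J ↔ ∀ d : ℕ, aeval u (homogeneousComponent d f) ∈ mm * I ^ d)
    (hsum : (∑ i, (b i : ℚ) / (a i : ℚ)) = 1) :
    ∃ r : Fin n → ℕ, (∀ i, 0 < r i) ∧
      J = Ideal.span {(X (Fin.last n) : MvPolynomial (Fin (n + 1)) K) ^ (∑ i, r i) -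
        ∏ i, X i.castSucc ^ r i} := by
  classical
  have ha : ∀ i, 0 < a i := fun i => (hb i).trans (hba i)
  -- key rational summation fact
  have key : ∀ (c : Fin n → ℕ) (M : ℕ), (∀ i, a i * c i = b i * M) → ∑ i, c i = M := by
    intro c M h
    have hq : (↑(∑ i, c i) : ℚ) = (M : ℚ) := by
      push_cast
      have hterm : ∀ i, (c i : ℚ) = (b i : ℚ) / (a i : ℚ) * M := by
        intro i
        have hai : (a i : ℚ) ≠ 0 := Nat.cast_ne_zero.2 (ha i).ne'
        have h2 : (a i : ℚ) * c i = (b i : ℚ) * M := by exact_mod_cast h i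
        field_simp
        linarith
      rw [Finset.sum_congr rfl (fun i _ => hterm i), ← Finset.sum_mul, hsum, one_mul]
    exact_mod_cast hq
  -- gcd setup
  set g : Fin n → ℕ := fun i => Nat.gcd (a i) (b i) with hgdef
  have hgpos : ∀ i, 0 < g i := fun i => Nat.gcd_pos_of_pos_left _ (ha i)
  set A : Fin n → ℕ := fun i => a i / g i with hAdef
  have hApos : ∀ i, 0 < A i :=
    fun i => Nat.div_pos (Nat.le_of_dvd (ha i) (Nat.gcd_dvd_left _ _)) (hgpos i)
  set L := Finset.univ.lcm A with hLdef
  have hAL : ∀ i, A i ∣ L := fun i => Finset.dvd_lcm (Finset.mem_univ i)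
  have hLpos : 0 < L := by
    rcases Nat.eq_zero_or_pos L with h0 | h
    · rw [hLdef] at h0
      rw [Finset.lcm_eq_zero_iff] at h0
      obtain ⟨i, _, hi⟩ := h0
      exact absurd hi (hApos i).ne'
    · exact h
  have hiff : ∀ (i : Fin n) (t : ℕ), a i ∣ b i * t ↔ A i ∣ t := by
    intro i t
    have hga : g i ∣ a i := Nat.gcd_dvd_left _ _
    have hgb : g i ∣ b i := Nat.gcd_dvd_right _ _
    have ha_eq : a i = g i * A i := (Nat.mul_div_cancel' hga).symm
    have hb_eq : b i = g i * (b i / g i) := (Nat.mul_div_cancel' hgb).symm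
    have hco : Nat.Coprime (A i) (b i / g i) := Nat.coprime_div_gcd_div_gcd (hgpos i)
    constructor
    · intro h
      rw [ha_eq, hb_eq, mul_assoc] at h
      have h2 := (mul_dvd_mul_iff_left (hgpos i).ne').1 h
      exact hco.dvd_of_dvd_mul_left h2
    · intro h
      rw [ha_eq, hb_eq, mul_assoc]
      exact mul_dvd_mul_left _ (Dvd.dvd.mul_left h _)
  have haL : ∀ i, a i ∣ b i * L := fun i => (hiff i L).2 (hAL i)
  have hLdvd : ∀ t, (∀ i, a i ∣ b i * t) → L ∣ t :=
    fun t h => Finset.lcm_dvd (fun i _ => (hiff i t).1 (h i))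
  set r : Fin n → ℕ := fun i => b i * L / a i with hrdef
  have harL : ∀ i, a i * r i = b i * L := fun i => Nat.mul_div_cancel' (haL i)
  have hrpos : ∀ i, 0 < r i := by
    intro i
    rcases Nat.eq_zero_or_pos (r i) with h0 | h
    · have := harL i
      rw [h0, Nat.mul_zero] at this
      have := Nat.mul_pos (hb i) hLpos
      omega
    · exact h
  have hsumr : ∑ i, r i = L := key r L harL
  -- the P fact
  have haP : ∀ i, a i ∣ ∏ j, a j := fun i => Finset.dvd_prod_of_mem a (Finset.mem_univ i)
  have hbP : ∑ i, b i * ((∏ j, a j) / a i) = ∏ j, a j := by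
    refine key _ _ (fun i => ?_)
    rw [← Nat.mul_assoc, Nat.mul_comm (a i) (b i), Nat.mul_assoc,
      Nat.mul_div_cancel' (haP i)]
  refine ⟨r, hrpos, ?_⟩
  rw [hsumr]
  set B : MvPolynomial (Fin (n + 1)) K :=
    X (Fin.last n) ^ L - ∏ i, X i.castSucc ^ r i with hBdef
  have hBeq : B = monomial (Finsupp.single (Fin.last n) L) 1 - monomial (Rc r) 1 := by
    rw [hBdef, X_pow_eq_monomial, prod_X_castSucc]
  have hVBeq : Vmap a b (Finsupp.single (Fin.last n) L) = Vmap a b (Rc r) := by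
    ext i
    rw [Vmap_apply, Vmap_apply]
    have hne : (i.castSucc : Fin (n + 1)) ≠ Fin.last n := (Fin.castSucc_lt_last i).ne
    rw [Finsupp.single_apply, if_neg (Ne.symm hne), Finsupp.single_apply, if_pos rfl,
      Rc_castSucc, Rc_last]
    rw [harL i]
    ring
  have haevalB : aeval u B = 0 := by
    rw [hBeq, map_sub, aeval_monomial_eq a b u hu hulast, aeval_monomial_eq a b u hu hulast,
      hVBeq, sub_self]
  apply le_antisymm
  · -- J ≤ span B
    intro f hf
    have hcomp := (hJ f).1 hf
    have hzero : ∀ d, aeval u (homogeneousComponent d f) = 0 := fun d =>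
      aeval_homog_eq_zero a b ha hbP u hu hulast I mm hI hmm d _
        (homogeneousComponent_isHomogeneous d f) (hcomp d)
    have hfsum : f = ∑ i ∈ Finset.range (f.totalDegree + 1), homogeneousComponent i f :=
      (sum_homogeneousComponent f).symm
    rw [hfsum]
    refine Ideal.sum_mem _ (fun i _ => ?_)
    exact kernel_mem a b ha u hu hulast r L hLpos harL hLdvd B hBeq _ _ le_rfl (hzero i)
  · -- span B ≤ J
    rw [Ideal.span_le, Set.singleton_subset_iff]
    rw [SetLike.mem_coe, hJ]
    intro d
    have hBhom : B.IsHomogeneous L := by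
      rw [hBeq]
      refine MvPolynomial.IsHomogeneous.sub ?_ ?_
      · refine isHomogeneous_monomial 1 ?_
        rw [degree_eq_sum, Fin.sum_univ_castSucc]
        have hne : ∀ i : Fin n, (i.castSucc : Fin (n + 1)) ≠ Fin.last n :=
          fun i => (Fin.castSucc_lt_last i).ne
        simp [Finsupp.single_apply, fun i => Ne.symm (hne i)]
      · refine isHomogeneous_monomial 1 ?_
        rw [degree_eq_sum, Fin.sum_univ_castSucc]
        simp [hsumr]
    rw [homogeneousComponent_of_mem ((mem_homogeneousSubmodule _ _).2 hBhom)]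
    split
    · rw [haevalB]; exact Ideal.zero_mem _
    · rw [map_zero]; exact Ideal.zero_mem _
end

section
/- If ∑_{i=1}^n b_i/a_i > 1 (as rational numbers), then there exists a positive integer r such that J is the principal ideal generated by the monomial z_{n+1}^r, i.e. J = (z_{n+1}^r). -/
open MvPolynomial Pointwise

namespace Stmt2Aux
variable {n : ℕ} {K : Type*} [Field K]


variable {n : ℕ}

/-- exponent vector of the product generator -/
noncomputable def Bv (b : Fin n → ℕ) : Fin n →₀ ℕ := Finsupp.equivFunOnFinite.symm b

@[simp] lemma Bv_apply (b : Fin n → ℕ) (i : Fin n) : Bv b i = b i := rfl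

/-- exponent vectors of the generators -/
noncomputable def G (a b : Fin n → ℕ) : Fin (n+1) → (Fin n →₀ ℕ) :=
  Fin.lastCases (Bv b) (fun i => Finsupp.single i (a i))

@[simp] lemma G_castSucc (a b : Fin n → ℕ) (i : Fin n) :
    G a b i.castSucc = Finsupp.single i (a i) := by simp [G]

@[simp] lemma G_last (a b : Fin n → ℕ) : G a b (Fin.last n) = Bv b := by simp [G]

/-- exponent vector of the image of the monomial with exponents `c` -/
noncomputable def v (a b : Fin n → ℕ) (c : Fin (n+1) → ℕ) : Fin n →₀ ℕ :=
  Finsupp.equivFunOnFinite.symm (fun i => a i * c i.castSucc + b i * c (Fin.last n))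

@[simp] lemma v_apply (a b : Fin n → ℕ) (c : Fin (n+1) → ℕ) (i : Fin n) :
    v a b c i = a i * c i.castSucc + b i * c (Fin.last n) := rfl

lemma v_add (a b : Fin n → ℕ) (c c' : Fin (n+1) → ℕ) :
    v a b (c + c') = v a b c + v a b c' := by
  ext i; simp [v_apply]; ring

lemma v_eq_sum (a b : Fin n → ℕ) (c : Fin (n+1) → ℕ) :
    v a b c = ∑ k, c k • G a b k := by
  ext i
  rw [Finsupp.finset_sum_apply, Fin.sum_univ_castSucc]
  simp only [Finsupp.smul_apply, smul_eq_mul, G_castSucc, G_last, Bv_apply]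
  rw [Finset.sum_eq_single i]
  · simp [Finsupp.single_apply, mul_comm]
  · intro j _ hj; rw [Finsupp.single_apply, if_neg hj, mul_zero]
  · intro h; exact absurd (Finset.mem_univ i) h




lemma exists_le_sum : ∀ {m : ℕ} (d : Fin m → ℕ) (t : ℕ), t ≤ ∑ i, d i →
    ∃ c : Fin m → ℕ, (∀ i, c i ≤ d i) ∧ ∑ i, c i = t := by
  intro m
  induction m with
  | zero => intro d t ht; simp at ht; exact ⟨0, fun i => i.elim0, by simp [ht]⟩
  | succ m ih =>
    intro d t ht
    rw [Fin.sum_univ_succ] at ht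
    obtain ⟨c, hc, hcs⟩ := ih (fun i => d i.succ) (t - min t (d 0)) (by simpa using (show t - min t (d 0) ≤ ∑ i : Fin m, d i.succ by omega))
    refine ⟨Fin.cons (min t (d 0)) c, ?_, ?_⟩
    · intro i
      refine Fin.cases ?_ ?_ i
      · simp
      · intro j; simpa using hc j
    · rw [Fin.sum_univ_succ]
      simp only [Fin.cons_zero, Fin.cons_succ]
      omega

/-- the set of exponent vectors of the natural generators of `I ^ d` -/
def Sd (a b : Fin n → ℕ) (d : ℕ) : Set (Fin n →₀ ℕ) :=
  {w | ∃ c : Fin (n+1) → ℕ, (∑ k, c k) = d ∧ w = v a b c}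

lemma Sd_zero (a b : Fin n → ℕ) : Sd a b 0 = {0} := by
  ext w
  constructor
  · rintro ⟨c, hc, rfl⟩
    have : ∀ k, c k = 0 := by
      intro k
      have := Finset.sum_eq_zero_iff.mp hc
      exact this k (Finset.mem_univ k)
    ext i; simp [v_apply, this]
  · rintro rfl
    exact ⟨0, by simp, by ext i; simp [v_apply]⟩

lemma Sd_add (a b : Fin n → ℕ) (d e : ℕ) : Sd a b d + Sd a b e = Sd a b (d + e) := by
  ext w
  constructor
  · rw [Set.mem_add]
    rintro ⟨x, ⟨c1, hc1, rfl⟩, y, ⟨c2, hc2, rfl⟩, rfl⟩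
    exact ⟨c1 + c2, by simp [Finset.sum_add_distrib, hc1, hc2], (v_add a b c1 c2).symm⟩
  · rintro ⟨c, hc, rfl⟩
    obtain ⟨c1, hle, hsum⟩ := exists_le_sum c d (by omega)
    rw [Set.mem_add]
    refine ⟨v a b c1, ⟨c1, hsum, rfl⟩, v a b (c - c1), ⟨c - c1, ?_, rfl⟩, ?_⟩
    · have : ∀ k, (c - c1) k = c k - c1 k := fun k => rfl
      have h2 : ∑ k, (c - c1) k = ∑ k, (c k - c1 k) := by simp [this]
      rw [h2]
      have h3 : ∑ k, (c k - c1 k) + ∑ k, c1 k = ∑ k, c k := by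
        rw [← Finset.sum_add_distrib]
        exact Finset.sum_congr rfl fun k _ => by have := hle k; omega
      omega
    · rw [← v_add]
      congr 1
      funext k
      have := hle k
      simp only [Pi.add_apply, Pi.sub_apply]
      omega

lemma monomial_image_mul (S T : Set (Fin n →₀ ℕ)) :
    ((fun s => monomial s (1:K)) '' S) * ((fun s => monomial s (1:K)) '' T) =
      (fun s => monomial s (1:K)) '' (S + T) := by
  ext p
  simp only [Set.mem_mul, Set.mem_image, Set.mem_add]
  constructor
  · rintro ⟨x, ⟨s, hs, rfl⟩, y, ⟨t, ht, rfl⟩, rfl⟩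
    exact ⟨s + t, ⟨s, hs, t, ht, rfl⟩, by rw [monomial_mul, one_mul]⟩
  · rintro ⟨w, ⟨s, hs, t, ht, rfl⟩, rfl⟩
    exact ⟨monomial s 1, ⟨s, hs, rfl⟩, monomial t 1, ⟨t, ht, rfl⟩, by rw [monomial_mul, one_mul]⟩


lemma sum_ite_eq_one {m : ℕ} (k0 : Fin m) : (∑ k, if k = k0 then 1 else 0) = 1 := by
  simp

lemma Sd_one (a b : Fin n → ℕ) : Sd a b 1 = Set.range (G a b) := by
  ext w
  constructor
  · rintro ⟨c, hc, rfl⟩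
    have h0 : ∃ k0, c k0 ≠ 0 := by
      by_contra h
      push_neg at h
      simp [h] at hc
    obtain ⟨k0, hk0⟩ := h0
    have h1 : ∑ k ∈ Finset.univ.erase k0, c k + c k0 = 1 := by
      rw [Finset.sum_erase_add _ _ (Finset.mem_univ k0)]; exact hc
    have hck0 : c k0 = 1 := by
      have := Finset.single_le_sum (f := c) (fun k _ => Nat.zero_le _) (Finset.mem_univ k0)
      omega
    have hrest : ∀ k, k ≠ k0 → c k = 0 := by
      intro k hk
      have h2 : ∑ k ∈ Finset.univ.erase k0, c k = 0 := by omega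
      have := Finset.sum_eq_zero_iff.mp h2 k (by simp [hk])
      exact this
    have hceq : c = fun k => if k = k0 then 1 else 0 := by
      funext k; by_cases h : k = k0 <;> simp [h, hck0, hrest k]
    refine ⟨k0, ?_⟩
    rw [hceq, v_eq_sum]
    rw [Finset.sum_eq_single k0] <;> simp +contextual
  · rintro ⟨k0, rfl⟩
    refine ⟨fun k => if k = k0 then 1 else 0, by simp, ?_⟩
    rw [v_eq_sum, Finset.sum_eq_single k0] <;> simp +contextual

section Ideals

variable (a b : Fin n → ℕ)

lemma prod_X_pow_eq (b : Fin n → ℕ) :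
    (∏ i, (X i : MvPolynomial (Fin n) K) ^ b i) = monomial (Bv b) 1 := by
  rw [monomial_eq, C_1, one_mul, Finsupp.prod_fintype]
  · rfl
  · intro i; exact pow_zero _

lemma I_eq_span (I : Ideal (MvPolynomial (Fin n) K))
    (hI : I = Ideal.span (Set.range (fun i => (X i : MvPolynomial (Fin n) K) ^ a i) ∪
      {∏ i, (X i : MvPolynomial (Fin n) K) ^ b i})) :
    I = Ideal.span ((fun s => monomial s (1:K)) '' Sd a b 1) := by
  rw [hI, Sd_one]
  congr 1
  ext p
  simp only [Set.mem_union, Set.mem_range, Set.mem_singleton_iff, Set.mem_image]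
  constructor
  · rintro (⟨i, rfl⟩ | rfl)
    · exact ⟨G a b i.castSucc, ⟨i.castSucc, rfl⟩, by rw [G_castSucc, ← X_pow_eq_monomial]⟩
    · exact ⟨G a b (Fin.last n), ⟨Fin.last n, rfl⟩, by rw [G_last, ← prod_X_pow_eq]⟩
  · rintro ⟨w, ⟨k, rfl⟩, rfl⟩
    induction k using Fin.lastCases with
    | last => right; rw [G_last, prod_X_pow_eq]
    | cast i => left; exact ⟨i, by rw [G_castSucc, X_pow_eq_monomial]⟩

lemma Ipow_eq_span (I : Ideal (MvPolynomial (Fin n) K))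
    (hI : I = Ideal.span (Set.range (fun i => (X i : MvPolynomial (Fin n) K) ^ a i) ∪
      {∏ i, (X i : MvPolynomial (Fin n) K) ^ b i})) (d : ℕ) :
    I ^ d = Ideal.span ((fun s => monomial s (1:K)) '' Sd a b d) := by
  induction d with
  | zero =>
    rw [pow_zero, Ideal.one_eq_top, Sd_zero]
    rw [Set.image_singleton]
    have : (monomial (0 : Fin n →₀ ℕ) (1:K)) = 1 := by simp
    rw [this, Ideal.span_singleton_one]
  | succ d ih =>
    rw [pow_succ, ih, I_eq_span a b I hI, Ideal.span_mul_span', monomial_image_mul, Sd_add]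

lemma mm_Ipow_eq_span (I mm : Ideal (MvPolynomial (Fin n) K))
    (hI : I = Ideal.span (Set.range (fun i => (X i : MvPolynomial (Fin n) K) ^ a i) ∪
      {∏ i, (X i : MvPolynomial (Fin n) K) ^ b i}))
    (hmm : mm = Ideal.span (Set.range (X : Fin n → MvPolynomial (Fin n) K))) (d : ℕ) :
    mm * I ^ d = Ideal.span ((fun s => monomial s (1:K)) ''
      ((Set.range fun j : Fin n => Finsupp.single j 1) + Sd a b d)) := by
  have hmm2 : mm = Ideal.span ((fun s => monomial s (1:K)) ''
      (Set.range fun j : Fin n => Finsupp.single j 1)) := by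
    rw [hmm]
    congr 1
    ext p
    simp only [Set.mem_range, Set.mem_image, exists_exists_eq_and]
    constructor
    · rintro ⟨i, rfl⟩; exact ⟨i, by rw [← X_pow_eq_monomial, pow_one]⟩
    · rintro ⟨i, rfl⟩; exact ⟨i, by rw [← X_pow_eq_monomial, pow_one]⟩
  rw [hmm2, Ipow_eq_span a b I hI, Ideal.span_mul_span', monomial_image_mul]

end Ideals


section Aeval

variable {a b : Fin n → ℕ} {u : Fin (n + 1) → MvPolynomial (Fin n) K}

lemma monomial_prod {ι : Type*} (s : Finset ι) (f : ι → (Fin n →₀ ℕ)) :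
    (∏ k ∈ s, monomial (f k) (1:K)) = monomial (∑ k ∈ s, f k) 1 := by
  classical
  induction s using Finset.induction with
  | empty => simp
  | insert k s' h ih => rw [Finset.prod_insert h, Finset.sum_insert h, ih,
      monomial_mul, one_mul]

lemma u_eq_monomial (hu : ∀ i : Fin n, u i.castSucc = X i ^ a i)
    (hulast : u (Fin.last n) = ∏ i, X i ^ b i) (k : Fin (n+1)) :
    u k = monomial (G a b k) (1:K) := by
  induction k using Fin.lastCases with
  | last => rw [hulast, G_last, prod_X_pow_eq]
  | cast i => rw [hu, G_castSucc, X_pow_eq_monomial]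

lemma aeval_monomial_eq (hu : ∀ i : Fin n, u i.castSucc = X i ^ a i)
    (hulast : u (Fin.last n) = ∏ i, X i ^ b i) (c : Fin (n+1) →₀ ℕ) (r : K) :
    aeval u (monomial c r) = monomial (v a b ⇑c) r := by
  rw [aeval_monomial, Finsupp.prod_fintype _ _ (fun k => pow_zero _)]
  have h1 : ∀ k, u k ^ c k = monomial (c k • G a b k) (1:K) := by
    intro k
    rw [u_eq_monomial hu hulast, monomial_pow, one_pow]
  simp_rw [h1]
  rw [monomial_prod, ← v_eq_sum]
  rw [algebraMap_eq, C_mul_monomial, mul_one]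

lemma support_aeval_eq (hu : ∀ i : Fin n, u i.castSucc = X i ^ a i)
    (hulast : u (Fin.last n) = ∏ i, X i ^ b i) (g : MvPolynomial (Fin (n+1)) K)
    (hinj : ∀ c ∈ g.support, ∀ c' ∈ g.support,
      v a b ⇑c = v a b ⇑c' → c = c') :
    (aeval u g).support = g.support.image (fun c : Fin (n+1) →₀ ℕ => v a b ⇑c) := by
  classical
  conv_lhs => rw [as_sum g]
  rw [map_sum]
  simp_rw [aeval_monomial_eq hu hulast]
  have hdisj : ∀ c₁ c₂ : Fin (n+1) →₀ ℕ, c₁ ≠ c₂ →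
      Disjoint (monomial (v a b ⇑c₁) (coeff c₁ g)).support
        (monomial (v a b ⇑c₂) (coeff c₂ g)).support := by
    intro c₁ c₂ hne
    by_cases h1 : coeff c₁ g = 0
    · simp [h1, support_monomial]
    by_cases h2 : coeff c₂ g = 0
    · simp [h2, support_monomial]
    rw [support_monomial, if_neg h1, support_monomial, if_neg h2,
      Finset.disjoint_singleton]
    intro h
    exact hne (hinj c₁ (mem_support_iff.mpr h1) c₂ (mem_support_iff.mpr h2) h)
  have hsupp : (∑ x ∈ g.support, (monomial (v a b ⇑x)) (coeff x g)).support
      = g.support.biUnion (fun c : Fin (n+1) →₀ ℕ => (monomial (v a b ⇑c) (coeff c g)).support) :=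
    by simp only [MvPolynomial.support, AddMonoidAlgebra.coeff_sum]
       exact Finsupp.support_sum_eq_biUnion _ hdisj
  rw [hsupp]
  ext w
  simp only [Finset.mem_biUnion, Finset.mem_image]
  constructor
  · rintro ⟨c, hc, hw⟩
    rw [support_monomial, if_neg (mem_support_iff.mp hc), Finset.mem_singleton] at hw
    exact ⟨c, hc, hw.symm⟩
  · rintro ⟨c, hc, hw⟩
    exact ⟨c, hc, by rw [support_monomial, if_neg (mem_support_iff.mp hc),
      Finset.mem_singleton, hw]⟩

end Aeval


section Comb

variable {a b : Fin n → ℕ}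

lemma qarith (ha : ∀ i, 0 < a i) (hsum : 1 < (∑ i, (b i : ℚ) / (a i : ℚ)))
    {t : ℕ} (ht : 0 < t) (g : Fin n → ℕ) (hg : ∀ i, b i * t ≤ a i * g i)
    (hgs : ∑ i, g i ≤ t) : False := by
  have h1 : ∀ i, (t:ℚ) * ((b i:ℚ) / a i) ≤ g i := by
    intro i
    have hai : (0:ℚ) < a i := by exact_mod_cast ha i
    rw [mul_div_assoc', div_le_iff₀ hai]
    have := hg i
    have : (b i : ℚ) * t ≤ (a i : ℚ) * g i := by exact_mod_cast this
    nlinarith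
  have h2 : (t:ℚ) * ∑ i, (b i:ℚ)/(a i:ℚ) ≤ ∑ i, (g i : ℚ) := by
    rw [Finset.mul_sum]
    exact Finset.sum_le_sum fun i _ => h1 i
  have h3 : (∑ i, (g i:ℚ)) ≤ t := by exact_mod_cast hgs
  have ht' : (0:ℚ) < t := by exact_mod_cast ht
  nlinarith

lemma v_inj (ha : ∀ i, 0 < a i) (hsum : 1 < (∑ i, (b i : ℚ) / (a i : ℚ)))
    (c c' : Fin (n+1) → ℕ) (hdeg : ∑ k, c k = ∑ k, c' k)
    (hv : v a b c = v a b c') : c = c' := by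
  -- wlog c' last ≥ c last
  have key : ∀ c c' : Fin (n+1) → ℕ, ∑ k, c k = ∑ k, c' k →
      v a b c = v a b c' → c (Fin.last n) ≤ c' (Fin.last n) → c = c' := by
    intro c c' hdeg hv hle
    have hvi : ∀ i, a i * c i.castSucc + b i * c (Fin.last n)
        = a i * c' i.castSucc + b i * c' (Fin.last n) := by
      intro i
      have := congrArg (fun w => w i) hv
      simpa [v_apply] using this
    set t := c' (Fin.last n) - c (Fin.last n) with htdef
    rcases Nat.eq_zero_or_pos t with ht | ht
    · have hlast : c (Fin.last n) = c' (Fin.last n) := by omega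
      have hcs : ∀ i : Fin n, c i.castSucc = c' i.castSucc := by
        intro i
        have := hvi i
        rw [hlast] at this
        have h2 : a i * c i.castSucc = a i * c' i.castSucc := by omega
        exact Nat.eq_of_mul_eq_mul_left (ha i) h2
      funext k
      induction k using Fin.lastCases with
      | last => exact hlast
      | cast i => exact hcs i
    · exfalso
      -- per i : a i * c i.cs = a i * c' i.cs + b i * t
      have hper : ∀ i : Fin n, a i * c i.castSucc = a i * c' i.castSucc + b i * t := by
        intro i
        have h1 := hvi i
        have h2 : b i * c' (Fin.last n) = b i * c (Fin.last n) + b i * t := by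
          rw [← Nat.mul_add]
          congr 1
          omega
        omega
      have hcle : ∀ i : Fin n, c' i.castSucc ≤ c i.castSucc := by
        intro i
        have := hper i
        have := ha i
        nlinarith
      refine qarith ha hsum ht (fun i => c i.castSucc - c' i.castSucc) ?_ ?_
      · intro i
        show b i * t ≤ a i * (c i.castSucc - c' i.castSucc)
        have h1 := hper i
        have h2 : a i * (c i.castSucc - c' i.castSucc)
            = a i * c i.castSucc - a i * c' i.castSucc := by
          have := hcle i
          rw [Nat.mul_sub]
        omega
      · show ∑ i : Fin n, (c i.castSucc - c' i.castSucc) ≤ t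
        have hs1 : ∑ i : Fin n, c i.castSucc = ∑ i : Fin n, c' i.castSucc + t := by
          rw [Fin.sum_univ_castSucc c, Fin.sum_univ_castSucc c'] at hdeg
          omega
        have hs2 : ∑ i : Fin n, (c i.castSucc - c' i.castSucc) + ∑ i : Fin n, c' i.castSucc
            = ∑ i : Fin n, c i.castSucc := by
          rw [← Finset.sum_add_distrib]
          exact Finset.sum_congr rfl fun i _ => by have := hcle i; omega
        omega
  rcases le_total (c (Fin.last n)) (c' (Fin.last n)) with h | h
  · exact key c c' hdeg hv h
  · exact (key c' c hdeg.symm hv.symm h).symm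

/-- The predicate defining `r`. -/
def Qp (a b : Fin n → ℕ) (t : ℕ) : Prop :=
  0 < t ∧ ∃ (j : Fin n) (c : Fin (n+1) → ℕ), (∑ k, c k = t) ∧
    Finsupp.single j 1 + v a b c ≤ t • Bv b

lemma Qp_exists (hn : 2 ≤ n) (hba : ∀ i, b i < a i) (hb : ∀ i, 0 < b i)
    (hsum : 1 < (∑ i, (b i : ℚ) / (a i : ℚ))) : ∃ t, Qp a b t := by
  have ha : ∀ i, 0 < a i := fun i => lt_trans (hb i) (hba i)
  -- choose t with t * (S - 1) > n
  set S := ∑ i, (b i : ℚ) / (a i : ℚ) with hS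
  have hSpos : 0 < S - 1 := by linarith
  obtain ⟨t, htgt⟩ := exists_nat_gt (((n : ℚ) + 1) / (S - 1))
  have htq : ((n : ℚ) + 1) < t * (S - 1) := by
    rw [div_lt_iff₀ hSpos] at htgt
    linarith
  have htpos : 0 < t := by
    by_contra h
    push_neg at h
    interval_cases t
    simp at htq
    have : (0:ℚ) ≤ (n:ℚ) := Nat.cast_nonneg n
    linarith
  set F : Fin n → ℕ := fun i => t * b i / a i with hF
  have hdm : ∀ i, a i * F i ≤ t * b i ∧ t * b i < a i * F i + a i := by
    intro i
    have h1 : a i * F i + t * b i % a i = t * b i := Nat.div_add_mod _ _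
    have h2 := Nat.mod_lt (t * b i) (ha i)
    constructor <;> [omega; omega]
  have hsumF : t + 1 ≤ ∑ i, F i := by
    have h1 : ∀ i : Fin n, (t:ℚ) * ((b i:ℚ) / a i) < F i + 1 := by
      intro i
      have hai : (0:ℚ) < a i := by exact_mod_cast ha i
      rw [mul_div_assoc', div_lt_iff₀ hai]
      have := (hdm i).2
      have hq : (t:ℚ) * b i < (a i:ℚ) * F i + a i := by exact_mod_cast this
      nlinarith
    have h2 : (t:ℚ) * S < ∑ i, ((F i:ℚ) + 1) := by
      rw [hS, Finset.mul_sum]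
      exact Finset.sum_lt_sum_of_nonempty (Finset.univ_nonempty_iff.mpr
        ⟨⟨0, by omega⟩⟩) fun i _ => h1 i
    rw [Finset.sum_add_distrib] at h2
    simp only [Finset.sum_const, Finset.card_univ, Fintype.card_fin, nsmul_eq_mul, mul_one] at h2
    have h3 : (t:ℚ) + 1 < ∑ i, (F i:ℚ) := by nlinarith
    have h4 : (((t + 1 : ℕ)):ℚ) < ((∑ i, F i : ℕ):ℚ) := by push_cast; linarith
    exact_mod_cast h4.le
  obtain ⟨c, hcle, hcsum⟩ := exists_le_sum F t (by omega)
  have hj : ∃ j, c j < F j := by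
    by_contra h
    push_neg at h
    have : ∑ i, F i ≤ ∑ i, c i := Finset.sum_le_sum fun i _ => h i
    omega
  obtain ⟨j, hj⟩ := hj
  refine ⟨t, htpos, j, Fin.snoc c 0, ?_, ?_⟩
  · rw [Fin.sum_univ_castSucc]
    simp [hcsum]
  · rw [Finsupp.le_def]
    intro i
    have hsnoc1 : (Fin.snoc c 0 : Fin (n+1) → ℕ) i.castSucc = c i := by simp
    have hsnoc2 : (Fin.snoc c 0 : Fin (n+1) → ℕ) (Fin.last n) = 0 := by simp
    simp only [Finsupp.add_apply, Finsupp.smul_apply, Bv_apply, smul_eq_mul, v_apply,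
      hsnoc1, hsnoc2, mul_zero, add_zero, Finsupp.single_apply]
    have hm1 : a i * c i ≤ a i * F i := Nat.mul_le_mul_left _ (hcle i)
    have hm2 := (hdm i).1
    by_cases hij : j = i
    · subst hij
      rw [if_pos rfl]
      have hm3 : a j * (c j + 1) ≤ a j * F j := Nat.mul_le_mul_left _ (by omega)
      have hm4 : a j * (c j + 1) = a j * c j + a j := by ring
      have := ha j
      omega
    · rw [if_neg hij]
      omega

end Comb


section Claims

variable {a b : Fin n → ℕ}

lemma claimA {r : ℕ} (hQ : Qp a b r) (c : Fin (n+1) → ℕ) (hc : r ≤ c (Fin.last n)) :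
    ∃ (j : Fin n) (c' : Fin (n+1) → ℕ), (∑ k, c' k = ∑ k, c k) ∧
      Finsupp.single j 1 + v a b c' ≤ v a b c := by
  obtain ⟨-, j, c0, hc0sum, hc0le⟩ := hQ
  set cm : Fin (n+1) → ℕ := Function.update c (Fin.last n) (c (Fin.last n) - r) with hcm
  have hcmcs : ∀ i : Fin n, cm i.castSucc = c i.castSucc := by
    intro i
    exact Function.update_of_ne (Fin.castSucc_lt_last i).ne _ _
  have hcml : cm (Fin.last n) = c (Fin.last n) - r := Function.update_self _ _ _
  have hvc : v a b c = r • Bv b + v a b cm := by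
    ext i
    simp only [Finsupp.add_apply, Finsupp.smul_apply, Bv_apply, smul_eq_mul, v_apply,
      hcmcs, hcml]
    have h1 : b i * (c (Fin.last n) - r) + b i * r = b i * c (Fin.last n) := by
      rw [← Nat.mul_add]
      congr 1
      omega
    have h2 : r * b i = b i * r := Nat.mul_comm _ _
    omega
  refine ⟨j, c0 + cm, ?_, ?_⟩
  · have h1 : ∑ k, (c0 + cm) k = ∑ k, c0 k + ∑ k, cm k := by
      simp [Finset.sum_add_distrib]
    rw [h1, hc0sum]
    rw [Fin.sum_univ_castSucc cm, Fin.sum_univ_castSucc c]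
    rw [Finset.sum_congr rfl fun i _ => hcmcs i, hcml]
    omega
  · rw [v_add, hvc, ← add_assoc]
    exact add_le_add_left hc0le _

lemma claimB (ha : ∀ i, 0 < a i) (hbp : ∀ i, 0 < b i)
    (hsum : 1 < (∑ i, (b i : ℚ) / (a i : ℚ)))
    {r : ℕ} (hmin : ∀ s, s < r → ¬ Qp a b s)
    (c : Fin (n+1) → ℕ) (j : Fin n) (c' : Fin (n+1) → ℕ)
    (hdeg : ∑ k, c' k = ∑ k, c k)
    (hle : Finsupp.single j 1 + v a b c' ≤ v a b c) :
    r ≤ c (Fin.last n) := by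
  by_contra hlt
  push_neg at hlt
  set cl := c (Fin.last n) with hcl
  set c'l := c' (Fin.last n) with hc'l
  have hvi : ∀ i : Fin n, (if j = i then 1 else 0) + (a i * c' i.castSucc + b i * c'l)
      ≤ a i * c i.castSucc + b i * cl := by
    intro i
    have := Finsupp.le_def.mp hle i
    simpa [Finsupp.single_apply, v_apply] using this
  have hsums : ∑ i : Fin n, c' i.castSucc + c'l = ∑ i : Fin n, c i.castSucc + cl := by
    rw [Fin.sum_univ_castSucc c, Fin.sum_univ_castSucc c'] at hdeg
    omega
  rcases le_or_gt cl c'l with hcase | hcase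
  · -- c' last ≥ c last : direct contradiction
    set t := c'l - cl with ht
    rcases Nat.eq_zero_or_pos t with ht0 | ht0
    · -- equal last entries
      have hlast : c'l = cl := by omega
      have hcle : ∀ i : Fin n, c' i.castSucc ≤ c i.castSucc := by
        intro i
        have h1 := hvi i
        have h2 : b i * c'l = b i * cl := by rw [hlast]
        have h3 : a i * c' i.castSucc ≤ a i * c i.castSucc := by omega
        exact Nat.le_of_mul_le_mul_left h3 (ha i)
      have hj : c' j.castSucc < c j.castSucc := by
        have h1 := hvi j
        rw [if_pos rfl] at h1
        have h2 : b j * c'l = b j * cl := by rw [hlast]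
        have h3 : a j * c' j.castSucc < a j * c j.castSucc := by omega
        exact lt_of_not_ge fun h => absurd (Nat.mul_le_mul_left (a j) h) (by omega)
      have := Finset.sum_lt_sum (fun i (_ : i ∈ Finset.univ) => hcle i)
        ⟨j, Finset.mem_univ j, hj⟩
      omega
    · -- c' last > c last : contradict hsum via qarith
      have hmul : ∀ i : Fin n, b i * c'l = b i * cl + b i * t := by
        intro i
        rw [← Nat.mul_add]
        congr 1
        omega
      have hcle : ∀ i : Fin n, c' i.castSucc ≤ c i.castSucc := by
        intro i
        have h1 := hvi i
        have h2 := hmul i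
        have h3 : a i * c' i.castSucc ≤ a i * c i.castSucc := by omega
        exact Nat.le_of_mul_le_mul_left h3 (ha i)
      refine qarith ha hsum ht0 (fun i => c i.castSucc - c' i.castSucc) ?_ ?_
      · intro i
        show b i * t ≤ a i * (c i.castSucc - c' i.castSucc)
        have h1 := hvi i
        have h2 := hmul i
        have h3 : a i * (c i.castSucc - c' i.castSucc)
            = a i * c i.castSucc - a i * c' i.castSucc := by rw [Nat.mul_sub]
        have h4 := Nat.mul_le_mul_left (a i) (hcle i)
        omega
      · show ∑ i : Fin n, (c i.castSucc - c' i.castSucc) ≤ t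
        have hs2 : ∑ i : Fin n, (c i.castSucc - c' i.castSucc) + ∑ i : Fin n, c' i.castSucc
            = ∑ i : Fin n, c i.castSucc := by
          rw [← Finset.sum_add_distrib]
          exact Finset.sum_congr rfl fun i _ => by have := hcle i; omega
        omega
  · -- c' last < c last : produce a smaller witness, contradict minimality
    have hclpos : 0 < cl := by omega
    refine hmin cl hlt ⟨hclpos, j, ?_⟩
    set e : Fin n → ℕ := fun i => c' i.castSucc - c i.castSucc with he
    have hkey : ∀ i : Fin n, a i * e i + b i * c'l ≤ b i * cl := by
      intro i
      show a i * (c' i.castSucc - c i.castSucc) + b i * c'l ≤ b i * cl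
      have h1 := hvi i
      have hmono : b i * c'l ≤ b i * cl := Nat.mul_le_mul_left _ hcase.le
      by_cases hci : c i.castSucc ≤ c' i.castSucc
      · have msub : a i * (c' i.castSucc - c i.castSucc)
            = a i * c' i.castSucc - a i * c i.castSucc := by rw [Nat.mul_sub]
        have h4 := Nat.mul_le_mul_left (a i) hci
        omega
      · have he0 : c' i.castSucc - c i.castSucc = 0 := by omega
        rw [he0, mul_zero]
        omega
    have hkeyj : a j * e j + b j * c'l + 1 ≤ b j * cl := by
      show a j * (c' j.castSucc - c j.castSucc) + b j * c'l + 1 ≤ b j * cl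
      have h1 := hvi j
      rw [if_pos rfl] at h1
      by_cases hci : c j.castSucc ≤ c' j.castSucc
      · have msub : a j * (c' j.castSucc - c j.castSucc)
            = a j * c' j.castSucc - a j * c j.castSucc := by rw [Nat.mul_sub]
        have h4 := Nat.mul_le_mul_left (a j) hci
        omega
      · have he0 : c' j.castSucc - c j.castSucc = 0 := by omega
        rw [he0, mul_zero]
        have hmono : b j * (c'l + 1) ≤ b j * cl := Nat.mul_le_mul_left _ (by omega)
        have hexp : b j * (c'l + 1) = b j * c'l + b j := Nat.mul_succ _ _
        have := hbp j
        omega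
    have hsumE : cl ≤ ∑ i, e i + c'l := by
      have h1 : ∀ i : Fin n, c' i.castSucc ≤ c i.castSucc + e i := by
        intro i
        show c' i.castSucc ≤ c i.castSucc + (c' i.castSucc - c i.castSucc)
        omega
      have h2 : ∑ i : Fin n, c' i.castSucc ≤ ∑ i : Fin n, (c i.castSucc + e i) :=
        Finset.sum_le_sum fun i _ => h1 i
      rw [Finset.sum_add_distrib] at h2
      omega
    have hsnocsum : cl ≤ ∑ k, (Fin.snoc e c'l : Fin (n+1) → ℕ) k := by
      rw [Fin.sum_univ_castSucc]
      simpa using hsumE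
    obtain ⟨c3, hc3le, hc3sum⟩ := exists_le_sum (Fin.snoc e c'l : Fin (n+1) → ℕ) cl hsnocsum
    refine ⟨c3, hc3sum, ?_⟩
    rw [Finsupp.le_def]
    intro i
    simp only [Finsupp.add_apply, Finsupp.smul_apply, Bv_apply, smul_eq_mul, v_apply,
      Finsupp.single_apply]
    have hm1 : a i * c3 i.castSucc ≤ a i * e i := by
      refine Nat.mul_le_mul_left _ ?_
      have := hc3le i.castSucc
      simpa using this
    have hm2 : b i * c3 (Fin.last n) ≤ b i * c'l := by
      refine Nat.mul_le_mul_left _ ?_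
      have := hc3le (Fin.last n)
      simpa using this
    have hcomm : cl * b i = b i * cl := Nat.mul_comm _ _
    by_cases hij : j = i
    · subst hij
      rw [if_pos rfl]
      have := hkeyj
      omega
    · rw [if_neg hij]
      have := hkey i
      omega

end Claims


lemma degree_eq_sum {m : ℕ} (c : Fin m →₀ ℕ) : c.degree = ∑ k, c k :=
  Finset.sum_subset (Finset.subset_univ _) (fun k _ hk => Finsupp.notMem_support_iff.mp hk)

end Stmt2Aux

open Stmt2Aux Pointwise

theorem stmt_2 {K : Type*} [Field K] (n : ℕ) (hn : 2 ≤ n)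
    (a b : Fin n → ℕ) (hba : ∀ i, b i < a i) (hb : ∀ i, 0 < b i)
    (I mm : Ideal (MvPolynomial (Fin n) K))
    (hI : I = Ideal.span (Set.range (fun i => (X i : MvPolynomial (Fin n) K) ^ a i) ∪
      {∏ i, (X i : MvPolynomial (Fin n) K) ^ b i}))
    (hmm : mm = Ideal.span (Set.range (X : Fin n → MvPolynomial (Fin n) K)))
    (u : Fin (n + 1) → MvPolynomial (Fin n) K)
    (hu : ∀ i : Fin n, u i.castSucc = X i ^ a i)
    (hulast : u (Fin.last n) = ∏ i, X i ^ b i)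
    (J : Ideal (MvPolynomial (Fin (n + 1)) K))
    (hJ : ∀ f : MvPolynomial (Fin (n + 1)) K,
      f ∈ J ↔ ∀ d : ℕ, aeval u (homogeneousComponent d f) ∈ mm * I ^ d)
    (hsum : 1 < (∑ i, (b i : ℚ) / (a i : ℚ))) :
    ∃ r : ℕ, 0 < r ∧
      J = Ideal.span {(X (Fin.last n) : MvPolynomial (Fin (n + 1)) K) ^ r} := by
  classical
  have ha : ∀ i, 0 < a i := fun i => lt_trans (hb i) (hba i)
  have hex : ∃ t, Qp a b t := Qp_exists hn hba hb hsum
  set r := Nat.find hex with hrdef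
  have hQr : Qp a b r := Nat.find_spec hex
  have hmin : ∀ s, s < r → ¬ Qp a b s := fun s hs => Nat.find_min hex hs
  refine ⟨r, hQr.1, ?_⟩
  -- the key pointwise condition
  have hcond : ∀ c : Fin (n+1) →₀ ℕ,
      ((∃ s ∈ (Set.range fun j : Fin n => Finsupp.single j 1) + Sd a b (∑ k, c k),
        s ≤ v a b ⇑c) ↔ r ≤ c (Fin.last n)) := by
    intro c
    constructor
    · rintro ⟨s, hs, hle⟩
      rw [Set.mem_add] at hs
      obtain ⟨x, ⟨j, rfl⟩, y, ⟨c', hc', rfl⟩, rfl⟩ := hs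
      exact claimB ha hb hsum hmin ⇑c j c' hc' hle
    · intro hc
      obtain ⟨j, c', hc'sum, hc'le⟩ := claimA hQr ⇑c hc
      exact ⟨Finsupp.single j 1 + v a b c',
        Set.mem_add.mpr ⟨Finsupp.single j 1, ⟨j, rfl⟩, v a b c', ⟨c', hc'sum, rfl⟩, rfl⟩,
        hc'le⟩
  -- membership in the ideal on the right
  have hspan : ∀ f : MvPolynomial (Fin (n+1)) K,
      f ∈ Ideal.span {(X (Fin.last n) : MvPolynomial (Fin (n + 1)) K) ^ r} ↔
        ∀ c ∈ f.support, r ≤ c (Fin.last n) := by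
    intro f
    have h1 : ({(X (Fin.last n) : MvPolynomial (Fin (n + 1)) K) ^ r} : Set _)
        = (fun s => monomial s (1:K)) '' {Finsupp.single (Fin.last n) r} := by
      rw [Set.image_singleton, X_pow_eq_monomial]
    rw [h1, mem_ideal_span_monomial_image]
    simp only [Set.mem_singleton_iff, exists_eq_left, Finsupp.single_le_iff]
  -- membership in `mm * I ^ d` for the homogeneous components
  have hcomp : ∀ (f : MvPolynomial (Fin (n+1)) K) (d : ℕ),
      (aeval u (homogeneousComponent d f) ∈ mm * I ^ d ↔
        ∀ c ∈ (homogeneousComponent d f).support, ∃ s ∈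
          (Set.range fun j : Fin n => Finsupp.single j 1) + Sd a b d, s ≤ v a b ⇑c) := by
    intro f d
    set g := homogeneousComponent d f with hg
    have hdeg : ∀ c ∈ g.support, (∑ k, c k) = d := by
      intro c hc
      rw [mem_support_iff, hg, coeff_homogeneousComponent] at hc
      by_cases h : c.degree = d
      · rw [← degree_eq_sum]; exact h
      · rw [if_neg h] at hc; exact absurd rfl hc
    have hinj : ∀ c ∈ g.support, ∀ c' ∈ g.support, v a b ⇑c = v a b ⇑c' → c = c' := by
      intro c hc c' hc' hv
      have h1 := hdeg c hc
      have h2 := hdeg c' hc'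
      have := v_inj ha hsum ⇑c ⇑c' (by rw [h1, h2]) hv
      exact DFunLike.coe_injective this
    rw [mm_Ipow_eq_span a b I mm hI hmm d, mem_ideal_span_monomial_image,
      support_aeval_eq hu hulast g hinj]
    constructor
    · intro h c hc
      exact h _ (Finset.mem_image_of_mem _ hc)
    · intro h w hw
      obtain ⟨c, hc, rfl⟩ := Finset.mem_image.mp hw
      exact h c hc
  -- put everything together
  ext f
  rw [hJ, hspan]
  constructor
  · intro h c hc
    have hd := (hcomp f (∑ k, c k)).mp (h (∑ k, c k))
    have hcmem : c ∈ (homogeneousComponent (∑ k, c k) f).support := by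
      rw [mem_support_iff, coeff_homogeneousComponent, degree_eq_sum, if_pos rfl]
      exact mem_support_iff.mp hc
    exact (hcond c).mp (hd c hcmem)
  · intro h d
    rw [hcomp f d]
    intro c hc
    have hdc : (∑ k, c k) = d := by
      rw [mem_support_iff, coeff_homogeneousComponent] at hc
      by_cases hh : c.degree = d
      · rw [← degree_eq_sum]; exact hh
      · rw [if_neg hh] at hc; exact absurd rfl hc
    have hcf : c ∈ f.support := by
      rw [mem_support_iff, coeff_homogeneousComponent] at hc
      rw [mem_support_iff]
      intro h0
      rw [h0] at hc
      simp at hc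
    have := (hcond c).mpr (h c hcf)
    rw [hdc] at this
    exact this
end

section
/- If ∑_{i=1}^n b_i/a_i < 1 (as rational numbers), then there exist positive integers r_1, …, r_n such that J is the principal ideal generated by the monomial ∏_{i=1}^n z_i^{r_i}, i.e. J = (∏_{i=1}^n z_i^{r_i}). -/
/-!
Substituting `z_k ↦ u_k` sends the monomial `z^c` to `x^(A c)` with
`(A c)_i = a_i c_i + b_i c_{n+1}`, and `m I^d` is the monomial ideal spanned by the `x^(e_j + A e)`
with `|e| = d`. Because `∑ b_i / a_i < 1`, `A` is injective on each degree slice, so the monomials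
of a form never cancel and `J` is spanned by the `z^c` with `x^(A c) ∈ m I^|c|`. For such a `c`,
the witness `e` must use `w > 0` more copies of `z_{n+1}`, paid for by exponents `δ_i ≤ c_i` with
`a_i δ_i ≥ b_i w` and `∑ δ_i = w`. The least such `w`, say `t`, yields the smallest possible `δ`,
namely `r_i = ⌈b_i t / a_i⌉`; conversely every `c ≥ r` admits the trade `δ = r`.
-/

open MvPolynomial Pointwise

section MonomialIdeal

variable {σ R : Type*} [CommSemiring R]

theorem span_monomial_one_mul_span (P Q : Set (σ →₀ ℕ)) :
    Ideal.span ((monomial · (1 : R)) '' P) * Ideal.span ((monomial · (1 : R)) '' Q) =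
      Ideal.span ((monomial · (1 : R)) '' (P + Q)) := by
  rw [Ideal.span_mul_span', ← Set.image2_mul, Set.image2_image_left, Set.image2_image_right,
    ← Set.image2_add, Set.image_image2]
  simp only [monomial_mul, one_mul]

theorem span_range_X_eq_span_monomial :
    Ideal.span (Set.range (X : σ → MvPolynomial σ R)) =
      Ideal.span ((monomial · (1 : R)) '' Set.range (Finsupp.single · 1)) := by
  rw [← Set.range_comp]
  rfl

theorem mem_span_singleton_monomial_iff {s : σ →₀ ℕ} {p : MvPolynomial σ R} :
    p ∈ Ideal.span {monomial s (1 : R)} ↔ ∀ c ∈ p.support, s ≤ c := by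
  rw [← Set.image_singleton (f := (monomial · (1 : R))), mem_ideal_span_monomial_image]
  simp only [Set.mem_singleton_iff, exists_eq_left]

theorem prod_univ_X_pow_eq_monomial [Fintype σ] (g : σ → ℕ) :
    ∏ i, (X i : MvPolynomial σ R) ^ g i = monomial (Finsupp.equivFunOnFinite.symm g) 1 := by
  rw [monomial_eq, C_1, one_mul, Finsupp.prod_fintype _ _ fun i => pow_zero _]
  rfl

theorem mem_span_prod_X_castSucc_pow_iff {n : ℕ} (r : Fin n → ℕ)
    (p : MvPolynomial (Fin (n + 1)) R) :
    p ∈ Ideal.span {∏ i, (X i.castSucc : MvPolynomial (Fin (n + 1)) R) ^ r i} ↔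
      ∀ c ∈ p.support, ∀ i, r i ≤ c i.castSucc := by
  have : ∏ i, (X i.castSucc : MvPolynomial (Fin (n + 1)) R) ^ r i =
      ∏ k, X k ^ (Fin.snoc r 0 : Fin (n + 1) → ℕ) k := by
    simp [Fin.prod_univ_castSucc]
  rw [this, prod_univ_X_pow_eq_monomial, mem_span_singleton_monomial_iff]
  simp [Finsupp.le_def, Fin.forall_fin_succ']

end MonomialIdeal

section MonomialSubstitution

variable {ι σ R : Type*} [CommSemiring R] (A : (ι →₀ ℕ) →+ (σ →₀ ℕ))
  {u : ι → MvPolynomial σ R}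

theorem aeval_monomial_of_eq_monomial (hu : ∀ k, u k = monomial (A (Finsupp.single k 1)) 1)
    (c : ι →₀ ℕ) (r : R) : aeval u (monomial c r) = monomial (A c) r := by
  rw [aeval_monomial, algebraMap_eq, ← c.sum_single, map_finsuppSum, c.sum_single,
    monomial_finsupp_sum_index]
  congr 1
  refine Finsupp.prod_congr fun k _ => ?_
  rw [hu, monomial_pow, ← map_nsmul, Finsupp.smul_single, smul_eq_mul, mul_one, one_pow]

theorem aeval_eq_sum_monomial (hu : ∀ k, u k = monomial (A (Finsupp.single k 1)) 1)
    (p : MvPolynomial ι R) :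
    aeval u p = ∑ c ∈ p.support, monomial (A c) (coeff c p) := by
  conv_lhs => rw [p.as_sum]
  simp only [map_sum, aeval_monomial_of_eq_monomial A hu]

theorem support_aeval_of_injOn [DecidableEq σ]
    (hu : ∀ k, u k = monomial (A (Finsupp.single k 1)) 1)
    {p : MvPolynomial ι R} (hA : Set.InjOn A p.support) :
    (aeval u p).support = p.support.image A := by
  refine subset_antisymm ?_ fun m hm => ?_
  · rw [aeval_eq_sum_monomial A hu]
    refine support_sum.trans (Finset.biUnion_subset.mpr fun c hc => ?_)
    exact (support_monomial_subset).trans (Finset.singleton_subset_iff.mpr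
      (Finset.mem_image_of_mem A hc))
  obtain ⟨c, hc, rfl⟩ := Finset.mem_image.mp hm
  have hcoeff : coeff (A c) (aeval u p) = coeff c p := by
    rw [aeval_eq_sum_monomial A hu, coeff_sum, Finset.sum_eq_single_of_mem c hc, coeff_monomial,
      if_pos rfl]
    intro c' hc' hne
    rw [coeff_monomial, if_neg fun h => hne (hA hc' hc h)]
  rw [mem_support_iff, hcoeff]
  exact mem_support_iff.mp hc

theorem aeval_mem_span_monomial_iff (hu : ∀ k, u k = monomial (A (Finsupp.single k 1)) 1)
    {p : MvPolynomial ι R} (hA : Set.InjOn A p.support) {P : Set (σ →₀ ℕ)} :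
    aeval u p ∈ Ideal.span ((monomial · (1 : R)) '' P) ↔ ∀ c ∈ p.support, ∃ s ∈ P, s ≤ A c := by
  classical
  rw [mem_ideal_span_monomial_image, support_aeval_of_injOn A hu hA, Finset.forall_mem_image]

theorem map_aeval_span_monomial (hu : ∀ k, u k = monomial (A (Finsupp.single k 1)) 1)
    (P : Set (ι →₀ ℕ)) :
    Ideal.map (aeval u) (Ideal.span ((monomial · (1 : R)) '' P)) =
      Ideal.span ((monomial · (1 : R)) '' (A '' P)) := by
  rw [Ideal.map_span, Set.image_image, Set.image_image]
  simp only [aeval_monomial_of_eq_monomial A hu]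

theorem span_range_X_mul_span_range_pow (hu : ∀ k, u k = monomial (A (Finsupp.single k 1)) 1)
    (d : ℕ) : Ideal.span (Set.range (X : σ → MvPolynomial σ R)) * Ideal.span (Set.range u) ^ d =
      Ideal.span ((monomial · (1 : R)) ''
        (Set.range (Finsupp.single · 1) + A '' (Finsupp.degree ⁻¹' {d}))) := by
  have : Ideal.span (Set.range u) = Ideal.map (aeval u) (idealOfVars ι R) := by
    rw [Ideal.map_span, ← Set.range_comp]
    simp only [Function.comp_def, aeval_X]
  rw [this, ← Ideal.map_pow, pow_idealOfVars_eq_span, map_aeval_span_monomial A hu,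
    span_range_X_eq_span_monomial, span_monomial_one_mul_span]

theorem forall_aeval_homogeneousComponent_mem_iff
    (hu : ∀ k, u k = monomial (A (Finsupp.single k 1)) 1)
    (hA : ∀ d, Set.InjOn A (Finsupp.degree ⁻¹' {d})) (P : ℕ → Set (σ →₀ ℕ))
    (p : MvPolynomial ι R) :
    (∀ d, aeval u (homogeneousComponent d p) ∈ Ideal.span ((monomial · (1 : R)) '' P d)) ↔
      ∀ c ∈ p.support, ∃ s ∈ P c.degree, s ≤ A c := by
  have hinj (d : ℕ) : Set.InjOn A (homogeneousComponent d p).support :=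
    (hA d).mono fun c hc => by
      rw [Finset.mem_coe, support_homogeneousComponent] at hc
      exact (Finset.mem_filter.mp hc).2
  simp only [aeval_mem_span_monomial_iff A hu (hinj _), support_homogeneousComponent,
    Finset.mem_filter, and_imp]
  exact ⟨fun h c hc => h _ c hc rfl, fun h d c hc hd => hd ▸ h c hc⟩

end MonomialSubstitution

section Arithmetic

variable {ι : Type*} [Fintype ι] {a b : ι → ℕ}

theorem sum_lt_of_mul_le (ha : ∀ i, 0 < a i) (hsum : ∑ i, (b i : ℚ) / a i < 1) {w : ℕ}
    (hw : 0 < w) {δ : ι → ℕ} (hδ : ∀ i, a i * δ i ≤ b i * w) : ∑ i, δ i < w := by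
  have hδ' : ∀ i, (δ i : ℚ) ≤ b i / a i * w := fun i => by
    rw [div_mul_eq_mul_div, le_div_iff₀ (by exact_mod_cast ha i), mul_comm]
    exact_mod_cast hδ i
  have : (∑ i, δ i : ℚ) < w := calc
    (∑ i, δ i : ℚ) ≤ (∑ i, (b i : ℚ) / a i) * w := by
      rw [Finset.sum_mul]; exact Finset.sum_le_sum fun i _ => hδ' i
    _ < w := mul_lt_of_lt_one_left (by exact_mod_cast hw) hsum
  exact_mod_cast this

theorem exists_lt_mul_of_sum_pos (ha : ∀ i, 0 < a i) (hsum : ∑ i, (b i : ℚ) / a i < 1)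
    {δ : ι → ℕ} (hδ : 0 < ∑ i, δ i) : ∃ j, b j * ∑ i, δ i < a j * δ j := by
  by_contra! h
  exact (sum_lt_of_mul_le ha hsum hδ h).false

theorem ceilDiv_pos_of_pos {x y : ℕ} (hy : 0 < y) (hx : 0 < x) : 0 < x ⌈/⌉ y :=
  Nat.pos_of_ne_zero fun h => hx.ne' <| Nat.le_zero.mp <| by
    simpa [h] using le_smul_ceilDiv hy (b := x)

-- `δ_i = ⌈b_i w / a_i⌉` is the cheapest payment `a_i δ_i ≥ b_i w` for a surplus `w` of the last
-- exponent, and it must fit into `∑ δ_i ≤ w`.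
variable (a b) in
def IsAdmissible (w : ℕ) : Prop :=
  0 < w ∧ ∑ i, (b i * w) ⌈/⌉ a i ≤ w

theorem exists_isAdmissible (ha : ∀ i, 0 < a i) (hsum : ∑ i, (b i : ℚ) / a i < 1) :
    ∃ w, IsAdmissible a b w := by
  have hpos : 0 < ∏ i, a i := Finset.prod_pos fun i _ => ha i
  have hdvd : ∀ i, a i * ((∏ j, a j) / a i) = ∏ j, a j :=
    fun i => Nat.mul_div_cancel' (Finset.dvd_prod_of_mem _ (Finset.mem_univ i))
  refine ⟨∏ i, a i, hpos, le_of_lt ?_⟩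
  calc ∑ i, (b i * ∏ j, a j) ⌈/⌉ a i ≤ ∑ i, b i * ((∏ j, a j) / a i) :=
        Finset.sum_le_sum fun i _ => by rw [ceilDiv_le_iff_le_mul (ha i), mul_left_comm, hdvd]
    _ < ∏ i, a i := sum_lt_of_mul_le ha hsum hpos fun i => by rw [mul_left_comm, hdvd]

end Arithmetic

section ExponentMap

variable {n : ℕ} {a b : Fin n → ℕ}

-- `z^c` is sent to `x^(expMap a b c)` by `z_i ↦ x_i^(a_i)`, `z_{n+1} ↦ ∏ x_i^(b_i)`.
variable (a b) in
noncomputable def expMap : (Fin (n + 1) →₀ ℕ) →+ (Fin n →₀ ℕ) where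
  toFun c := Finsupp.equivFunOnFinite.symm fun i => a i * c i.castSucc + b i * c (Fin.last n)
  map_zero' := by ext; simp
  map_add' c e := by ext; simp only [Finsupp.coe_add, Pi.add_apply,
    Finsupp.coe_equivFunOnFinite_symm]; ring

@[simp]
theorem expMap_apply (c : Fin (n + 1) →₀ ℕ) (i : Fin n) :
    expMap a b c i = a i * c i.castSucc + b i * c (Fin.last n) := rfl

theorem expMap_single_castSucc (i : Fin n) :
    expMap a b (Finsupp.single i.castSucc 1) = Finsupp.single i (a i) := by
  ext i'
  rcases eq_or_ne i i' with rfl | hne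
  · simp
  · simp [(Fin.castSucc_lt_last i).ne, hne]

theorem expMap_single_last :
    expMap a b (Finsupp.single (Fin.last n) 1) = Finsupp.equivFunOnFinite.symm b := by
  ext i
  simp

theorem degree_eq_sum_castSucc_add_last (c : Fin (n + 1) →₀ ℕ) :
    c.degree = ∑ i : Fin n, c i.castSucc + c (Fin.last n) := by
  rw [Finsupp.degree_eq_sum, Fin.sum_univ_castSucc]

theorem eq_of_expMap_le (ha : ∀ i, 0 < a i) (hsum : ∑ i, (b i : ℚ) / a i < 1)
    {c e : Fin (n + 1) →₀ ℕ} (hdeg : e.degree = c.degree)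
    (hlast : e (Fin.last n) ≤ c (Fin.last n)) (hle : expMap a b e ≤ expMap a b c) : e = c := by
  have hle' (i : Fin n) := hle i
  simp only [expMap_apply] at hle'
  rw [degree_eq_sum_castSucc_add_last, degree_eq_sum_castSucc_add_last] at hdeg
  -- a surplus `w > 0` would need `∑ (e_i - c_i) = w` with `a_i (e_i - c_i) ≤ b_i w`
  have hlast_eq : e (Fin.last n) = c (Fin.last n) := by
    by_contra hne
    set w := c (Fin.last n) - e (Fin.last n)
    have hlt : ∑ i : Fin n, (e i.castSucc - c i.castSucc) < w :=
      sum_lt_of_mul_le ha hsum (by omega) fun i => by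
        have := hle' i; rw [Nat.mul_sub, Nat.mul_sub]; omega
    have : ∑ i : Fin n, e i.castSucc ≤
        ∑ i : Fin n, c i.castSucc + ∑ i : Fin n, (e i.castSucc - c i.castSucc) := by
      rw [← Finset.sum_add_distrib]; exact Finset.sum_le_sum fun i _ => by omega
    omega
  have hcast_le (i : Fin n) : e i.castSucc ≤ c i.castSucc :=
    Nat.le_of_mul_le_mul_left (by have := hle' i; rw [hlast_eq] at this; omega) (ha i)
  have hcast_eq := (Finset.sum_eq_sum_iff_of_le (s := Finset.univ) fun i _ => hcast_le i).mp
    (by omega)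
  ext k
  induction k using Fin.lastCases with
  | last => exact hlast_eq
  | cast i => exact hcast_eq i (Finset.mem_univ i)

theorem injOn_expMap_degree (ha : ∀ i, 0 < a i) (hsum : ∑ i, (b i : ℚ) / a i < 1) (d : ℕ) :
    Set.InjOn (expMap a b) (Finsupp.degree ⁻¹' {d}) := by
  intro e he c hc h
  have hdeg : e.degree = c.degree := he.trans hc.symm
  rcases le_total (e (Fin.last n)) (c (Fin.last n)) with hl | hl
  · exact eq_of_expMap_le ha hsum hdeg hl h.le
  · exact (eq_of_expMap_le ha hsum hdeg.symm hl h.ge).symm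

theorem ceilDiv_le_of_single_add_expMap_le (ha : ∀ i, 0 < a i)
    (hsum : ∑ i, (b i : ℚ) / a i < 1) {t : ℕ} (hmin : ∀ w, IsAdmissible a b w → t ≤ w)
    {c e : Fin (n + 1) →₀ ℕ} {j : Fin n} (hdeg : e.degree = c.degree)
    (hle : Finsupp.single j 1 + expMap a b e ≤ expMap a b c) (i : Fin n) :
    (b i * t) ⌈/⌉ a i ≤ c i.castSucc := by
  have hlast : c (Fin.last n) < e (Fin.last n) := by
    by_contra! h
    obtain rfl := eq_of_expMap_le ha hsum hdeg h (le_add_self.trans hle)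
    simpa using hle j
  set w := e (Fin.last n) - c (Fin.last n)
  have hle' (i : Fin n) : a i * e i.castSucc + b i * w ≤ a i * c i.castSucc := by
    have := hle i
    have := Nat.mul_le_mul_left (b i) hlast.le
    simp only [Finsupp.add_apply, expMap_apply] at *
    rw [Nat.mul_sub]
    omega
  have hcast_le (i : Fin n) : e i.castSucc ≤ c i.castSucc :=
    Nat.le_of_mul_le_mul_left ((Nat.le_add_right _ _).trans (hle' i)) (ha i)
  have hδ (i : Fin n) : b i * w ≤ a i * (c i.castSucc - e i.castSucc) := by
    have := hle' i
    rw [Nat.mul_sub (a i)]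
    omega
  have hsum_δ : ∑ i : Fin n, (c i.castSucc - e i.castSucc) = w := by
    rw [degree_eq_sum_castSucc_add_last, degree_eq_sum_castSucc_add_last] at hdeg
    rw [Finset.sum_tsub_distrib _ fun i _ => hcast_le i]
    omega
  have hw : IsAdmissible a b w := ⟨by omega, (Finset.sum_le_sum fun i _ =>
    (ceilDiv_le_iff_le_mul (ha i)).mpr (hδ i)).trans hsum_δ.le⟩
  calc (b i * t) ⌈/⌉ a i ≤ c i.castSucc - e i.castSucc :=
        (ceilDiv_le_iff_le_mul (ha i)).mpr ((Nat.mul_le_mul_left _ (hmin w hw)).trans (hδ i))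
    _ ≤ c i.castSucc := Nat.sub_le _ _

theorem exists_single_add_expMap_le (ha : ∀ i, 0 < a i) (hsum : ∑ i, (b i : ℚ) / a i < 1)
    {r : Fin n → ℕ} (hr : ∀ i, b i * ∑ j, r j ≤ a i * r i) (hr0 : 0 < ∑ i, r i)
    {c : Fin (n + 1) →₀ ℕ} (hc : ∀ i, r i ≤ c i.castSucc) :
    ∃ j e, e.degree = c.degree ∧ Finsupp.single j 1 + expMap a b e ≤ expMap a b c := by
  obtain ⟨j, hj⟩ := exists_lt_mul_of_sum_pos ha hsum hr0
  -- trade the exponents `r` of the first `n` variables for `∑ r` more copies of the last one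
  let e : Fin (n + 1) →₀ ℕ := Finsupp.equivFunOnFinite.symm
    (Fin.snoc (fun i => c i.castSucc - r i) (c (Fin.last n) + ∑ i, r i))
  refine ⟨j, e, ?_, fun i => ?_⟩
  · have : ∑ i : Fin n, (c i.castSucc - r i) + ∑ i, r i = ∑ i : Fin n, c i.castSucc := by
      rw [Finset.sum_tsub_distrib _ fun i _ => hc i]
      have := Finset.sum_le_sum fun i (_ : i ∈ Finset.univ) => hc i
      omega
    simp only [degree_eq_sum_castSucc_add_last, e, Finsupp.coe_equivFunOnFinite_symm,
      Fin.snoc_castSucc, Fin.snoc_last]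
    omega
  · have hrc := Nat.mul_le_mul_left (a i) (hc i)
    have := hr i
    simp only [Finsupp.add_apply, expMap_apply, e, Finsupp.coe_equivFunOnFinite_symm,
      Fin.snoc_castSucc, Fin.snoc_last, Finsupp.single_apply, Nat.mul_sub, mul_add]
    split_ifs with hji
    · subst hji; omega
    · omega

theorem exists_mem_le_expMap_iff (ha : ∀ i, 0 < a i) (hb : ∀ i, 0 < b i) (hn : 0 < n)
    (hsum : ∑ i, (b i : ℚ) / a i < 1) {t : ℕ} (ht : IsAdmissible a b t)
    (hmin : ∀ w, IsAdmissible a b w → t ≤ w) (c : Fin (n + 1) →₀ ℕ) :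
    (∃ s ∈ Set.range (Finsupp.single · 1) + expMap a b '' (Finsupp.degree ⁻¹' {c.degree}),
      s ≤ expMap a b c) ↔ ∀ i, (b i * t) ⌈/⌉ a i ≤ c i.castSucc := by
  constructor
  · rintro ⟨_, ⟨_, ⟨j, rfl⟩, _, ⟨e, he, rfl⟩, rfl⟩, hle⟩
    exact ceilDiv_le_of_single_add_expMap_le ha hsum hmin he hle
  · intro hc
    have hr0 : 0 < ∑ i, (b i * t) ⌈/⌉ a i :=
      (ceilDiv_pos_of_pos (ha _) (Nat.mul_pos (hb _) ht.1)).trans_le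
      (Finset.single_le_sum (f := fun i => (b i * t) ⌈/⌉ a i) (fun _ _ => Nat.zero_le _)
        (Finset.mem_univ ⟨0, hn⟩))
    obtain ⟨j, e, he, hle⟩ := exists_single_add_expMap_le ha hsum
      (fun i => (Nat.mul_le_mul_left _ ht.2).trans (le_smul_ceilDiv (ha i))) hr0 hc
    exact ⟨_, Set.add_mem_add ⟨j, rfl⟩ ⟨e, he, rfl⟩, hle⟩

end ExponentMap

theorem stmt_3 {K : Type*} [Field K] (n : ℕ) (hn : 2 ≤ n)
    (a b : Fin n → ℕ) (hba : ∀ i, b i < a i) (hb : ∀ i, 0 < b i)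
    (I mm : Ideal (MvPolynomial (Fin n) K))
    (hI : I = Ideal.span (Set.range (fun i => (X i : MvPolynomial (Fin n) K) ^ a i) ∪
      {∏ i, (X i : MvPolynomial (Fin n) K) ^ b i}))
    (hmm : mm = Ideal.span (Set.range (X : Fin n → MvPolynomial (Fin n) K)))
    (u : Fin (n + 1) → MvPolynomial (Fin n) K)
    (hu : ∀ i : Fin n, u i.castSucc = X i ^ a i)
    (hulast : u (Fin.last n) = ∏ i, X i ^ b i)
    (J : Ideal (MvPolynomial (Fin (n + 1)) K))
    (hJ : ∀ f : MvPolynomial (Fin (n + 1)) K,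
      f ∈ J ↔ ∀ d : ℕ, aeval u (homogeneousComponent d f) ∈ mm * I ^ d)
    (hsum : (∑ i, (b i : ℚ) / (a i : ℚ)) < 1) :
    ∃ r : Fin n → ℕ, (∀ i, 0 < r i) ∧
      J = Ideal.span {∏ i, (X i.castSucc : MvPolynomial (Fin (n + 1)) K) ^ r i} := by
  classical
  have ha (i : Fin n) : 0 < a i := (hb i).trans (hba i)
  have hadm := exists_isAdmissible ha hsum
  set t := Nat.find hadm
  have ht : IsAdmissible a b t := Nat.find_spec hadm
  refine ⟨fun i => (b i * t) ⌈/⌉ a i,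
    fun i => ceilDiv_pos_of_pos (ha i) (Nat.mul_pos (hb i) ht.1), ?_⟩
  have hu' : ∀ k, u k = monomial (expMap a b (Finsupp.single k 1)) 1 := Fin.lastCases
    (by rw [hulast, expMap_single_last, prod_univ_X_pow_eq_monomial])
    (fun i => by rw [hu, expMap_single_castSucc, X_pow_eq_monomial])
  have hI' : I = Ideal.span (Set.range u) := by
    rw [hI]
    congr 1
    ext p
    simp [Fin.exists_fin_succ', hu, hulast, eq_comm, or_comm]
  ext f
  rw [hJ, mem_span_prod_X_castSucc_pow_iff, hmm, hI']
  simp only [span_range_X_mul_span_range_pow _ hu']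
  rw [forall_aeval_homogeneousComponent_mem_iff _ hu' (injOn_expMap_degree ha hsum)]
  exact forall₂_congr fun c _ => exists_mem_le_expMap_iff ha hb (by omega) hsum ht
    (fun w hw => Nat.find_min' hadm hw) c
end

section
/- The ideal J is a prime ideal of T (equivalently, the fiber cone F(I) = T/J is an integral domain) if and only if ∑_{i=1}^n b_i/a_i = 1 (as rational numbers). -/
open MvPolynomial Finsupp Pointwise

namespace Stmt5Aux

noncomputable def pack {σ : Type*} [Fintype σ] (v : σ → ℕ) : σ →₀ ℕ :=
  Finsupp.equivFunOnFinite.symm v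

@[simp] lemma pack_apply {σ : Type*} [Fintype σ] (v : σ → ℕ) (i : σ) : pack v i = v i := rfl

lemma prod_X_pow_sum {σ ι : Type*} {R : Type*} [CommSemiring R] (s : Finset ι)
    (g : ι → σ) (k : ι → ℕ) :
    (∏ i ∈ s, (X (g i) : MvPolynomial σ R) ^ k i) =
      monomial (∑ i ∈ s, Finsupp.single (g i) (k i)) 1 := by
  classical
  induction s using Finset.induction with
  | empty => simp
  | insert _ _ hx ih =>
    rw [Finset.prod_insert hx, Finset.sum_insert hx, ih, X_pow_eq_monomial, monomial_mul, one_mul]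

lemma prod_X_pow_pack {σ : Type*} [Fintype σ] {R : Type*} [CommSemiring R] (v : σ → ℕ) :
    (∏ i, (X i : MvPolynomial σ R) ^ v i) = monomial (pack v) 1 := by
  classical
  rw [prod_X_pow_sum]
  have h : (∑ i, Finsupp.single i (v i)) = pack v := by
    ext j
    rw [Finsupp.finset_sum_apply]
    simp [Finsupp.single_apply, Finset.sum_ite_eq' Finset.univ j v]
  rw [h]

lemma span_monomial_mul {σ : Type*} {K : Type*} [Field K] (A B : Set (σ →₀ ℕ)) :
    Ideal.span ((fun s => monomial s (1:K)) '' A) * Ideal.span ((fun s => monomial s (1:K)) '' B)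
      = Ideal.span ((fun s => monomial s (1:K)) '' (A + B)) := by
  rw [Ideal.span_mul_span']
  congr 1
  ext p
  constructor
  · rintro ⟨_, ⟨sa, ha, rfl⟩, _, ⟨sb, hb, rfl⟩, rfl⟩
    exact ⟨sa + sb, Set.add_mem_add ha hb, by simp [monomial_mul]⟩
  · rintro ⟨s, ⟨sa, ha, sb, hb, rfl⟩, rfl⟩
    exact ⟨_, ⟨sa, ha, rfl⟩, _, ⟨sb, hb, rfl⟩, by simp [monomial_mul]⟩

variable {n : ℕ}

/-- total degree of an exponent vector -/
def deg (α : Fin (n+1) →₀ ℕ) : ℕ := ∑ j, α j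

lemma deg_eq_degree (α : Fin (n+1) →₀ ℕ) : deg α = Finsupp.degree α := by
  rw [Finsupp.degree, deg]
  exact (Finset.sum_subset (Finset.subset_univ _) (by
    intro x _ hx
    simpa using hx)).symm

lemma deg_add (α β : Fin (n+1) →₀ ℕ) : deg (α + β) = deg α + deg β := by
  simp [deg, Finset.sum_add_distrib]

lemma deg_single (j : Fin (n+1)) (k : ℕ) : deg (Finsupp.single j k) = k := by
  simp [deg, Finsupp.single_apply, Finset.sum_ite_eq' Finset.univ j]

lemma deg_split (α : Fin (n+1) →₀ ℕ) :
    deg α = (∑ i : Fin n, α i.castSucc) + α (Fin.last n) := by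
  rw [deg, Fin.sum_univ_castSucc]

lemma deg_eq_zero {α : Fin (n+1) →₀ ℕ} (h : deg α = 0) : α = 0 := by
  rw [deg, Finset.sum_eq_zero_iff] at h
  ext j
  simpa using h j (Finset.mem_univ j)

lemma deg_split_one {β : Fin (n+1) →₀ ℕ} {d : ℕ} (h : deg β = d + 1) :
    ∃ (k : Fin (n+1)) (β' : Fin (n+1) →₀ ℕ), deg β' = d ∧ β = Finsupp.single k 1 + β' := by
  have hk : ∃ k, β k ≠ 0 := by
    by_contra hc
    push_neg at hc
    have : deg β = 0 := by
      rw [deg]; exact Finset.sum_eq_zero fun j _ => hc j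
    omega
  obtain ⟨k, hk⟩ := hk
  refine ⟨k, pack (fun j => if j = k then β j - 1 else β j), ?_, ?_⟩
  · have hβ : β = Finsupp.single k 1 + pack (fun j => if j = k then β j - 1 else β j) := by
      ext j
      by_cases hj : j = k
      · subst hj
        simp only [Finsupp.add_apply, Finsupp.single_eq_same, pack_apply, eq_self_iff_true, if_true]
        omega
      · simp [Finsupp.add_apply, Finsupp.single_apply, Ne.symm hj, hj]
    rw [hβ, deg_add, deg_single] at h
    omega
  · ext j
    by_cases hj : j = k
    · subst hj
      simp only [Finsupp.add_apply, Finsupp.single_eq_same, pack_apply, eq_self_iff_true, if_true]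
      omega
    · simp [Finsupp.add_apply, Finsupp.single_apply, Ne.symm hj, hj]


section Gam

variable (a b : Fin n → ℕ)

/-- the exponent vector of `u^α` -/
noncomputable def gam (α : Fin (n+1) →₀ ℕ) : Fin n →₀ ℕ :=
  pack fun i => a i * α i.castSucc + b i * α (Fin.last n)

@[simp] lemma gam_apply (α : Fin (n+1) →₀ ℕ) (i : Fin n) :
    gam a b α i = a i * α i.castSucc + b i * α (Fin.last n) := rfl

lemma gam_add (α β : Fin (n+1) →₀ ℕ) : gam a b (α + β) = gam a b α + gam a b β := by
  ext i
  simp [Finsupp.add_apply]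
  ring

lemma gam_zero : gam a b 0 = 0 := by
  ext i
  simp

lemma gam_single_castSucc (i : Fin n) :
    gam a b (Finsupp.single i.castSucc 1) = Finsupp.single i (a i) := by
  ext t
  rw [gam_apply]
  rw [Finsupp.single_apply, Finsupp.single_apply, Finsupp.single_apply]
  have hne : ¬ (i.castSucc = Fin.last n) := (Fin.castSucc_lt_last i).ne
  rw [if_neg hne]
  by_cases h : i = t
  · subst h
    simp
  · rw [if_neg h, if_neg (fun hc => h (Fin.castSucc_injective n hc))]
    simp

lemma gam_single_last (N : ℕ) :
    gam a b (Finsupp.single (Fin.last n) N) = pack fun i => b i * N := by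
  ext t
  rw [gam_apply]
  have hne : ¬ ((Fin.last n) = t.castSucc) := (Fin.castSucc_lt_last t).ne'
  rw [Finsupp.single_apply, Finsupp.single_apply, if_neg hne, if_pos rfl]
  simp

/-- core rational computation -/
lemma key_sum (ha : ∀ i, 0 < a i) (α : Fin (n+1) →₀ ℕ) :
    ∑ i, (gam a b α i : ℚ) / a i
      = (∑ i : Fin n, (α i.castSucc : ℚ)) + (α (Fin.last n) : ℚ) * ∑ i, (b i : ℚ) / a i := by
  have h : ∀ i : Fin n, (gam a b α i : ℚ) / a i
      = (α i.castSucc : ℚ) + (b i : ℚ) / a i * (α (Fin.last n) : ℚ) := by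
    intro i
    have hai : (a i : ℚ) ≠ 0 := Nat.cast_ne_zero.mpr (ha i).ne'
    rw [gam_apply]
    push_cast
    field_simp
  rw [Finset.sum_congr rfl fun i _ => h i, Finset.sum_add_distrib, ← Finset.sum_mul]
  ring

lemma key_sum' (ha : ∀ i, 0 < a i) (hsum : ∑ i, (b i : ℚ) / a i = 1) (α : Fin (n+1) →₀ ℕ) :
    ∑ i, (gam a b α i : ℚ) / a i = (deg α : ℚ) := by
  rw [key_sum a b ha, hsum, deg_split]
  push_cast
  ring

lemma lemA (ha : ∀ i, 0 < a i) (hsum : ∑ i, (b i : ℚ) / a i = 1)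
    {α β : Fin (n+1) →₀ ℕ} (hdeg : deg β = deg α) (hle : gam a b β ≤ gam a b α) :
    gam a b β = gam a b α := by
  have hle' : ∀ i, gam a b β i ≤ gam a b α i := fun i => Finsupp.le_def.mp hle i
  have h0 : ∑ i, ((gam a b α i : ℚ) / a i - (gam a b β i : ℚ) / a i) = 0 := by
    rw [Finset.sum_sub_distrib, key_sum' a b ha hsum, key_sum' a b ha hsum, hdeg, sub_self]
  have hnn : ∀ i ∈ Finset.univ, (0:ℚ) ≤ (gam a b α i : ℚ) / a i - (gam a b β i : ℚ) / a i := by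
    intro i _
    have := hle' i
    have hai : (0:ℚ) < a i := by exact_mod_cast ha i
    rw [sub_nonneg]
    gcongr
  have := (Finset.sum_eq_zero_iff_of_nonneg hnn).mp h0
  ext i
  have h := this i (Finset.mem_univ i)
  have hai : (a i : ℚ) ≠ 0 := Nat.cast_ne_zero.mpr (ha i).ne'
  rw [sub_eq_zero] at h
  have h2 := congrArg (· * (a i : ℚ)) h
  simp only [div_mul_cancel₀ _ hai] at h2
  exact_mod_cast h2.symm

lemma lemB (ha : ∀ i, 0 < a i) (hsum : ∑ i, (b i : ℚ) / a i = 1)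
    {α β : Fin (n+1) →₀ ℕ} (h : gam a b α = gam a b β) : deg α = deg β := by
  have h1 := key_sum' a b ha hsum α
  have h2 := key_sum' a b ha hsum β
  rw [h, h2] at h1
  exact_mod_cast h1.symm

end Gam


lemma deg_one {β : Fin (n+1) →₀ ℕ} (h : deg β = 1) : ∃ j, β = Finsupp.single j 1 := by
  obtain ⟨k, β', h0, rfl⟩ := deg_split_one h
  rw [deg_eq_zero h0, add_zero]
  exact ⟨k, rfl⟩

section Ideals

variable {K : Type*} [Field K] (a b : Fin n → ℕ)

/-- exponent vectors of products of `d` generators -/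
def Dset (d : ℕ) : Set (Fin n →₀ ℕ) := {s | ∃ α, deg α = d ∧ s = gam a b α}

lemma Dset_add (d : ℕ) : Dset a b d + Dset a b 1 = Dset a b (d + 1) := by
  ext s
  constructor
  · rintro ⟨x, ⟨α, hα, rfl⟩, y, ⟨α', hα', rfl⟩, rfl⟩
    exact ⟨α + α', by rw [deg_add, hα, hα'], (gam_add a b α α').symm⟩
  · rintro ⟨β, hβ, rfl⟩
    obtain ⟨k, β', hβ', rfl⟩ := deg_split_one hβ
    refine ⟨gam a b β', ⟨β', hβ', rfl⟩, gam a b (Finsupp.single k 1),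
      ⟨Finsupp.single k 1, deg_single k 1, rfl⟩, ?_⟩
    show gam a b β' + gam a b (Finsupp.single k 1) = gam a b (Finsupp.single k 1 + β')
    rw [← gam_add, add_comm]

variable (I mm : Ideal (MvPolynomial (Fin n) K))
variable (hI : I = Ideal.span (Set.range (fun i => (X i : MvPolynomial (Fin n) K) ^ a i) ∪
      {∏ i, (X i : MvPolynomial (Fin n) K) ^ b i}))
variable (hmm : mm = Ideal.span (Set.range (X : Fin n → MvPolynomial (Fin n) K)))

include hI in
lemma I_eq : I = Ideal.span ((fun s => monomial s (1:K)) '' Dset a b 1) := by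
  rw [hI]
  congr 1
  ext p
  simp only [Set.mem_union, Set.mem_range, Set.mem_singleton_iff, Set.mem_image]
  constructor
  · rintro (⟨i, rfl⟩ | rfl)
    · exact ⟨Finsupp.single i (a i),
        ⟨Finsupp.single i.castSucc 1, deg_single _ _, (gam_single_castSucc a b i).symm⟩,
        X_pow_eq_monomial.symm⟩
    · refine ⟨gam a b (Finsupp.single (Fin.last n) 1),
        ⟨Finsupp.single (Fin.last n) 1, deg_single _ _, rfl⟩, ?_⟩
      rw [gam_single_last]
      have : (pack fun i => b i * 1) = pack b := by
        congr 1
        funext i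
        rw [mul_one]
      rw [this, ← prod_X_pow_pack]
  · rintro ⟨s, ⟨α, hα, rfl⟩, rfl⟩
    obtain ⟨j, rfl⟩ := deg_one hα
    induction j using Fin.lastCases with
    | last =>
      right
      rw [gam_single_last]
      have : (pack fun i => b i * 1) = pack b := by
        congr 1
        funext i
        rw [mul_one]
      rw [this, ← prod_X_pow_pack]
    | cast i =>
      left
      exact ⟨i, by rw [gam_single_castSucc, X_pow_eq_monomial]⟩

include hI in
lemma Ipow_eq (d : ℕ) : I ^ d = Ideal.span ((fun s => monomial s (1:K)) '' Dset a b d) := by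
  induction d with
  | zero =>
    rw [pow_zero, Ideal.one_eq_top]
    have hD : Dset a b 0 = {0} := by
      ext s
      constructor
      · rintro ⟨α, hα, rfl⟩
        rw [deg_eq_zero hα, gam_zero]
        rfl
      · rintro rfl
        exact ⟨0, by simp [deg], (gam_zero a b).symm⟩
    rw [hD, Set.image_singleton]
    rw [show (monomial (0 : Fin n →₀ ℕ)) (1:K) = 1 by simp]
    exact (Ideal.span_singleton_one).symm
  | succ d ih =>
    rw [pow_succ, ih, I_eq a b I hI, span_monomial_mul, Dset_add]

include hI hmm in
lemma mI_eq (d : ℕ) : mm * I ^ d =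
    Ideal.span ((fun s => monomial s (1:K)) ''
      ((Set.range fun i : Fin n => Finsupp.single i (1:ℕ)) + Dset a b d)) := by
  have hXfun : (X : Fin n → MvPolynomial (Fin n) K)
      = fun i => monomial (Finsupp.single i 1) 1 := by
    funext i
    rw [← X_pow_eq_monomial, pow_one]
  have hX : mm = Ideal.span ((fun s => monomial s (1:K)) ''
      (Set.range fun i : Fin n => Finsupp.single i (1:ℕ))) := by
    rw [hmm, hXfun, ← Set.range_comp]
    rfl
  rw [hX, Ipow_eq a b I hI, span_monomial_mul]

include hI hmm in
lemma mem_mI (d : ℕ) (p : MvPolynomial (Fin n) K) :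
    p ∈ mm * I ^ d ↔ ∀ s ∈ p.support, ∃ (j : Fin n) (α : Fin (n+1) →₀ ℕ),
      deg α = d ∧ Finsupp.single j 1 + gam a b α ≤ s := by
  rw [mI_eq a b I mm hI hmm, mem_ideal_span_monomial_image]
  constructor
  · intro h s hs
    obtain ⟨e, he, hle⟩ := h s hs
    obtain ⟨x, hx, y, hy, rfl⟩ := he
    obtain ⟨j, rfl⟩ := hx
    obtain ⟨α, hα, rfl⟩ := hy
    exact ⟨j, α, hα, hle⟩
  · intro h s hs
    obtain ⟨j, α, hα, hle⟩ := h s hs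
    exact ⟨_, ⟨Finsupp.single j 1, ⟨j, rfl⟩, gam a b α, ⟨α, hα, rfl⟩, rfl⟩, hle⟩

end Ideals

section Eval

variable {K : Type*} [Field K] (a b : Fin n → ℕ)
variable (u : Fin (n + 1) → MvPolynomial (Fin n) K)
variable (hu : ∀ i : Fin n, u i.castSucc = X i ^ a i)
variable (hulast : u (Fin.last n) = ∏ i, X i ^ b i)

include hu hulast in
lemma aeval_monomial_u (α : Fin (n+1) →₀ ℕ) (c : K) :
    aeval u (monomial α c) = monomial (gam a b α) c := by
  rw [aeval_monomial]
  have hprod : (α.prod fun j k => u j ^ k) = ∏ j, u j ^ α j :=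
    Finsupp.prod_fintype _ _ (fun j => pow_zero (u j))
  rw [hprod, Fin.prod_univ_castSucc, hulast, ← Finset.prod_pow]
  simp_rw [hu, ← pow_mul]
  rw [← Finset.prod_mul_distrib]
  simp_rw [← pow_add]
  rw [prod_X_pow_pack, MvPolynomial.algebraMap_eq, C_mul_monomial, mul_one]
  rfl

include hu hulast in
lemma support_aeval (g : MvPolynomial (Fin (n+1)) K) {s : Fin n →₀ ℕ}
    (hs : s ∈ (aeval u g).support) : ∃ α ∈ g.support, gam a b α = s := by
  by_contra hcon
  push_neg at hcon
  apply MvPolynomial.mem_support_iff.mp hs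
  have hg : aeval u g = ∑ α ∈ g.support, monomial (gam a b α) (coeff α g) := by
    conv_lhs => rw [g.as_sum]
    rw [map_sum]
    exact Finset.sum_congr rfl fun α _ => aeval_monomial_u a b u hu hulast α _
  rw [hg, coeff_sum]
  apply Finset.sum_eq_zero
  intro α hα
  rw [coeff_monomial, if_neg (hcon α hα)]

end Eval


section Homog

variable {K : Type*} [Field K]

lemma deg_of_mem_homog {f : MvPolynomial (Fin (n+1)) K} {d : ℕ} {α : Fin (n+1) →₀ ℕ}
    (hα : α ∈ (homogeneousComponent d f).support) : deg α = d := by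
  have h := homogeneousComponent_isHomogeneous d f (MvPolynomial.mem_support_iff.mp hα)
  rw [deg_eq_degree, Finsupp.degree_eq_weight_one]
  exact h

lemma homog_comp_monomial (α : Fin (n+1) →₀ ℕ) (c : K) (d : ℕ) :
    homogeneousComponent d (monomial α c) = if d = deg α then monomial α c else 0 := by
  apply homogeneousComponent_of_mem
  rw [mem_homogeneousSubmodule]
  exact isHomogeneous_monomial c (deg_eq_degree α).symm

end Homog

lemma choose_le (c : Fin n → ℕ) (m : ℕ) (h : m ≤ ∑ i, c i) :
    ∃ v : Fin n → ℕ, (∀ i, v i ≤ c i) ∧ ∑ i, v i = m := by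
  induction m with
  | zero => exact ⟨0, fun i => Nat.zero_le _, by simp⟩
  | succ m ih =>
    obtain ⟨v, hv, hvs⟩ := ih (le_trans (Nat.le_succ m) h)
    have hex : ∃ i, v i < c i := by
      by_contra hc
      push_neg at hc
      have : ∑ i, c i ≤ ∑ i, v i := Finset.sum_le_sum fun i _ => hc i
      omega
    obtain ⟨i, hi⟩ := hex
    refine ⟨fun j => if j = i then v j + 1 else v j, ?_, ?_⟩
    · intro j
      simp only []
      by_cases hj : j = i
      · subst hj; rw [if_pos rfl]; omega
      · rw [if_neg hj]; exact hv j
    · have : ∀ j, (if j = i then v j + 1 else v j) = v j + (if j = i then 1 else 0) := by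
        intro j; split_ifs <;> omega
      rw [Finset.sum_congr rfl fun j _ => this j, Finset.sum_add_distrib,
        Finset.sum_ite_eq' Finset.univ i fun _ => 1]
      simp
      omega

end Stmt5Aux


open MvPolynomial

open Stmt5Aux in
theorem stmt_5 {K : Type*} [Field K] (n : ℕ) (hn : 2 ≤ n)
    (a b : Fin n → ℕ) (hba : ∀ i, b i < a i) (hb : ∀ i, 0 < b i)
    (I mm : Ideal (MvPolynomial (Fin n) K))
    (hI : I = Ideal.span (Set.range (fun i => (X i : MvPolynomial (Fin n) K) ^ a i) ∪
      {∏ i, (X i : MvPolynomial (Fin n) K) ^ b i}))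
    (hmm : mm = Ideal.span (Set.range (X : Fin n → MvPolynomial (Fin n) K)))
    (u : Fin (n + 1) → MvPolynomial (Fin n) K)
    (hu : ∀ i : Fin n, u i.castSucc = X i ^ a i)
    (hulast : u (Fin.last n) = ∏ i, X i ^ b i)
    (J : Ideal (MvPolynomial (Fin (n + 1)) K))
    (hJ : ∀ f : MvPolynomial (Fin (n + 1)) K,
      f ∈ J ↔ ∀ d : ℕ, aeval u (homogeneousComponent d f) ∈ mm * I ^ d)
    :
    J.IsPrime ↔ (∑ i, (b i : ℚ) / (a i : ℚ)) = 1 := by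
  classical
  have ha : ∀ i, 0 < a i := fun i => lt_trans (hb i) (hba i)
  constructor
  · intro hp
    by_contra hne
    have hNpos : 0 < ∏ i, a i := Finset.prod_pos fun i _ => ha i
    set N := ∏ i, a i with hNdef
    have hdvd : ∀ i, a i ∣ N * b i := fun i =>
      Dvd.dvd.mul_right (Finset.dvd_prod_of_mem a (Finset.mem_univ i)) (b i)
    set c := fun i => N * b i / a i with hcdef
    have hca : ∀ i, a i * c i = N * b i := fun i => Nat.mul_div_cancel' (hdvd i)
    have hcQ : ∀ i, (c i : ℚ) = (N : ℚ) * b i / a i := by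
      intro i
      have hai : (a i : ℚ) ≠ 0 := Nat.cast_ne_zero.mpr (ha i).ne'
      rw [eq_div_iff hai]
      have h2 : ((a i * c i : ℕ) : ℚ) = ((N * b i : ℕ) : ℚ) := by rw [hca i]
      push_cast at h2
      linarith
    have hsumcQ : ((∑ i, c i : ℕ) : ℚ) = N * ∑ i, (b i : ℚ) / a i := by
      push_cast
      rw [Finset.mul_sum]
      exact Finset.sum_congr rfl fun i _ => by rw [hcQ i, mul_div_assoc]
    have hXmono : ∀ j : Fin (n+1),
        (X j : MvPolynomial (Fin (n+1)) K) = monomial (Finsupp.single j 1) 1 := fun j => by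
      rw [← X_pow_eq_monomial, pow_one]
    have hXJ_imp : ∀ j : Fin (n+1), (X j : MvPolynomial (Fin (n+1)) K) ∈ J →
        monomial (gam a b (Finsupp.single j 1)) (1:K) ∈ mm * I ^ 1 := by
      intro j hXj
      have h1 := (hJ _).mp hXj 1
      rw [hXmono j, homog_comp_monomial, if_pos (deg_single j 1).symm,
        aeval_monomial_u a b u hu hulast] at h1
      simpa using h1
    rcases lt_or_gt_of_ne hne with hlt | hgt
    · -- sum < 1
      set D0 := ∑ i, c i with hD0def
      have hD0 : D0 < N := by
        have hq : (D0 : ℚ) < N := by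
          calc (D0 : ℚ) = N * ∑ i, (b i : ℚ) / a i := hsumcQ
            _ < N * 1 := by
                apply mul_lt_mul_of_pos_left hlt
                exact_mod_cast hNpos
            _ = N := mul_one _
        exact_mod_cast hq
      set α0 : Fin (n+1) →₀ ℕ := pack (Fin.snoc c 0) with hα0
      have hα0c : ∀ i : Fin n, α0 i.castSucc = c i := fun i => by
        rw [hα0, pack_apply, Fin.snoc_castSucc]
      have hα0L : α0 (Fin.last n) = 0 := by rw [hα0, pack_apply, Fin.snoc_last]
      have hdeg0 : deg α0 = D0 := by
        rw [deg_split, hα0L, add_zero]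
        exact Finset.sum_congr rfl fun i _ => hα0c i
      have hgam0 : gam a b α0 = gam a b (Finsupp.single (Fin.last n) N) := by
        ext i
        rw [gam_apply, gam_apply, hα0c, hα0L, Finsupp.single_apply,
          Finsupp.single_apply, if_pos rfl, if_neg ((Fin.castSucc_lt_last i).ne' :
            ¬ (Fin.last n = i.castSucc))]
        rw [mul_zero, add_zero, mul_zero, zero_add, hca i]
        ring
      have hIm : I ≤ mm := by
        rw [hI, hmm, Ideal.span_le]
        rintro p hp'
        simp only [Set.mem_union, Set.mem_range, Set.mem_singleton_iff] at hp'
        rcases hp' with ⟨i, rfl⟩ | rfl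
        · exact SetLike.mem_coe.mpr
            (Ideal.pow_mem_of_mem _ (Ideal.subset_span (Set.mem_range_self i)) _ (ha i))
        · have hi0 : (⟨0, by omega⟩ : Fin n) ∈ Finset.univ := Finset.mem_univ _
          rw [← Finset.mul_prod_erase _ _ hi0]
          exact SetLike.mem_coe.mpr (Ideal.mul_mem_right _ _
            (Ideal.pow_mem_of_mem _ (Ideal.subset_span (Set.mem_range_self _)) _ (hb _)))
      have hfJ : monomial α0 (1:K) ∈ J := by
        rw [hJ]
        intro d
        rw [homog_comp_monomial]
        by_cases hd : d = deg α0
        · rw [if_pos hd, aeval_monomial_u a b u hu hulast, hd, hdeg0]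
          have h1 : monomial (gam a b α0) (1:K) ∈ I ^ N := by
            rw [Ipow_eq a b I hI]
            exact Ideal.subset_span
              ⟨gam a b α0, ⟨Finsupp.single (Fin.last n) N, deg_single _ _, hgam0⟩, rfl⟩
          have h3 : I ^ N ≤ mm * I ^ D0 := by
            have he : I ^ N = I ^ (N - D0) * I ^ D0 := by
              rw [← pow_add]
              congr 1
              omega
            rw [he]
            exact Ideal.mul_mono_left (le_trans (Ideal.pow_le_self (by omega)) hIm)
          exact h3 h1
        · rw [if_neg hd, map_zero]
          exact zero_mem _
      have hfactor : monomial α0 (1:K)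
          = ∏ i : Fin n, (X i.castSucc : MvPolynomial (Fin (n+1)) K) ^ c i := by
        rw [prod_X_pow_sum]
        have heq : (∑ i : Fin n, Finsupp.single (Fin.castSucc i) (c i)) = α0 := by
          ext j
          rw [Finsupp.finset_sum_apply]
          induction j using Fin.lastCases with
          | last =>
            rw [hα0L]
            apply Finset.sum_eq_zero
            intro i _
            rw [Finsupp.single_apply, if_neg]
            exact (Fin.castSucc_lt_last i).ne
          | cast t =>
            rw [hα0c]
            have hterm : ∀ i : Fin n,
                (Finsupp.single i.castSucc (c i)) t.castSucc = if i = t then c i else 0 := by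
              intro i
              rw [Finsupp.single_apply]
              simp [Fin.castSucc_inj]
            rw [Finset.sum_congr rfl fun i _ => hterm i, Finset.sum_ite_eq' Finset.univ t c]
            simp
        rw [heq]
      rw [hfactor] at hfJ
      obtain ⟨i, -, hXi⟩ := (Ideal.IsPrime.prod_mem_iff (hp := hp)).mp hfJ
      have hXJ : (X i.castSucc : MvPolynomial (Fin (n+1)) K) ∈ J :=
        hp.mem_of_pow_mem _ hXi
      have h1 := hXJ_imp _ hXJ
      rw [gam_single_castSucc, mem_mI a b I mm hI hmm] at h1
      have hsupp : Finsupp.single i (a i)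
          ∈ (monomial (Finsupp.single i (a i)) (1:K)).support := by
        rw [MvPolynomial.support_monomial, if_neg one_ne_zero]
        exact Finset.mem_singleton_self _
      obtain ⟨j, β, hdβ, hle⟩ := h1 _ hsupp
      have hle' := fun t => Finsupp.le_def.mp hle t
      obtain ⟨k, hk⟩ := Fintype.exists_ne_of_one_lt_card
        (by rw [Fintype.card_fin]; omega) i
      have hzero : a k * β k.castSucc + b k * β (Fin.last n) = 0 := by
        have h2 := hle' k
        rw [Finsupp.add_apply, gam_apply] at h2
        rw [show (Finsupp.single i (a i)) k = 0 by
          rw [Finsupp.single_apply, if_neg (fun h => hk h.symm)]] at h2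
        have h3 := le_trans (Nat.le_add_left _ _) h2
        omega
      have hBL : β (Fin.last n) = 0 := by
        rcases Nat.mul_eq_zero.mp (by omega : b k * β (Fin.last n) = 0) with h | h
        · exact absurd h (hb k).ne'
        · exact h
      have hβc : ∀ t : Fin n, t ≠ i → β t.castSucc = 0 := by
        intro t ht
        have h2 := hle' t
        rw [Finsupp.add_apply, gam_apply] at h2
        rw [show (Finsupp.single i (a i)) t = 0 by
          rw [Finsupp.single_apply, if_neg (fun h => ht h.symm)]] at h2
        have h3 := le_trans (Nat.le_add_left _ _) h2
        rcases Nat.mul_eq_zero.mp (by omega : a t * β t.castSucc = 0) with h | h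
        · exact absurd h (ha t).ne'
        · exact h
      have hβi : β i.castSucc = 1 := by
        have hs := hdβ
        rw [deg_split, hBL, add_zero,
          Finset.sum_eq_single i (fun t _ ht => hβc t ht)
            (fun hmem => absurd (Finset.mem_univ i) hmem)] at hs
        exact hs
      have h2 := hle' j
      rw [Finsupp.add_apply, gam_apply, Finsupp.single_eq_same] at h2
      by_cases hij : i = j
      · subst hij
        rw [Finsupp.single_eq_same, hβi, hBL] at h2
        omega
      · rw [Finsupp.single_apply, if_neg hij] at h2
        omega
    · -- sum > 1
      have hDg : N < ∑ i, c i := by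
        have hq : (N : ℚ) < ((∑ i, c i : ℕ) : ℚ) := by
          rw [hsumcQ]
          calc (N : ℚ) = N * 1 := (mul_one _).symm
            _ < N * ∑ i, (b i : ℚ) / a i := by
                apply mul_lt_mul_of_pos_left hgt
                exact_mod_cast hNpos
        exact_mod_cast hq
      obtain ⟨v, hv, hvsum⟩ := choose_le c N (le_of_lt hDg)
      have hj0 : ∃ j0, v j0 < c j0 := by
        by_contra hcon
        push_neg at hcon
        have : ∑ i, c i ≤ ∑ i, v i := Finset.sum_le_sum fun i _ => hcon i
        omega
      obtain ⟨j0, hj0⟩ := hj0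
      set β0 : Fin (n+1) →₀ ℕ := pack (Fin.snoc v 0) with hβ0
      have hβ0c : ∀ i : Fin n, β0 i.castSucc = v i := fun i => by
        rw [hβ0, pack_apply, Fin.snoc_castSucc]
      have hβ0L : β0 (Fin.last n) = 0 := by rw [hβ0, pack_apply, Fin.snoc_last]
      have hdegβ0 : deg β0 = N := by
        rw [deg_split, hβ0L, add_zero, Finset.sum_congr rfl fun i _ => hβ0c i]
        exact hvsum
      have hfJ : (X (Fin.last n) : MvPolynomial (Fin (n+1)) K) ^ N ∈ J := by
        rw [X_pow_eq_monomial, hJ]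
        intro d
        rw [homog_comp_monomial]
        by_cases hd : d = deg (Finsupp.single (Fin.last n) N)
        · rw [if_pos hd, aeval_monomial_u a b u hu hulast, hd, deg_single,
            gam_single_last, mem_mI a b I mm hI hmm]
          intro s hs
          rw [MvPolynomial.support_monomial, if_neg one_ne_zero,
            Finset.mem_singleton] at hs
          subst hs
          refine ⟨j0, β0, hdegβ0, ?_⟩
          rw [Finsupp.le_def]
          intro t
          rw [Finsupp.add_apply, gam_apply, hβ0L, hβ0c, mul_zero, add_zero, pack_apply]
          have h1 : a t * v t ≤ b t * N := by
            rw [mul_comm (b t) N, ← hca t]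
            exact Nat.mul_le_mul_left _ (hv t)
          by_cases ht : j0 = t
          · subst ht
            have h2 : a j0 * v j0 < b j0 * N := by
              rw [mul_comm (b j0) N, ← hca j0]
              exact mul_lt_mul_of_pos_left hj0 (ha j0)
            rw [Finsupp.single_eq_same]
            omega
          · rw [Finsupp.single_apply, if_neg ht]
            omega
        · rw [if_neg hd, map_zero]
          exact zero_mem _
      have hXJ : (X (Fin.last n) : MvPolynomial (Fin (n+1)) K) ∈ J :=
        hp.mem_of_pow_mem _ hfJ
      have h1 := hXJ_imp _ hXJ
      rw [gam_single_last, mem_mI a b I mm hI hmm] at h1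
      have hsupp : pack (fun i => b i * 1)
          ∈ (monomial (pack fun i => b i * 1) (1:K)).support := by
        rw [MvPolynomial.support_monomial, if_neg one_ne_zero]
        exact Finset.mem_singleton_self _
      obtain ⟨j, β, hdβ, hle⟩ := h1 _ hsupp
      have hle' := fun t => Finsupp.le_def.mp hle t
      have hBL : β (Fin.last n) = 0 := by
        by_contra hc
        have h2 := hle' j
        rw [Finsupp.add_apply, gam_apply, pack_apply, Finsupp.single_eq_same, mul_one] at h2
        have h3 : b j ≤ b j * β (Fin.last n) :=
          Nat.le_mul_of_pos_right _ (Nat.pos_of_ne_zero hc)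
        omega
      have hβc : ∀ t : Fin n, β t.castSucc = 0 := by
        intro t
        have h2 := hle' t
        rw [Finsupp.add_apply, gam_apply, pack_apply, hBL, mul_zero, add_zero, mul_one] at h2
        have h3 := le_trans (Nat.le_add_left _ _) h2
        by_contra hc
        have h4 : a t ≤ a t * β t.castSucc :=
          Nat.le_mul_of_pos_right _ (Nat.pos_of_ne_zero hc)
        have h5 := hba t
        omega
      have hdeg0 : deg β = 0 := by
        rw [deg_split, hBL, add_zero]
        exact Finset.sum_eq_zero fun t _ => hβc t
      omega
  · intro hsum
    have hker : ∀ f : MvPolynomial (Fin (n+1)) K, f ∈ J ↔ aeval u f = 0 := by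
      intro f
      rw [hJ]
      constructor
      · intro hf
        have hcomp : ∀ d, aeval u (homogeneousComponent d f) = 0 := by
          intro d
          by_contra hne0
          obtain ⟨s, hs⟩ := MvPolynomial.support_nonempty.mpr hne0
          obtain ⟨α, hα, rfl⟩ := support_aeval a b u hu hulast _ hs
          have hdα : deg α = d := deg_of_mem_homog hα
          obtain ⟨j, β, hdβ, hle⟩ := (mem_mI a b I mm hI hmm d _).mp (hf d) _ hs
          have hle' := fun t => Finsupp.le_def.mp hle t
          have h1 : gam a b β ≤ gam a b α := by
            rw [Finsupp.le_def]
            intro t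
            have := hle' t
            simp only [Finsupp.add_apply] at this
            omega
          have h2 := lemA a b ha hsum (hdβ.trans hdα.symm) h1
          have h3 := hle' j
          rw [h2] at h3
          simp only [Finsupp.add_apply, Finsupp.single_eq_same] at h3
          omega
        have hsumf := MvPolynomial.sum_homogeneousComponent f
        calc aeval u f
            = aeval u (∑ i ∈ Finset.range (f.totalDegree + 1), homogeneousComponent i f) := by
              rw [hsumf]
          _ = 0 := by rw [map_sum]; exact Finset.sum_eq_zero fun d _ => hcomp d
      · intro h0 d
        suffices hz : aeval u (homogeneousComponent d f) = 0 by
          rw [hz]; exact zero_mem _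
        rcases lt_or_ge (totalDegree f) d with hd | hd
        · rw [homogeneousComponent_eq_zero _ f hd, map_zero]
        · by_contra hne0
          obtain ⟨s, hs⟩ := MvPolynomial.support_nonempty.mpr hne0
          obtain ⟨α, hα, rfl⟩ := support_aeval a b u hu hulast _ hs
          have hdα : deg α = d := deg_of_mem_homog hα
          have hco : coeff (gam a b α)
              (∑ e ∈ Finset.range (f.totalDegree + 1), aeval u (homogeneousComponent e f))
                = 0 := by
            rw [← map_sum, MvPolynomial.sum_homogeneousComponent, h0, coeff_zero]
          rw [MvPolynomial.coeff_sum, Finset.sum_eq_single d] at hco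
          · exact MvPolynomial.mem_support_iff.mp hs hco
          · intro e _ hne
            by_contra hne2
            obtain ⟨β, hβ, hgam⟩ :=
              support_aeval a b u hu hulast _ (MvPolynomial.mem_support_iff.mpr hne2)
            have hdβ : deg β = e := deg_of_mem_homog hβ
            exact hne (by rw [← hdβ, ← hdα]; exact lemB a b ha hsum hgam)
          · intro hd2
            exact absurd (Finset.mem_range.mpr (by omega)) hd2
    have hJk : J = RingHom.ker (MvPolynomial.aeval u :
        MvPolynomial (Fin (n+1)) K →ₐ[K] MvPolynomial (Fin n) K) :=
      Ideal.ext fun f => (hker f).trans (RingHom.mem_ker).symm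
    rw [hJk]
    exact RingHom.ker_isPrime _
end

section
/- If ∑_{i=1}^n b_i/a_i > 1 (as rational numbers), then J has exactly one minimal prime over it, namely the set of minimal primes over J is {(z_{n+1})}, the singleton consisting of the ideal generated by z_{n+1}. If ∑_{i=1}^n b_i/a_i < 1, then the set of minimal primes over J has exactly n elements, namely it equals {(z_i) : i = 1,…,n}. -/
open MvPolynomial Finset Pointwise

/-- trimming lemma -/
lemma trim_aux : ∀ (S : ℕ) {n : ℕ} (c : Fin n → ℕ), (∑ i, c i = S) → ∀ M, M ≤ S →
    ∃ β : Fin n → ℕ, (∀ i, β i ≤ c i) ∧ ∑ i, β i = M := by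
  intro S
  induction S with
  | zero =>
    intro n c hc M hM
    refine ⟨fun _ => 0, fun i => Nat.zero_le _, ?_⟩
    simpa using (Nat.le_zero.mp hM).symm
  | succ S ih =>
    intro n c hc M hM
    rcases eq_or_lt_of_le hM with rfl | hM'
    · exact ⟨c, fun i => le_rfl, hc⟩
    · have hMS : M ≤ S := Nat.lt_succ_iff.mp hM'
      have hex : ∃ i, 0 < c i := by
        by_contra h
        push_neg at h
        simp only [Nat.le_zero] at h
        rw [Finset.sum_eq_zero (fun i _ => h i)] at hc
        omega
      obtain ⟨i, hi⟩ := hex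
      have hsplit : ∑ j, c j = c i + ∑ j ∈ Finset.univ.erase i, c j :=
        (Finset.add_sum_erase _ _ (Finset.mem_univ i)).symm
      set c' := Function.update c i (c i - 1) with hc'def
      have hsplit' : ∑ j, c' j = (c i - 1) + ∑ j ∈ Finset.univ.erase i, c j := by
        rw [← Finset.add_sum_erase _ c' (Finset.mem_univ i)]
        congr 1
        · simp [c']
        · apply Finset.sum_congr rfl
          intro j hj
          have : j ≠ i := (Finset.mem_erase.mp hj).1
          simp [c', this]
      have hsum : ∑ j, c' j = S := by omega
      obtain ⟨β, hβ1, hβ2⟩ := ih c' hsum M hMS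
      refine ⟨β, fun j => (hβ1 j).trans ?_, hβ2⟩
      by_cases hj : j = i
      · subst hj; simp [c']
      · simp [c', hj]

lemma prod_pow_mem {R : Type*} [CommRing R] (I : Ideal R) {ι : Type*} [DecidableEq ι]
    (s : Finset ι) (g : ι → R) (β : ι → ℕ) (hg : ∀ i ∈ s, g i ∈ I) :
    (∏ i ∈ s, g i ^ β i) ∈ I ^ (∑ i ∈ s, β i) := by
  induction s using Finset.induction_on with
  | empty => simp [Ideal.one_eq_top]
  | @insert a s ha ih =>
    rw [Finset.prod_insert ha, Finset.sum_insert ha, pow_add]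
    exact Ideal.mul_mem_mul (Ideal.pow_mem_pow (hg a (Finset.mem_insert_self a s)) _)
      (ih fun i hi => hg i (Finset.mem_insert_of_mem hi))

lemma prod_univ_X_pow {K : Type*} [CommSemiring K] {σ : Type*} [Fintype σ] [DecidableEq σ]
    (m : σ →₀ ℕ) : (∏ i, (X i : MvPolynomial σ K) ^ m i) = monomial m 1 := by
  rw [← prod_X_pow_eq_monomial]
  exact (Finset.prod_subset (Finset.subset_univ _) (by
    intro x _ hx
    simp [Finsupp.notMem_support_iff.mp hx])).symm

lemma degree_eq_univ_sum {σ : Type*} [Fintype σ] (m : σ →₀ ℕ) :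
    Finsupp.degree m = ∑ i, m i := by
  rw [Finsupp.degree]
  exact Finset.sum_subset (Finset.subset_univ _) (by
    intro x _ hx
    exact Finsupp.notMem_support_iff.mp hx)

section arith
variable {n : ℕ} {a b : Fin n → ℕ}

lemma arith_inj_aux (ha : ∀ i, 0 < a i)
    (hs : (∑ i, (b i : ℚ) / (a i : ℚ)) ≠ 1) (α β : Fin (n+1) → ℕ)
    (hc : ∀ i : Fin n, a i * α i.castSucc + b i * α (Fin.last n)
      = a i * β i.castSucc + b i * β (Fin.last n))
    (hd : ∑ j, α j = ∑ j, β j)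
    (hle : α (Fin.last n) ≤ β (Fin.last n)) : α = β := by
  have hA : ∀ i : Fin n, ((a i : ℚ)) ≠ 0 := fun i => Nat.cast_ne_zero.mpr (ha i).ne'
  have hcQ : ∀ i : Fin n, (a i : ℚ) * α i.castSucc + b i * α (Fin.last n)
      = a i * β i.castSucc + b i * β (Fin.last n) := by
    intro i; exact_mod_cast hc i
  have key : ∀ i : Fin n, (α i.castSucc : ℚ) - β i.castSucc
      = (b i / a i) * ((β (Fin.last n) : ℚ) - α (Fin.last n)) := by
    intro i
    rw [div_mul_eq_mul_div, eq_div_iff (hA i)]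
    have h := hcQ i
    ring_nf
    ring_nf at h
    linarith [h]
  have hsum : (∑ i : Fin n, ((α i.castSucc : ℚ) - β i.castSucc))
      = (∑ i, (b i : ℚ) / (a i : ℚ)) * ((β (Fin.last n) : ℚ) - α (Fin.last n)) := by
    rw [Finset.sum_congr rfl (fun i _ => key i), ← Finset.sum_mul]
  have hdc : (∑ i : Fin n, (α i.castSucc : ℚ)) + (α (Fin.last n) : ℚ)
      = (∑ i : Fin n, (β i.castSucc : ℚ)) + (β (Fin.last n) : ℚ) := by
    have h := hd
    rw [Fin.sum_univ_castSucc, Fin.sum_univ_castSucc (f := β)] at h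
    exact_mod_cast h
  have hteq : (β (Fin.last n) : ℚ) - α (Fin.last n)
      = (∑ i, (b i : ℚ) / (a i : ℚ)) * ((β (Fin.last n) : ℚ) - α (Fin.last n)) := by
    rw [← hsum, Finset.sum_sub_distrib]
    linarith [hdc]
  have ht0 : (β (Fin.last n) : ℚ) - α (Fin.last n) = 0 := by
    by_contra ht0
    apply hs
    have hz : (1 - (∑ i, (b i : ℚ) / (a i : ℚ)))
        * ((β (Fin.last n) : ℚ) - α (Fin.last n)) = 0 := by linear_combination hteq
    rcases mul_eq_zero.mp hz with h | h
    · linarith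
    · exact absurd h ht0
  have hlast : α (Fin.last n) = β (Fin.last n) := by
    have : (α (Fin.last n) : ℚ) = β (Fin.last n) := by linarith
    exact_mod_cast this
  funext j
  refine Fin.lastCases hlast (fun i => ?_) j
  have h := key i
  rw [ht0, mul_zero, sub_eq_zero] at h
  exact_mod_cast h

lemma arith_inj (ha : ∀ i, 0 < a i)
    (hs : (∑ i, (b i : ℚ) / (a i : ℚ)) ≠ 1) (α β : Fin (n+1) → ℕ)
    (hc : ∀ i : Fin n, a i * α i.castSucc + b i * α (Fin.last n)
      = a i * β i.castSucc + b i * β (Fin.last n))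
    (hd : ∑ j, α j = ∑ j, β j) : α = β := by
  rcases le_total (α (Fin.last n)) (β (Fin.last n)) with h | h
  · exact arith_inj_aux ha hs α β hc hd h
  · exact (arith_inj_aux ha hs β α (fun i => (hc i).symm) hd.symm h).symm

lemma arith_nodiv_gt (ha : ∀ i, 0 < a i)
    (hs : 1 < (∑ i, (b i : ℚ) / (a i : ℚ))) (α β : Fin (n+1) → ℕ)
    (hαl : α (Fin.last n) = 0)
    (hd : ∑ j, α j = ∑ j, β j) (j : Fin n)
    (hle : ∀ i, a i * β i.castSucc + b i * β (Fin.last n)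
      ≤ a i * α i.castSucc + b i * α (Fin.last n))
    (hlt : a j * β j.castSucc + b j * β (Fin.last n)
      < a j * α j.castSucc + b j * α (Fin.last n)) : False := by
  have hA : ∀ i : Fin n, (0:ℚ) < (a i : ℚ) := fun i => by exact_mod_cast ha i
  have hα0' : ((α (Fin.last n) : ℚ)) = 0 := by exact_mod_cast hαl
  have hterm : ∀ i : Fin n, (β i.castSucc : ℚ)
      + (b i / a i) * (β (Fin.last n) : ℚ) ≤ α i.castSucc := by
    intro i
    have hQ : (a i : ℚ) * β i.castSucc + b i * β (Fin.last n)
        ≤ a i * α i.castSucc + b i * α (Fin.last n) := by exact_mod_cast hle i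
    have h2 : (b i : ℚ) * β (Fin.last n) / a i ≤ (α i.castSucc : ℚ) - β i.castSucc := by
      rw [div_le_iff₀ (hA i)]
      nlinarith [hQ, hα0']
    have h3 : (b i : ℚ) / a i * β (Fin.last n) = b i * β (Fin.last n) / a i := by ring
    rw [h3]; linarith
  have htermj : (β j.castSucc : ℚ)
      + (b j / a j) * (β (Fin.last n) : ℚ) < α j.castSucc := by
    have hQ : (a j : ℚ) * β j.castSucc + b j * β (Fin.last n)
        < a j * α j.castSucc + b j * α (Fin.last n) := by exact_mod_cast hlt
    have h2 : (b j : ℚ) * β (Fin.last n) / a j < (α j.castSucc : ℚ) - β j.castSucc := by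
      rw [div_lt_iff₀ (hA j)]
      nlinarith [hQ, hα0']
    have h3 : (b j : ℚ) / a j * β (Fin.last n) = b j * β (Fin.last n) / a j := by ring
    rw [h3]; linarith
  have hsumlt : (∑ i : Fin n, ((β i.castSucc : ℚ) + (b i / a i) * (β (Fin.last n) : ℚ)))
      < ∑ i : Fin n, (α i.castSucc : ℚ) :=
    Finset.sum_lt_sum (fun i _ => hterm i) ⟨j, Finset.mem_univ j, htermj⟩
  have hexp : (∑ i : Fin n, ((β i.castSucc : ℚ) + (b i / a i) * (β (Fin.last n) : ℚ)))
      = (∑ i : Fin n, (β i.castSucc : ℚ))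
        + (∑ i, (b i : ℚ) / (a i : ℚ)) * (β (Fin.last n) : ℚ) := by
    rw [Finset.sum_add_distrib, ← Finset.sum_mul]
  have hN : (∑ i : Fin n, α i.castSucc) = (∑ i : Fin n, β i.castSucc) + β (Fin.last n) := by
    have h := hd
    rw [Fin.sum_univ_castSucc, Fin.sum_univ_castSucc (f := β), hαl] at h
    omega
  have hdc : (∑ i : Fin n, (α i.castSucc : ℚ))
      = (∑ i : Fin n, (β i.castSucc : ℚ)) + (β (Fin.last n) : ℚ) := by exact_mod_cast hN
  have hLnn : (0:ℚ) ≤ (β (Fin.last n) : ℚ) := Nat.cast_nonneg _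
  nlinarith [hsumlt, hexp, hdc, hLnn, hs]

lemma arith_nodiv_lt (ha : ∀ i, 0 < a i) (hbp : ∀ i, 0 < b i)
    (hs : (∑ i, (b i : ℚ) / (a i : ℚ)) < 1) (i₀ : Fin n) (α β : Fin (n+1) → ℕ)
    (hα0 : α i₀.castSucc = 0)
    (hd : ∑ j, α j = ∑ j, β j) (j : Fin n)
    (hle : ∀ i, a i * β i.castSucc + b i * β (Fin.last n)
      ≤ a i * α i.castSucc + b i * α (Fin.last n))
    (hlt : a j * β j.castSucc + b j * β (Fin.last n)
      < a j * α j.castSucc + b j * α (Fin.last n)) : False := by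
  have hA : ∀ i : Fin n, (0:ℚ) < (a i : ℚ) := fun i => by exact_mod_cast ha i
  have hβlle : β (Fin.last n) ≤ α (Fin.last n) := by
    have h := hle i₀
    rw [hα0, Nat.mul_zero, Nat.zero_add] at h
    have hb0 := hbp i₀
    by_contra hcon
    push_neg at hcon
    have : b i₀ * α (Fin.last n) < b i₀ * β (Fin.last n) :=
      (Nat.mul_lt_mul_left hb0).mpr hcon
    omega
  have htnn : (0:ℚ) ≤ (α (Fin.last n) : ℚ) - (β (Fin.last n) : ℚ) := by
    have : (β (Fin.last n) : ℚ) ≤ (α (Fin.last n) : ℚ) := by exact_mod_cast hβlle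
    linarith
  have hterm : ∀ i : Fin n, (β i.castSucc : ℚ) ≤ (α i.castSucc : ℚ)
      + (b i / a i) * ((α (Fin.last n) : ℚ) - (β (Fin.last n) : ℚ)) := by
    intro i
    have hQ : (a i : ℚ) * β i.castSucc + b i * β (Fin.last n)
        ≤ a i * α i.castSucc + b i * α (Fin.last n) := by exact_mod_cast hle i
    have h2 : (β i.castSucc : ℚ) - α i.castSucc
        ≤ b i * ((α (Fin.last n) : ℚ) - (β (Fin.last n) : ℚ)) / a i := by
      rw [le_div_iff₀ (hA i)]
      nlinarith [hQ]
    have h3 : (b i : ℚ) / a i * ((α (Fin.last n) : ℚ) - (β (Fin.last n) : ℚ))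
        = b i * ((α (Fin.last n) : ℚ) - (β (Fin.last n) : ℚ)) / a i := by ring
    rw [h3]; linarith
  have htermj : (β j.castSucc : ℚ) < (α j.castSucc : ℚ)
      + (b j / a j) * ((α (Fin.last n) : ℚ) - (β (Fin.last n) : ℚ)) := by
    have hQ : (a j : ℚ) * β j.castSucc + b j * β (Fin.last n)
        < a j * α j.castSucc + b j * α (Fin.last n) := by exact_mod_cast hlt
    have h2 : (β j.castSucc : ℚ) - α j.castSucc
        < b j * ((α (Fin.last n) : ℚ) - (β (Fin.last n) : ℚ)) / a j := by
      rw [lt_div_iff₀ (hA j)]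
      nlinarith [hQ]
    have h3 : (b j : ℚ) / a j * ((α (Fin.last n) : ℚ) - (β (Fin.last n) : ℚ))
        = b j * ((α (Fin.last n) : ℚ) - (β (Fin.last n) : ℚ)) / a j := by ring
    rw [h3]; linarith
  have hsumlt : (∑ i : Fin n, (β i.castSucc : ℚ))
      < ∑ i : Fin n, ((α i.castSucc : ℚ)
        + (b i / a i) * ((α (Fin.last n) : ℚ) - (β (Fin.last n) : ℚ))) :=
    Finset.sum_lt_sum (fun i _ => hterm i) ⟨j, Finset.mem_univ j, htermj⟩
  have hexp : (∑ i : Fin n, ((α i.castSucc : ℚ)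
        + (b i / a i) * ((α (Fin.last n) : ℚ) - (β (Fin.last n) : ℚ))))
      = (∑ i : Fin n, (α i.castSucc : ℚ))
        + (∑ i, (b i : ℚ) / (a i : ℚ)) * ((α (Fin.last n) : ℚ) - (β (Fin.last n) : ℚ)) := by
    rw [Finset.sum_add_distrib, ← Finset.sum_mul]
  have hdc : (∑ i : Fin n, (β i.castSucc : ℚ))
      = (∑ i : Fin n, (α i.castSucc : ℚ))
        + ((α (Fin.last n) : ℚ) - (β (Fin.last n) : ℚ)) := by
    have h := hd
    rw [Fin.sum_univ_castSucc, Fin.sum_univ_castSucc (f := β)] at h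
    have hQ : (∑ i : Fin n, (α i.castSucc : ℚ)) + (α (Fin.last n) : ℚ)
        = (∑ i : Fin n, (β i.castSucc : ℚ)) + (β (Fin.last n) : ℚ) := by exact_mod_cast h
    linarith
  nlinarith [hsumlt, hexp, hdc, htnn, hs]

end arith


section exist
variable {n : ℕ} {a b : Fin n → ℕ}

lemma arith_ex_gt (ha : ∀ i, 0 < a i) (hn : 0 < n)
    (hs : 1 < (∑ i, (b i : ℚ) / (a i : ℚ))) :
    ∃ (N : ℕ) (β : Fin n → ℕ) (j : Fin n), 0 < N ∧ (∑ i, β i) = N ∧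
      (∀ i, a i * β i ≤ N * b i) ∧ a j * β j < N * b j := by
  set s : ℚ := ∑ i, (b i : ℚ) / (a i : ℚ) with hsdef
  obtain ⟨N, hNpos, hNge⟩ : ∃ N : ℕ, 0 < N ∧ ((n + 1 : ℚ) / (s - 1)) ≤ N := by
    obtain ⟨N0, hN0⟩ := exists_nat_ge ((n + 1 : ℚ) / (s - 1))
    exact ⟨N0 + 1, Nat.succ_pos _, by push_cast; linarith⟩
  have hNs : (n + 1 : ℚ) ≤ N * (s - 1) := by
    rw [div_le_iff₀ (by linarith : (0:ℚ) < s - 1)] at hNge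
    linarith
  set c : Fin n → ℕ := fun i => (N * b i) / (a i) with hcdef
  have hc1 : ∀ i, a i * c i ≤ N * b i := by
    intro i
    rw [mul_comm]
    exact Nat.div_mul_le_self _ _
  have hc2 : ∀ i, N * b i < a i * c i + a i := by
    intro i
    have h : a i * c i + (N * b i) % (a i) = N * b i := by
      simp only [hcdef]; exact Nat.div_add_mod _ _
    have h2 := Nat.mod_lt (N * b i) (ha i)
    omega
  have hcQ : ∀ i, (N : ℚ) * b i / a i - 1 < c i := by
    intro i
    have hAi : (0:ℚ) < (a i : ℚ) := by exact_mod_cast ha i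
    have hQ : (N : ℚ) * b i < a i * c i + a i := by exact_mod_cast hc2 i
    have h4 : (N : ℚ) * b i / a i < c i + 1 := by
      rw [div_lt_iff₀ hAi]; nlinarith [hQ]
    linarith
  have hsumc : (N : ℚ) + 1 ≤ (∑ i, (c i : ℚ)) := by
    have h1 : (∑ i, ((N : ℚ) * b i / a i - 1)) < ∑ i, (c i : ℚ) :=
      Finset.sum_lt_sum_of_nonempty (Finset.univ_nonempty_iff.mpr ⟨⟨0, hn⟩⟩)
        (fun i _ => hcQ i)
    have h2 : (∑ i, ((N : ℚ) * b i / a i - 1)) = N * s - n := by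
      rw [Finset.sum_sub_distrib]
      simp only [Finset.sum_const, Finset.card_univ, Fintype.card_fin, nsmul_eq_mul, mul_one]
      rw [hsdef, Finset.mul_sum]
      congr 1
      exact Finset.sum_congr rfl fun i _ => by ring
    nlinarith [hNs, h1, h2]
  have hsumc' : N + 1 ≤ ∑ i, c i := by
    have hlt : ((N : ℕ) : ℚ) < ((∑ i, c i : ℕ) : ℚ) := by
      rw [Nat.cast_sum]; linarith
    have := Nat.cast_lt (α := ℚ) |>.mp hlt
    omega
  obtain ⟨β, hβle, hβsum⟩ := trim_aux (∑ i, c i) c rfl N (by omega)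
  have hβb : ∀ i, a i * β i ≤ N * b i := fun i =>
    le_trans (Nat.mul_le_mul_left _ (hβle i)) (hc1 i)
  have hstrict : ∃ j, a j * β j < N * b j := by
    by_contra h
    push_neg at h
    have heq : ∀ i, β i = c i := by
      intro i
      have h1 : N * b i ≤ a i * β i := h i
      have h2 : a i * β i ≤ a i * c i := Nat.mul_le_mul_left _ (hβle i)
      have h3 := hc1 i
      have : a i * c i = a i * β i := by omega
      exact Nat.eq_of_mul_eq_mul_left (ha i) this.symm
    have : ∑ i, β i = ∑ i, c i := Finset.sum_congr rfl fun i _ => heq i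
    omega
  obtain ⟨j, hj⟩ := hstrict
  exact ⟨N, β, j, hNpos, hβsum, hβb, hj⟩

lemma arith_ex_lt (ha : ∀ i, 0 < a i) (hba : ∀ i, b i < a i)
    (hs : (∑ i, (b i : ℚ) / (a i : ℚ)) < 1) (hn : 0 < n) :
    ∃ (N : ℕ) (t : ℕ) (β : Fin n → ℕ) (j : Fin n), 0 < N ∧ 0 < t ∧
      t + (∑ i, β i) = n * N ∧
      (∀ i, a i * β i + b i * t ≤ N * a i) ∧ a j * β j + b j * t < N * a j := by
  set s : ℚ := ∑ i, (b i : ℚ) / (a i : ℚ) with hsdef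
  have hs0 : 0 ≤ s := Finset.sum_nonneg fun i _ => by positivity
  obtain ⟨N, hNpos, hNge⟩ : ∃ N : ℕ, 0 < N ∧ ((n + 1 : ℚ) / (1 - s)) ≤ N := by
    obtain ⟨N0, hN0⟩ := exists_nat_ge ((n + 1 : ℚ) / (1 - s))
    exact ⟨N0 + 1, Nat.succ_pos _, by push_cast; linarith⟩
  have hNs : (n + 1 : ℚ) ≤ N * (1 - s) := by
    rw [div_le_iff₀ (by linarith : (0:ℚ) < 1 - s)] at hNge
    linarith
  have hNle : N ≤ n * N := Nat.le_mul_of_pos_left N hn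
  set c : Fin n → ℕ := fun i => (N * (a i - b i)) / (a i) with hcdef
  have hkey : ∀ i, N * (a i - b i) + N * b i = N * a i := by
    intro i
    rw [← Nat.mul_add, Nat.sub_add_cancel (le_of_lt (hba i))]
  have hc1 : ∀ i, a i * c i ≤ N * (a i - b i) := by
    intro i; rw [mul_comm]; exact Nat.div_mul_le_self _ _
  have hc2 : ∀ i, N * (a i - b i) < a i * c i + a i := by
    intro i
    have h : a i * c i + (N * (a i - b i)) % (a i) = N * (a i - b i) := by
      simp only [hcdef]; exact Nat.div_add_mod _ _
    have h2 := Nat.mod_lt (N * (a i - b i)) (ha i)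
    omega
  have hcQ : ∀ i, (N : ℚ) - (N : ℚ) * b i / a i - 1 < c i := by
    intro i
    have hAi : (0:ℚ) < (a i : ℚ) := by exact_mod_cast ha i
    have hcast : ((N * (a i - b i) : ℕ) : ℚ) = (N : ℚ) * a i - N * b i := by
      push_cast [Nat.cast_sub (le_of_lt (hba i))]; ring
    have hQ : (N : ℚ) * a i - N * b i < a i * c i + a i := by
      have h' : ((N * (a i - b i) : ℕ) : ℚ) < ((a i * c i + a i : ℕ) : ℚ) := by
        exact_mod_cast hc2 i
      rw [hcast] at h'
      push_cast at h'
      linarith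
    have h4 : ((N : ℚ) * a i - N * b i) / a i < c i + 1 := by
      rw [div_lt_iff₀ hAi]; nlinarith [hQ]
    have h5 : (N : ℚ) - (N : ℚ) * b i / a i - 1 = ((N : ℚ) * a i - N * b i) / a i - 1 := by
      field_simp
    rw [h5]; linarith
  have hsumc : ((n * N - N : ℕ) : ℚ) < (∑ i, (c i : ℚ)) := by
    have h1 : (∑ i, ((N : ℚ) - (N : ℚ) * b i / a i - 1)) < ∑ i, (c i : ℚ) :=
      Finset.sum_lt_sum_of_nonempty (Finset.univ_nonempty_iff.mpr ⟨⟨0, hn⟩⟩)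
        (fun i _ => hcQ i)
    have h2 : (∑ i, ((N : ℚ) - (N : ℚ) * b i / a i - 1)) = n * N - N * s - n := by
      rw [Finset.sum_sub_distrib, Finset.sum_sub_distrib]
      simp only [Finset.sum_const, Finset.card_univ, Fintype.card_fin, nsmul_eq_mul, mul_one]
      rw [hsdef, Finset.mul_sum]
      congr 2
      exact Finset.sum_congr rfl fun i _ => by ring
    have hcast : ((n * N - N : ℕ) : ℚ) = (n : ℚ) * N - N := by
      push_cast [Nat.cast_sub hNle]
      ring
    rw [hcast]
    nlinarith [hNs, h1, h2]
  have hsumc' : n * N - N + 1 ≤ ∑ i, c i := by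
    have hlt : ((n * N - N : ℕ) : ℚ) < ((∑ i, c i : ℕ) : ℚ) := by
      rw [Nat.cast_sum]; linarith
    have := Nat.cast_lt (α := ℚ) |>.mp hlt
    omega
  obtain ⟨β, hβle, hβsum⟩ := trim_aux (∑ i, c i) c rfl (n * N - N) (by omega)
  have hconstr : ∀ i, a i * β i + b i * N ≤ N * a i := by
    intro i
    have h1 : a i * β i ≤ a i * c i := Nat.mul_le_mul_left _ (hβle i)
    have h2 := hc1 i
    have h3 := hkey i
    have h4 : b i * N = N * b i := mul_comm _ _
    omega
  have hstrict : ∃ j, a j * β j + b j * N < N * a j := by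
    by_contra h
    push_neg at h
    have heq : ∀ i, β i = c i := by
      intro i
      have h1 := h i
      have h2 : a i * β i ≤ a i * c i := Nat.mul_le_mul_left _ (hβle i)
      have h3 := hc1 i
      have h4 := hkey i
      have h5 : b i * N = N * b i := mul_comm _ _
      have h6 : a i * c i = a i * β i := by omega
      exact Nat.eq_of_mul_eq_mul_left (ha i) h6.symm
    have : ∑ i, β i = ∑ i, c i := Finset.sum_congr rfl fun i _ => heq i
    omega
  obtain ⟨j, hj⟩ := hstrict
  exact ⟨N, N, β, j, hNpos, hNpos, by omega, hconstr, hj⟩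

end exist

lemma prod_univ_X_pow' {K : Type*} [CommSemiring K] {σ : Type*} [Fintype σ] [DecidableEq σ]
    (m : σ →₀ ℕ) : (∏ i, (X i : MvPolynomial σ K) ^ m i) = monomial m 1 := by
  rw [← prod_X_pow_eq_monomial]
  exact (Finset.prod_subset (Finset.subset_univ _) (by
    intro x _ hx
    simp [Finsupp.notMem_support_iff.mp hx])).symm

section poly

variable {K : Type*} [Field K] {n : ℕ} (a b : Fin n → ℕ)

noncomputable def phi (α : Fin (n+1) →₀ ℕ) : Fin n →₀ ℕ :=
  Finsupp.equivFunOnFinite.symm (fun i => a i * α i.castSucc + b i * α (Fin.last n))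

lemma phi_apply (α : Fin (n+1) →₀ ℕ) (i : Fin n) :
    phi a b α i = a i * α i.castSucc + b i * α (Fin.last n) := rfl

lemma aeval_u_monomial (u : Fin (n+1) → MvPolynomial (Fin n) K)
    (hu : ∀ i : Fin n, u i.castSucc = X i ^ a i)
    (hulast : u (Fin.last n) = ∏ i, X i ^ b i)
    (α : Fin (n+1) →₀ ℕ) (c : K) :
    aeval u (monomial α c) = monomial (phi a b α) c := by
  rw [aeval_monomial, Finsupp.prod_pow]
  have hprod : (∏ i : Fin (n+1), u i ^ α i) = monomial (phi a b α) 1 := by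
    rw [Fin.prod_univ_castSucc]
    have h1 : (∏ i : Fin n, u i.castSucc ^ α i.castSucc)
        = ∏ i : Fin n, X i ^ (a i * α i.castSucc) := by
      refine Finset.prod_congr rfl fun i _ => ?_
      rw [hu i, ← pow_mul]
    have h2 : u (Fin.last n) ^ α (Fin.last n)
        = ∏ i : Fin n, X i ^ (b i * α (Fin.last n)) := by
      rw [hulast, ← Finset.prod_pow]
      exact Finset.prod_congr rfl fun i _ => by rw [← pow_mul]
    rw [h1, h2, ← Finset.prod_mul_distrib]
    have h3 : ∀ i : Fin n, X (R := K) i ^ (a i * α i.castSucc) * X i ^ (b i * α (Fin.last n))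
        = X i ^ (phi a b α i) := fun i => by rw [← pow_add, phi_apply]
    rw [Finset.prod_congr rfl fun i _ => h3 i, prod_univ_X_pow']
  rw [hprod, algebraMap_eq, C_mul_monomial, mul_one]

/-- exponents of products of d generators -/
def Gsum (d : ℕ) : Set (Fin n →₀ ℕ) :=
  {m | ∃ β : Fin (n+1) → ℕ, (∑ j, β j) = d ∧
    ∀ i, m i = a i * β i.castSucc + b i * β (Fin.last n)}

lemma I_pow_le (I : Ideal (MvPolynomial (Fin n) K))
    (hI : I = Ideal.span (Set.range (fun i => (X i : MvPolynomial (Fin n) K) ^ a i) ∪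
      {∏ i, (X i : MvPolynomial (Fin n) K) ^ b i})) (d : ℕ) :
    I ^ d ≤ Ideal.span ((fun m => monomial m (1:K)) '' Gsum a b d) := by
  induction d with
  | zero =>
    rw [pow_zero, Ideal.one_eq_top, top_le_iff, eq_top_iff, ← Ideal.span_singleton_one,
      Ideal.span_le]
    rintro x rfl
    apply Ideal.subset_span
    exact ⟨0, ⟨fun _ => 0, by simp, fun i => by simp⟩, by simp [monomial_zero']⟩
  | succ d ih =>
    have hIle : I ≤ Ideal.span ((fun m => monomial m (1:K)) '' Gsum a b 1) := by
      rw [hI, Ideal.span_le]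
      rintro x (⟨i, rfl⟩ | rfl)
      · apply Ideal.subset_span
        refine ⟨Finsupp.single i (a i),
          ⟨fun k => if k = i.castSucc then 1 else 0, by simp, fun i' => ?_⟩, ?_⟩
        · have hne : Fin.last n ≠ i.castSucc := (Fin.castSucc_lt_last i).ne'
          by_cases h : i' = i
          · subst h; simp [Finsupp.single_apply, hne]
          · rw [Finsupp.single_apply, if_neg (fun hc : i = i' => h hc.symm)]
            have h2 : ¬ i'.castSucc = i.castSucc := fun hc => h (Fin.castSucc_inj.mp hc)
            simp [h2, hne]
        · show monomial (Finsupp.single i (a i)) (1:K) = X i ^ a i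
          exact X_pow_eq_monomial.symm
      · apply Ideal.subset_span
        refine ⟨Finsupp.equivFunOnFinite.symm b,
          ⟨fun k => if k = Fin.last n then 1 else 0, by simp, fun i' => ?_⟩, ?_⟩
        · have hne : i'.castSucc ≠ Fin.last n := (Fin.castSucc_lt_last i').ne
          simp [hne]
        · show monomial (Finsupp.equivFunOnFinite.symm b) (1:K) = ∏ i, X i ^ b i
          rw [← prod_univ_X_pow' (K := K) (Finsupp.equivFunOnFinite.symm b)]
          rfl
    calc I ^ (d+1) = I ^ d * I := pow_succ I d
    _ ≤ Ideal.span ((fun m => monomial m (1:K)) '' Gsum a b d)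
        * Ideal.span ((fun m => monomial m (1:K)) '' Gsum a b 1) := Ideal.mul_mono ih hIle
    _ = Ideal.span (((fun m => monomial m (1:K)) '' Gsum a b d)
        * ((fun m => monomial m (1:K)) '' Gsum a b 1)) := (Ideal.span_mul_span' _ _)
    _ ≤ Ideal.span ((fun m => monomial m (1:K)) '' Gsum a b (d+1)) := by
        apply Ideal.span_mono
        rintro x hx
        rw [Set.mem_mul] at hx
        obtain ⟨y, hy, z, hz, rfl⟩ := hx
        obtain ⟨g, ⟨βg, hβg, hgc⟩, rfl⟩ := hy
        obtain ⟨e, ⟨βe, hβe, hec⟩, rfl⟩ := hz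
        refine ⟨g + e, ⟨βg + βe, ?_, fun i => ?_⟩, ?_⟩
        · simp only [Pi.add_apply]
          rw [Finset.sum_add_distrib, hβg, hβe]
        · simp only [Finsupp.add_apply, Pi.add_apply, hgc i, hec i]
          ring
        · rw [monomial_mul, one_mul]

/-- exponents of generators of mm * I^d -/
def SS (d : ℕ) : Set (Fin n →₀ ℕ) :=
  {m | ∃ j : Fin n, ∃ g ∈ Gsum a b d, m = Finsupp.single j 1 + g}

lemma mmI_pow_le (I mm : Ideal (MvPolynomial (Fin n) K))
    (hI : I = Ideal.span (Set.range (fun i => (X i : MvPolynomial (Fin n) K) ^ a i) ∪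
      {∏ i, (X i : MvPolynomial (Fin n) K) ^ b i}))
    (hmm : mm = Ideal.span (Set.range (X : Fin n → MvPolynomial (Fin n) K))) (d : ℕ) :
    mm * I ^ d ≤ Ideal.span ((fun m => monomial m (1:K)) '' SS a b d) := by
  have hmmle : mm ≤ Ideal.span ((fun m => monomial m (1:K)) ''
      (Set.range (fun j : Fin n => Finsupp.single j 1))) := by
    rw [hmm, Ideal.span_le]
    rintro x ⟨j, rfl⟩
    apply Ideal.subset_span
    refine ⟨Finsupp.single j 1, ⟨j, rfl⟩, ?_⟩
    show monomial (Finsupp.single j 1) (1:K) = X j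
    rw [← X_pow_eq_monomial, pow_one]
  calc mm * I ^ d ≤ Ideal.span ((fun m => monomial m (1:K)) ''
      (Set.range (fun j : Fin n => Finsupp.single j 1)))
      * Ideal.span ((fun m => monomial m (1:K)) '' Gsum a b d) :=
        Ideal.mul_mono hmmle (I_pow_le a b I hI d)
  _ = Ideal.span (((fun m => monomial m (1:K)) ''
      (Set.range (fun j : Fin n => Finsupp.single j 1)))
      * ((fun m => monomial m (1:K)) '' Gsum a b d)) := Ideal.span_mul_span' _ _
  _ ≤ Ideal.span ((fun m => monomial m (1:K)) '' SS a b d) := by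
      apply Ideal.span_mono
      rintro x hx
      rw [Set.mem_mul] at hx
      obtain ⟨y, hy, z, hz, rfl⟩ := hx
      obtain ⟨g, ⟨j, rfl⟩, rfl⟩ := hy
      obtain ⟨e, he, rfl⟩ := hz
      exact ⟨Finsupp.single j 1 + e, ⟨j, e, he, rfl⟩, by rw [monomial_mul, one_mul]⟩

end poly



section key
variable {K : Type*} [Field K] {n : ℕ}

lemma mem_span_X_of_coeff {σ : Type*} (k : σ) (f : MvPolynomial σ K)
    (h : ∀ m : σ →₀ ℕ, m k = 0 → coeff m f = 0) :
    f ∈ Ideal.span {(X k : MvPolynomial σ K)} := by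
  rw [Ideal.mem_span_singleton]
  have hdvd : X k ∣ ∑ m ∈ f.support, monomial m (coeff m f) := by
    apply Finset.dvd_sum
    intro m hm
    rw [X_dvd_monomial]
    exact Or.inr (fun hmk => (mem_support_iff.mp hm) (h m hmk))
  rwa [← f.as_sum] at hdvd

lemma prod_X_pow_mem_mm (mm : Ideal (MvPolynomial (Fin n) K))
    (hmm : mm = Ideal.span (Set.range (X : Fin n → MvPolynomial (Fin n) K)))
    (c : Fin n → ℕ) (j : Fin n) (hj : 0 < c j) :
    (∏ i, (X i : MvPolynomial (Fin n) K) ^ c i) ∈ mm := by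
  rw [hmm]
  have h1 : (∏ i, (X i : MvPolynomial (Fin n) K) ^ c i)
      = (∏ i ∈ Finset.univ.erase j, (X i : MvPolynomial (Fin n) K) ^ c i) * X j ^ c j :=
    (Finset.prod_erase_mul univ _ (mem_univ j)).symm
  have h2 : (X j : MvPolynomial (Fin n) K) ^ c j = X j ^ (c j - 1) * X j := by
    conv_lhs => rw [show c j = (c j - 1) + 1 by omega]
    rw [pow_succ]
  rw [h1, h2, ← mul_assoc]
  exact Ideal.mul_mem_left _ _ (Ideal.subset_span ⟨j, rfl⟩)

variable (a b : Fin n → ℕ)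

lemma J_le_span_X (ha : ∀ i, 0 < a i)
    (I mm : Ideal (MvPolynomial (Fin n) K))
    (hI : I = Ideal.span (Set.range (fun i => (X i : MvPolynomial (Fin n) K) ^ a i) ∪
      {∏ i, (X i : MvPolynomial (Fin n) K) ^ b i}))
    (hmm : mm = Ideal.span (Set.range (X : Fin n → MvPolynomial (Fin n) K)))
    (u : Fin (n + 1) → MvPolynomial (Fin n) K)
    (hu : ∀ i : Fin n, u i.castSucc = X i ^ a i)
    (hulast : u (Fin.last n) = ∏ i, X i ^ b i)
    (J : Ideal (MvPolynomial (Fin (n + 1)) K))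
    (hJ : ∀ f : MvPolynomial (Fin (n + 1)) K,
      f ∈ J ↔ ∀ d : ℕ, aeval u (homogeneousComponent d f) ∈ mm * I ^ d)
    (hs1 : (∑ i, (b i : ℚ) / (a i : ℚ)) ≠ 1)
    (k : Fin (n+1))
    (hnd : ∀ (α β : Fin (n+1) → ℕ), α k = 0 → (∑ j, α j) = (∑ j, β j) → ∀ j : Fin n,
      (∀ i, a i * β i.castSucc + b i * β (Fin.last n)
        ≤ a i * α i.castSucc + b i * α (Fin.last n)) →
      a j * β j.castSucc + b j * β (Fin.last n)
        < a j * α j.castSucc + b j * α (Fin.last n) → False) :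
    J ≤ Ideal.span {(X k : MvPolynomial (Fin (n+1)) K)} := by
  intro f hf
  apply mem_span_X_of_coeff
  intro m hmk
  by_contra hc0
  set d := ∑ i, m i with hd
  have hdeg : Finsupp.degree m = d := degree_eq_univ_sum m
  set g := homogeneousComponent d f with hgdef
  have hcg : coeff m g = coeff m f := by
    rw [hgdef, coeff_homogeneousComponent, if_pos hdeg]
  have hgne : coeff m g ≠ 0 := by rw [hcg]; exact hc0
  have hsupdeg : ∀ β : Fin (n+1) →₀ ℕ, coeff β g ≠ 0 → (∑ i, β i) = d := by
    intro β hβ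
    rw [hgdef, coeff_homogeneousComponent] at hβ
    by_cases hh : Finsupp.degree β = d
    · rw [← degree_eq_univ_sum]; exact hh
    · rw [if_neg hh] at hβ; exact absurd rfl hβ
  have hrepr : aeval u g = ∑ β ∈ g.support, monomial (phi a b β) (coeff β g) := by
    conv_lhs => rw [g.as_sum]
    rw [map_sum]
    exact Finset.sum_congr rfl fun β _ => aeval_u_monomial a b u hu hulast β _
  have hAE : coeff (phi a b m) (aeval u g) = coeff m g := by
    rw [hrepr, coeff_sum]
    have hconv : ∀ β ∈ g.support,
        coeff (phi a b m) (monomial (phi a b β) (coeff β g))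
          = if β = m then coeff β g else 0 := by
      intro β hβ
      rw [coeff_monomial]
      by_cases hbm : β = m
      · subst hbm; simp
      · rw [if_neg ?_, if_neg hbm]
        intro hphi
        apply hbm
        have hfun : (⇑β : Fin (n+1) → ℕ) = ⇑m := by
          apply arith_inj ha hs1
          · intro i
            have h1 := congrArg (fun t => t i) hphi
            simpa [phi_apply] using h1
          · rw [hsupdeg β (mem_support_iff.mp hβ), hd]
        exact DFunLike.coe_injective hfun
    rw [Finset.sum_congr rfl hconv, Finset.sum_ite_eq' g.support m (fun β => coeff β g),
      if_pos (mem_support_iff.mpr hgne)]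
  have hmemJ := (hJ f).mp hf d
  have hmem2 : aeval u g ∈ Ideal.span ((fun m => monomial m (1:K)) '' SS a b d) :=
    mmI_pow_le a b I mm hI hmm d hmemJ
  have hsupp : phi a b m ∈ (aeval u g).support :=
    mem_support_iff.mpr (by rw [hAE]; exact hgne)
  obtain ⟨sε, hsε, hle⟩ := mem_ideal_span_monomial_image.mp hmem2 _ hsupp
  obtain ⟨j, gg, ⟨βe, hβsum, hβc⟩, rfl⟩ := hsε
  refine hnd m βe hmk ?_ j ?_ ?_
  · rw [← hd, hβsum]
  · intro i
    have h1 := hle i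
    rw [Finsupp.add_apply, phi_apply] at h1
    rw [← hβc i]
    omega
  · have h1 := hle j
    rw [Finsupp.add_apply, phi_apply, Finsupp.single_eq_same] at h1
    rw [← hβc j]
    omega

end key

section memJ
variable {K : Type*} [Field K] {n : ℕ} (a b : Fin n → ℕ)

lemma pow_last_mem_J (ha : ∀ i, 0 < a i) (hn : 0 < n)
    (I mm : Ideal (MvPolynomial (Fin n) K))
    (hI : I = Ideal.span (Set.range (fun i => (X i : MvPolynomial (Fin n) K) ^ a i) ∪
      {∏ i, (X i : MvPolynomial (Fin n) K) ^ b i}))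
    (hmm : mm = Ideal.span (Set.range (X : Fin n → MvPolynomial (Fin n) K)))
    (u : Fin (n + 1) → MvPolynomial (Fin n) K)
    (hu : ∀ i : Fin n, u i.castSucc = X i ^ a i)
    (hulast : u (Fin.last n) = ∏ i, X i ^ b i)
    (J : Ideal (MvPolynomial (Fin (n + 1)) K))
    (hJ : ∀ f : MvPolynomial (Fin (n + 1)) K,
      f ∈ J ↔ ∀ d : ℕ, aeval u (homogeneousComponent d f) ∈ mm * I ^ d)
    (hs : 1 < (∑ i, (b i : ℚ) / (a i : ℚ))) :
    ∃ N : ℕ, 0 < N ∧ (X (Fin.last n) : MvPolynomial (Fin (n+1)) K) ^ N ∈ J := by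
  obtain ⟨N, β, j, hNpos, hβsum, hβle, hjlt⟩ := arith_ex_gt ha hn hs
  refine ⟨N, hNpos, ?_⟩
  rw [hJ]
  intro d
  have hhom : (X (Fin.last n) : MvPolynomial (Fin (n+1)) K) ^ N
      ∈ homogeneousSubmodule (Fin (n+1)) K N :=
    (mem_homogeneousSubmodule _ _).mpr (isHomogeneous_X_pow _ _)
  rw [homogeneousComponent_of_mem hhom]
  split_ifs with hdN
  · rw [hdN]
    rw [map_pow, aeval_X, hulast]
    have hXa : ∀ i, (X i : MvPolynomial (Fin n) K) ^ a i ∈ I := fun i =>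
      hI ▸ Ideal.subset_span (Or.inl ⟨i, rfl⟩)
    have heq : (∏ i, (X i : MvPolynomial (Fin n) K) ^ b i) ^ N
        = (∏ i, (X i : MvPolynomial (Fin n) K) ^ (N * b i - a i * β i))
          * ∏ i, ((X i : MvPolynomial (Fin n) K) ^ a i) ^ β i := by
      rw [← Finset.prod_pow, ← Finset.prod_mul_distrib]
      refine Finset.prod_congr rfl fun i _ => ?_
      rw [← pow_mul, ← pow_mul, ← pow_add]
      congr 1
      have h1 := hβle i
      have h2 : b i * N = N * b i := mul_comm _ _
      omega
    rw [heq]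
    apply Ideal.mul_mem_mul
    · exact prod_X_pow_mem_mm mm hmm _ j (by omega)
    · have h3 := prod_pow_mem I Finset.univ (fun i => (X i : MvPolynomial (Fin n) K) ^ a i)
        β (fun i _ => hXa i)
      rwa [hβsum] at h3
  · rw [map_zero]
    exact Submodule.zero_mem _

lemma pow_prod_mem_J (ha : ∀ i, 0 < a i) (hba : ∀ i, b i < a i) (hn : 0 < n)
    (I mm : Ideal (MvPolynomial (Fin n) K))
    (hI : I = Ideal.span (Set.range (fun i => (X i : MvPolynomial (Fin n) K) ^ a i) ∪
      {∏ i, (X i : MvPolynomial (Fin n) K) ^ b i}))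
    (hmm : mm = Ideal.span (Set.range (X : Fin n → MvPolynomial (Fin n) K)))
    (u : Fin (n + 1) → MvPolynomial (Fin n) K)
    (hu : ∀ i : Fin n, u i.castSucc = X i ^ a i)
    (hulast : u (Fin.last n) = ∏ i, X i ^ b i)
    (J : Ideal (MvPolynomial (Fin (n + 1)) K))
    (hJ : ∀ f : MvPolynomial (Fin (n + 1)) K,
      f ∈ J ↔ ∀ d : ℕ, aeval u (homogeneousComponent d f) ∈ mm * I ^ d)
    (hs : (∑ i, (b i : ℚ) / (a i : ℚ)) < 1) :
    ∃ N : ℕ, 0 < N ∧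
      (∏ i : Fin n, (X i.castSucc : MvPolynomial (Fin (n+1)) K)) ^ N ∈ J := by
  obtain ⟨N, t, β, j, hNpos, htpos, hsum, hconstr, hjlt⟩ := arith_ex_lt ha hba hs hn
  refine ⟨N, hNpos, ?_⟩
  rw [hJ]
  intro d
  have hhom0 : IsHomogeneous (∏ i : Fin n, (X i.castSucc : MvPolynomial (Fin (n+1)) K)) n := by
    have h := IsHomogeneous.prod Finset.univ
      (fun i : Fin n => (X i.castSucc : MvPolynomial (Fin (n+1)) K)) (fun _ => 1)
      (fun i _ => isHomogeneous_X _ _)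
    simpa using h
  have hhom : (∏ i : Fin n, (X i.castSucc : MvPolynomial (Fin (n+1)) K)) ^ N
      ∈ homogeneousSubmodule (Fin (n+1)) K (n * N) :=
    (mem_homogeneousSubmodule _ _).mpr (hhom0.pow N)
  rw [homogeneousComponent_of_mem hhom]
  split_ifs with hdN
  · rw [hdN]
    rw [map_pow, map_prod]
    have haev : ∀ i : Fin n,
        aeval u (X i.castSucc : MvPolynomial (Fin (n+1)) K) = X i ^ a i := fun i => by
      rw [aeval_X, hu]
    rw [Finset.prod_congr rfl fun i _ => haev i]
    have hXa : ∀ i, (X i : MvPolynomial (Fin n) K) ^ a i ∈ I := fun i =>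
      hI ▸ Ideal.subset_span (Or.inl ⟨i, rfl⟩)
    have hBmem : (∏ i, (X i : MvPolynomial (Fin n) K) ^ b i) ∈ I :=
      hI ▸ Ideal.subset_span (Or.inr rfl)
    have heq : (∏ i, (X i : MvPolynomial (Fin n) K) ^ a i) ^ N
        = (∏ i, (X i : MvPolynomial (Fin n) K) ^ (N * a i - (a i * β i + b i * t)))
          * ((∏ i, ((X i : MvPolynomial (Fin n) K) ^ a i) ^ β i)
            * (∏ i, (X i : MvPolynomial (Fin n) K) ^ b i) ^ t) := by
      rw [← Finset.prod_pow, ← Finset.prod_pow, ← Finset.prod_mul_distrib,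
        ← Finset.prod_mul_distrib]
      refine Finset.prod_congr rfl fun i _ => ?_
      rw [← pow_mul, ← pow_mul, ← pow_mul, ← pow_add, ← pow_add]
      congr 1
      have h1 := hconstr i
      have h2 : a i * N = N * a i := mul_comm _ _
      omega
    rw [heq]
    apply Ideal.mul_mem_mul
    · refine prod_X_pow_mem_mm mm hmm _ j ?_
      have := hjlt
      have h2 : a j * N = N * a j := mul_comm _ _
      omega
    · have h3 := prod_pow_mem I Finset.univ (fun i => (X i : MvPolynomial (Fin n) K) ^ a i)
        β (fun i _ => hXa i)
      have h4 : (∏ i, (X i : MvPolynomial (Fin n) K) ^ b i) ^ t ∈ I ^ t :=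
        Ideal.pow_mem_pow hBmem t
      have h5 := Ideal.mul_mem_mul h3 h4
      rw [← pow_add] at h5
      rwa [show (∑ i, β i) + t = n * N by omega] at h5
  · rw [map_zero]
    exact Submodule.zero_mem _

end memJ

section primes
variable {K : Type*} [Field K] {n : ℕ}

lemma isPrime_span_X (k : Fin (n+1)) :
    (Ideal.span {(X k : MvPolynomial (Fin (n+1)) K)}).IsPrime := by
  rw [Ideal.span_singleton_prime (X_ne_zero k)]
  rw [← MulEquiv.prime_iff ((renameEquiv K (Equiv.swap k 0)).trans
    (MvPolynomial.finSuccEquiv K n)).toMulEquiv]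
  have he : ((renameEquiv K (Equiv.swap k 0)).trans
      (MvPolynomial.finSuccEquiv K n)).toMulEquiv (X k) = Polynomial.X := by
    change (MvPolynomial.finSuccEquiv K n) ((renameEquiv K (Equiv.swap k 0)) (X k)) = _
    rw [renameEquiv_apply, rename_X, Equiv.swap_apply_left, finSuccEquiv_X_zero]
  rw [he]
  exact Polynomial.prime_X

end primes

theorem stmt_6 {K : Type*} [Field K] (n : ℕ) (hn : 2 ≤ n)
    (a b : Fin n → ℕ) (hba : ∀ i, b i < a i) (hb : ∀ i, 0 < b i)
    (I mm : Ideal (MvPolynomial (Fin n) K))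
    (hI : I = Ideal.span (Set.range (fun i => (X i : MvPolynomial (Fin n) K) ^ a i) ∪
      {∏ i, (X i : MvPolynomial (Fin n) K) ^ b i}))
    (hmm : mm = Ideal.span (Set.range (X : Fin n → MvPolynomial (Fin n) K)))
    (u : Fin (n + 1) → MvPolynomial (Fin n) K)
    (hu : ∀ i : Fin n, u i.castSucc = X i ^ a i)
    (hulast : u (Fin.last n) = ∏ i, X i ^ b i)
    (J : Ideal (MvPolynomial (Fin (n + 1)) K))
    (hJ : ∀ f : MvPolynomial (Fin (n + 1)) K,
      f ∈ J ↔ ∀ d : ℕ, aeval u (homogeneousComponent d f) ∈ mm * I ^ d)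
    :
    (1 < (∑ i, (b i : ℚ) / (a i : ℚ)) →
      J.minimalPrimes = {Ideal.span {(X (Fin.last n) : MvPolynomial (Fin (n + 1)) K)}}) ∧
    ((∑ i, (b i : ℚ) / (a i : ℚ)) < 1 →
      J.minimalPrimes.ncard = n ∧
      J.minimalPrimes =
        Set.range (fun i : Fin n =>
          Ideal.span {(X i.castSucc : MvPolynomial (Fin (n + 1)) K)})) := by
  have han : ∀ i, 0 < a i := fun i => lt_trans (hb i) (hba i)
  have hn0 : 0 < n := by omega
  constructor
  · -- case sum > 1
    intro hs
    have hs1 : (∑ i, (b i : ℚ) / (a i : ℚ)) ≠ 1 := ne_of_gt hs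
    have hPprime : (Ideal.span {(X (Fin.last n) : MvPolynomial (Fin (n + 1)) K)}).IsPrime :=
      isPrime_span_X _
    have hJP : J ≤ Ideal.span {(X (Fin.last n) : MvPolynomial (Fin (n + 1)) K)} :=
      J_le_span_X a b han I mm hI hmm u hu hulast J hJ hs1 (Fin.last n)
        (fun α β hα hd j hle hlt => arith_nodiv_gt han hs α β hα hd j hle hlt)
    obtain ⟨N, hNpos, hzN⟩ := pow_last_mem_J a b han hn0 I mm hI hmm u hu hulast J hJ hs
    have hmin : ∀ Q : Ideal (MvPolynomial (Fin (n + 1)) K), Q.IsPrime → J ≤ Q →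
        Ideal.span {(X (Fin.last n) : MvPolynomial (Fin (n + 1)) K)} ≤ Q := by
      intro Q hQ hJQ
      rw [Ideal.span_le, Set.singleton_subset_iff]
      exact hQ.mem_of_pow_mem N (hJQ hzN)
    ext Q
    simp only [Ideal.minimalPrimes, Set.mem_setOf_eq, Set.mem_singleton_iff]
    constructor
    · rintro ⟨⟨hQp, hJQ⟩, hminQ⟩
      exact le_antisymm (hminQ ⟨hPprime, hJP⟩ (hmin Q hQp hJQ)) (hmin Q hQp hJQ)
    · rintro rfl
      exact ⟨⟨hPprime, hJP⟩, fun R hR _ => hmin R hR.1 hR.2⟩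
  · -- case sum < 1
    intro hs
    have hs1 : (∑ i, (b i : ℚ) / (a i : ℚ)) ≠ 1 := ne_of_lt hs
    set P : Fin n → Ideal (MvPolynomial (Fin (n + 1)) K) := fun i : Fin n =>
      Ideal.span {(X i.castSucc : MvPolynomial (Fin (n + 1)) K)} with hPdef
    have hPprime : ∀ i, (P i).IsPrime := fun i => isPrime_span_X _
    have hJP : ∀ i, J ≤ P i := fun i =>
      J_le_span_X a b han I mm hI hmm u hu hulast J hJ hs1 i.castSucc
        (fun α β hα hd j hle hlt => arith_nodiv_lt han hb hs i α β hα hd j hle hlt)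
    obtain ⟨N, hNpos, hzN⟩ := pow_prod_mem_J a b han hba hn0 I mm hI hmm u hu hulast J hJ hs
    have hmin : ∀ Q : Ideal (MvPolynomial (Fin (n + 1)) K), Q.IsPrime → J ≤ Q →
        ∃ i, P i ≤ Q := by
      intro Q hQ hJQ
      have h1 : (∏ i : Fin n, (X i.castSucc : MvPolynomial (Fin (n + 1)) K)) ∈ Q :=
        hQ.mem_of_pow_mem N (hJQ hzN)
      have h2 := (Ideal.IsPrime.prod_mem_iff (hp := hQ)).mp h1
      obtain ⟨i, _, hi⟩ := h2
      refine ⟨i, ?_⟩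
      rw [hPdef]
      simp only
      rw [Ideal.span_le, Set.singleton_subset_iff]
      exact hi
    have hPle : ∀ i j : Fin n, P i ≤ P j → i = j := by
      intro i j hij
      have h1 : (X i.castSucc : MvPolynomial (Fin (n + 1)) K) ∈ P j :=
        hij (Ideal.subset_span rfl)
      rw [hPdef] at h1
      simp only at h1
      rw [Ideal.mem_span_singleton] at h1
      exact Fin.castSucc_inj.mp (X_dvd_X.mp h1).symm
    have hPinj : Function.Injective P := fun i j hij => hPle i j (le_of_eq hij)
    have hseteq : J.minimalPrimes = Set.range P := by
      ext Q
      simp only [Ideal.minimalPrimes, Set.mem_setOf_eq, Set.mem_range]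
      constructor
      · rintro ⟨⟨hQp, hJQ⟩, hminQ⟩
        obtain ⟨i, hi⟩ := hmin Q hQp hJQ
        exact ⟨i, le_antisymm hi (hminQ ⟨hPprime i, hJP i⟩ hi)⟩
      · rintro ⟨i, rfl⟩
        refine ⟨⟨hPprime i, hJP i⟩, ?_⟩
        rintro R hR hRP
        obtain ⟨i', hi'⟩ := hmin R hR.1 hR.2
        have hii : i' = i := hPle i' i (le_trans hi' hRP)
        exact hii ▸ hi'
    refine ⟨?_, hseteq⟩
    rw [hseteq, ← Set.image_univ, Set.ncard_image_of_injective _ hPinj, Set.ncard_univ,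
      Nat.card_eq_fintype_card, Fintype.card_fin]
end

section
/- Assume a + b > c. Then (i) there exist positive integers m and n with (c−b)·m ≤ b·n and (c−a)·n ≤ a·m; and (ii) for every pair of positive integers m, n satisfying (c−b)·m ≤ b·n and (c−a)·n ≤ a·m, both z_2^{m+n} and z_3^{m+n} belong to J. -/
open MvPolynomial

/-!
For (i), `m = b`, `n = c - b` works because `c - a < b` and `c - b < a`.
For (ii), the substitution `z_k ↦ u_k` sends `z_2 ^ (m + n)` to `x ^ (b(m+n)) y ^ (a(m+n))`. The two
inequalities say exactly that this monomial is divisible by `(x ^ c) ^ m (y ^ c) ^ n ∈ I ^ (m + n)`,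
and since `c < a + b` the cofactor has positive degree, so it lies in `(x, y)`. The case of `z_3` is
the mirror image, with the roles of `m` and `n` exchanged.
-/

lemma pow_mul_pow_mem_span_pair {R : Type*} [CommSemiring R] (x y : R) {p q : ℕ}
    (hpq : p + q ≠ 0) : x ^ p * y ^ q ∈ Ideal.span {x, y} := by
  rcases p with _ | p
  · obtain ⟨q, rfl⟩ := Nat.exists_eq_succ_of_ne_zero (by simpa using hpq)
    rw [pow_zero, one_mul, pow_succ]
    exact Ideal.mul_mem_left _ _ (Ideal.subset_span (by simp))
  · rw [pow_succ, mul_right_comm]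
    exact Ideal.mul_mem_left _ _ (Ideal.subset_span (by simp))

lemma pow_mul_pow_mem_span_pair_mul_pow {R : Type*} [CommSemiring R] {x y : R} {I : Ideal R}
    {c e f p q : ℕ} (hx : x ^ c ∈ I) (hy : y ^ c ∈ I) (hp : c * p ≤ e) (hq : c * q ≤ f)
    (hef : c * (p + q) < e + f) :
    x ^ e * y ^ f ∈ Ideal.span {x, y} * I ^ (p + q) := by
  have hsplit :
      x ^ e * y ^ f = (x ^ (e - c * p) * y ^ (f - c * q)) * ((x ^ c) ^ p * (y ^ c) ^ q) := by
    rw [← pow_mul, ← pow_mul]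
    conv_lhs => rw [← Nat.sub_add_cancel hp, ← Nat.sub_add_cancel hq]
    ring
  rw [Nat.mul_add] at hef
  rw [hsplit, pow_add]
  exact Ideal.mul_mem_mul (pow_mul_pow_mem_span_pair x y (by omega))
    (Ideal.mul_mem_mul (Ideal.pow_mem_pow hx p) (Ideal.pow_mem_pow hy q))

lemma mem_of_isHomogeneous_of_aeval_mem {σ R S : Type*} [CommSemiring R] [CommSemiring S]
    [Algebra R S] {u : σ → S} {P : ℕ → Ideal S} {J : Ideal (MvPolynomial σ R)}
    (hJ : ∀ f, f ∈ J ↔ ∀ d, aeval u (homogeneousComponent d f) ∈ P d)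
    {f : MvPolynomial σ R} {N : ℕ} (hf : f.IsHomogeneous N) (hN : aeval u f ∈ P N) :
    f ∈ J := by
  rw [hJ]
  intro d
  rw [homogeneousComponent_of_mem ((mem_homogeneousSubmodule N f).mpr hf)]
  split_ifs with hd
  · exact hd ▸ hN
  · rw [map_zero]
    exact zero_mem _

theorem stmt_8_general {K : Type*} [Field K] (a b c : ℕ)
    (hab : a < b) (hbc : b < c)
    (u : Fin 4 → MvPolynomial (Fin 2) K)
    (hu0 : u 0 = X 0 ^ c) (hu1 : u 1 = X 0 ^ b * X 1 ^ a)
    (hu2 : u 2 = X 0 ^ a * X 1 ^ b) (hu3 : u 3 = X 1 ^ c)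
    (I mm : Ideal (MvPolynomial (Fin 2) K))
    (hI : I = Ideal.span {u 0, u 1, u 2, u 3})
    (hmm : mm = Ideal.span {(X 0 : MvPolynomial (Fin 2) K), X 1})
    (J : Ideal (MvPolynomial (Fin 4) K))
    (hJ : ∀ f : MvPolynomial (Fin 4) K,
      f ∈ J ↔ ∀ d : ℕ, aeval u (homogeneousComponent d f) ∈ mm * I ^ d)
    (habc : c < a + b) :
    (∃ m n : ℕ, 0 < m ∧ 0 < n ∧ (c - b) * m ≤ b * n ∧ (c - a) * n ≤ a * m) ∧
    (∀ m n : ℕ, 0 < m → 0 < n → (c - b) * m ≤ b * n → (c - a) * n ≤ a * m →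
      (X 1 : MvPolynomial (Fin 4) K) ^ (m + n) ∈ J ∧
      (X 2 : MvPolynomial (Fin 4) K) ^ (m + n) ∈ J) := by
  refine ⟨⟨b, c - b, by omega, by omega, (Nat.mul_comm _ _).le,
    (Nat.mul_le_mul (by omega) (by omega)).trans (Nat.mul_comm b a).le⟩, ?_⟩
  intro m n hm hn hcb hca
  zify [hbc.le, (hab.trans hbc).le] at hcb hca
  have hxc : (X 0 : MvPolynomial (Fin 2) K) ^ c ∈ I := hI ▸ Ideal.subset_span (by simp [hu0])
  have hyc : (X 1 : MvPolynomial (Fin 2) K) ^ c ∈ I := hI ▸ Ideal.subset_span (by simp [hu3])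
  have hsum : c * (m + n) < a * (m + n) + b * (m + n) := by
    rw [← Nat.add_mul]; exact Nat.mul_lt_mul_of_pos_right habc (by omega)
  have hX_mem : ∀ (k : Fin 4) (e f : ℕ), u k = X 0 ^ e * X 1 ^ f →
      X 0 ^ (e * (m + n)) * X 1 ^ (f * (m + n)) ∈ mm * I ^ (m + n) →
      (X k : MvPolynomial (Fin 4) K) ^ (m + n) ∈ J := fun k e f huk h =>
    mem_of_isHomogeneous_of_aeval_mem hJ (by simpa using (isHomogeneous_X K k).pow (m + n))
      (by rwa [map_pow, aeval_X, huk, mul_pow, ← pow_mul, ← pow_mul])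
  refine ⟨hX_mem 1 b a hu1 ?_, hX_mem 2 a b hu2 ?_⟩
  · rw [hmm]
    exact pow_mul_pow_mem_span_pair_mul_pow hxc hyc (by zify; linarith) (by zify; linarith)
      (by linarith)
  · rw [hmm, Nat.add_comm m n]
    exact pow_mul_pow_mem_span_pair_mul_pow hxc hyc (by zify; linarith) (by zify; linarith)
      (by linarith)

theorem stmt_8 {K : Type*} [Field K] (a b c : ℕ)
    (ha : 0 < a) (hab : a < b) (hbc : b < c)
    (hgcd : Nat.gcd a (Nat.gcd b c) = 1)
    (u : Fin 4 → MvPolynomial (Fin 2) K)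
    (hu0 : u 0 = X 0 ^ c) (hu1 : u 1 = X 0 ^ b * X 1 ^ a)
    (hu2 : u 2 = X 0 ^ a * X 1 ^ b) (hu3 : u 3 = X 1 ^ c)
    (I mm : Ideal (MvPolynomial (Fin 2) K))
    (hI : I = Ideal.span {u 0, u 1, u 2, u 3})
    (hmm : mm = Ideal.span {(X 0 : MvPolynomial (Fin 2) K), X 1})
    (J : Ideal (MvPolynomial (Fin 4) K))
    (hJ : ∀ f : MvPolynomial (Fin 4) K,
      f ∈ J ↔ ∀ d : ℕ, aeval u (homogeneousComponent d f) ∈ mm * I ^ d)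
    (habc : c < a + b) :
    (∃ m n : ℕ, 0 < m ∧ 0 < n ∧ (c - b) * m ≤ b * n ∧ (c - a) * n ≤ a * m) ∧
    (∀ m n : ℕ, 0 < m → 0 < n → (c - b) * m ≤ b * n → (c - a) * n ≤ a * m →
      (X 1 : MvPolynomial (Fin 4) K) ^ (m + n) ∈ J ∧
      (X 2 : MvPolynomial (Fin 4) K) ^ (m + n) ∈ J) :=
  stmt_8_general a b c hab hbc u hu0 hu1 hu2 hu3 I mm hI hmm J hJ habc
end

section
/- Let g = gcd(c, b−a), ℓ = (b−a)/g and m = c/g. Then the binomial z_1^ℓ · z_3^m − z_2^m · z_4^ℓ belongs to J. -/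
/-!
Writing `g = gcd(c, b - a)`, `ℓ = (b - a)/g`, `m = c/g`, one has `cℓ + am = bm`, so both monomials
`u₁^ℓ u₃^m` and `u₂^m u₄^ℓ` equal `x^{bm} y^{bm}`: the binomial lies in the kernel of evaluation at `u`.
Being homogeneous, each of its homogeneous components is either itself or `0`, so each evaluates to
`0 ∈ m·I^d`.
-/

open MvPolynomial

theorem Nat.mul_div_gcd_eq_div_gcd_mul (c k : ℕ) : c * (k / c.gcd k) = c / c.gcd k * k := by
  rw [← Nat.mul_div_assoc _ (Nat.gcd_dvd_right c k), Nat.div_mul_right_comm (Nat.gcd_dvd_left c k)]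

theorem mul_div_gcd_sub_add_mul_div_gcd {a b : ℕ} (hab : a ≤ b) (c : ℕ) :
    c * ((b - a) / c.gcd (b - a)) + a * (c / c.gcd (b - a)) = b * (c / c.gcd (b - a)) := by
  rw [Nat.mul_div_gcd_eq_div_gcd_mul, mul_comm a, ← mul_add, Nat.sub_add_cancel hab, mul_comm]

theorem pow_pow_mul_mul_pow_eq {M : Type*} [CommMonoid M] (x y : M) {a b c l m : ℕ}
    (h : c * l + a * m = b * m) :
    (x ^ c) ^ l * (x ^ a * y ^ b) ^ m = (x ^ b * y ^ a) ^ m * (y ^ c) ^ l := by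
  simp only [mul_pow, ← pow_mul, ← h, pow_add]
  ac_rfl

theorem MvPolynomial.aeval_homogeneousComponent_eq_zero {σ R S : Type*} [CommSemiring R]
    [CommSemiring S] [Algebra R S] {φ : MvPolynomial σ R} {n : ℕ} (hφ : φ.IsHomogeneous n)
    {u : σ → S} (h : aeval u φ = 0) (d : ℕ) : aeval u (homogeneousComponent d φ) = 0 := by
  rw [homogeneousComponent_of_mem ((mem_homogeneousSubmodule _ _).2 hφ)]
  split_ifs <;> simp [h]

theorem stmt_9_general {K : Type*} [Field K] (a b c : ℕ)
    (hab : a < b)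
    (u : Fin 4 → MvPolynomial (Fin 2) K)
    (hu0 : u 0 = X 0 ^ c) (hu1 : u 1 = X 0 ^ b * X 1 ^ a)
    (hu2 : u 2 = X 0 ^ a * X 1 ^ b) (hu3 : u 3 = X 1 ^ c)
    (I mm : Ideal (MvPolynomial (Fin 2) K))
    (J : Ideal (MvPolynomial (Fin 4) K))
    (hJ : ∀ f : MvPolynomial (Fin 4) K,
      f ∈ J ↔ ∀ d : ℕ, aeval u (homogeneousComponent d f) ∈ mm * I ^ d)
    :
    (X 0 : MvPolynomial (Fin 4) K) ^ ((b - a) / Nat.gcd c (b - a)) *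
        X 2 ^ (c / Nat.gcd c (b - a)) -
      X 1 ^ (c / Nat.gcd c (b - a)) * X 3 ^ ((b - a) / Nat.gcd c (b - a)) ∈ J := by
  set l := (b - a) / Nat.gcd c (b - a)
  set m := c / Nat.gcd c (b - a)
  have hhom : (X 0 ^ l * X 2 ^ m - X 1 ^ m * X 3 ^ l : MvPolynomial (Fin 4) K).IsHomogeneous
      (l + m) :=
    ((isHomogeneous_X_pow 0 l).mul (isHomogeneous_X_pow 2 m)).sub
      (add_comm m l ▸ (isHomogeneous_X_pow 1 m).mul (isHomogeneous_X_pow 3 l))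
  have hker : aeval u (X 0 ^ l * X 2 ^ m - X 1 ^ m * X 3 ^ l : MvPolynomial (Fin 4) K) = 0 := by
    simp only [map_sub, map_mul, map_pow, aeval_X, hu0, hu1, hu2, hu3, sub_eq_zero]
    exact pow_pow_mul_mul_pow_eq _ _ (mul_div_gcd_sub_add_mul_div_gcd hab.le c)
  refine (hJ _).2 fun d => ?_
  rw [aeval_homogeneousComponent_eq_zero hhom hker d]
  exact zero_mem _

theorem stmt_9 {K : Type*} [Field K] (a b c : ℕ)
    (ha : 0 < a) (hab : a < b) (hbc : b < c)
    (hgcd : Nat.gcd a (Nat.gcd b c) = 1)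
    (u : Fin 4 → MvPolynomial (Fin 2) K)
    (hu0 : u 0 = X 0 ^ c) (hu1 : u 1 = X 0 ^ b * X 1 ^ a)
    (hu2 : u 2 = X 0 ^ a * X 1 ^ b) (hu3 : u 3 = X 1 ^ c)
    (I mm : Ideal (MvPolynomial (Fin 2) K))
    (hI : I = Ideal.span {u 0, u 1, u 2, u 3})
    (hmm : mm = Ideal.span {(X 0 : MvPolynomial (Fin 2) K), X 1})
    (J : Ideal (MvPolynomial (Fin 4) K))
    (hJ : ∀ f : MvPolynomial (Fin 4) K,
      f ∈ J ↔ ∀ d : ℕ, aeval u (homogeneousComponent d f) ∈ mm * I ^ d)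
    :
    (X 0 : MvPolynomial (Fin 4) K) ^ ((b - a) / Nat.gcd c (b - a)) *
        X 2 ^ (c / Nat.gcd c (b - a)) -
      X 1 ^ (c / Nat.gcd c (b - a)) * X 3 ^ ((b - a) / Nat.gcd c (b - a)) ∈ J :=
  stmt_9_general a b c hab u hu0 hu1 hu2 hu3 I mm J hJ
end

section
/- Assume a + b > c, and suppose that for some integer r ≥ 2 one has J = (z_2·z_3, z_2^r, z_3^r). Then the images of z_1 and z_4 form a regular sequence on the quotient ring T/J; in particular F(I) = T/J is Cohen–Macaulay. -/
set_option synthInstance.maxHeartbeats 1000000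
set_option maxHeartbeats 1000000
open MvPolynomial

open scoped Pointwise in
private lemma mem_smul_top_iff' {R M : Type*} [CommRing R] [AddCommGroup M] [Module R M]
    (r : R) (z : M) : z ∈ r • (⊤ : Submodule R M) ↔ ∃ y, r • y = z := by
  rw [← SetLike.mem_coe, Submodule.coe_pointwise_smul, Set.mem_smul_set]
  simp

private lemma finsupp_le_of_le_single_add {i : Fin 4} {s m : Fin 4 →₀ ℕ}
    (hs : s i = 0) {k : ℕ} (h : s ≤ Finsupp.single i k + m) : s ≤ m := by
  rw [Finsupp.le_def] at h ⊢
  intro j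
  rcases eq_or_ne j i with rfl | hj
  · simp [hs]
  · have := h j
    rwa [Finsupp.add_apply, Finsupp.single_apply, if_neg (Ne.symm hj), zero_add] at this

private lemma x_mul_mem_span_monomial {K : Type*} [Field K] {S : Set (Fin 4 →₀ ℕ)}
    {i : Fin 4} (hS : ∀ s ∈ S, s i = 0) {f : MvPolynomial (Fin 4) K}
    (h : X i * f ∈ Ideal.span ((fun s => monomial s (1 : K)) '' S)) :
    f ∈ Ideal.span ((fun s => monomial s (1 : K)) '' S) := by
  rw [mem_ideal_span_monomial_image] at h ⊢
  intro m hm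
  have hm' : Finsupp.single i 1 + m ∈ (X i * f).support := by
    rw [mem_support_iff, coeff_X_mul]
    exact mem_support_iff.mp hm
  obtain ⟨s, hsS, hs⟩ := h _ hm'
  exact ⟨s, hsS, finsupp_le_of_le_single_add (hS s hsS) hs⟩

theorem stmt_11 {K : Type*} [Field K] (a b c : ℕ)
    (ha : 0 < a) (hab : a < b) (hbc : b < c)
    (hgcd : Nat.gcd a (Nat.gcd b c) = 1)
    (u : Fin 4 → MvPolynomial (Fin 2) K)
    (hu0 : u 0 = X 0 ^ c) (hu1 : u 1 = X 0 ^ b * X 1 ^ a)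
    (hu2 : u 2 = X 0 ^ a * X 1 ^ b) (hu3 : u 3 = X 1 ^ c)
    (I mm : Ideal (MvPolynomial (Fin 2) K))
    (hI : I = Ideal.span {u 0, u 1, u 2, u 3})
    (hmm : mm = Ideal.span {(X 0 : MvPolynomial (Fin 2) K), X 1})
    (J : Ideal (MvPolynomial (Fin 4) K))
    (hJ : ∀ f : MvPolynomial (Fin 4) K,
      f ∈ J ↔ ∀ d : ℕ, aeval u (homogeneousComponent d f) ∈ mm * I ^ d)
    (habc : c < a + b) (r : ℕ) (hr : 2 ≤ r)
    (hJgen : J = Ideal.span {(X 1 * X 2 : MvPolynomial (Fin 4) K), X 1 ^ r, X 2 ^ r}) :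
    RingTheory.Sequence.IsRegular (MvPolynomial (Fin 4) K ⧸ J)
      [Ideal.Quotient.mk J (X 0), Ideal.Quotient.mk J (X 3)] := by
  classical
  -- the exponent vectors of the generators
  set s12 : Fin 4 →₀ ℕ := Finsupp.single 1 1 + Finsupp.single 2 1 with hs12
  set T3 : Set (Fin 4 →₀ ℕ) := {s12, Finsupp.single 1 r, Finsupp.single 2 r} with hT3
  set T4 : Set (Fin 4 →₀ ℕ) := insert (Finsupp.single 0 1) T3 with hT4
  set T5 : Set (Fin 4 →₀ ℕ) := insert (Finsupp.single 3 1) T4 with hT5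
  have hX0 : (X 0 : MvPolynomial (Fin 4) K) = monomial (Finsupp.single 0 1) 1 := by
    rw [← pow_one (X 0 : MvPolynomial (Fin 4) K), X_pow_eq_monomial]
  have hX3 : (X 3 : MvPolynomial (Fin 4) K) = monomial (Finsupp.single 3 1) 1 := by
    rw [← pow_one (X 3 : MvPolynomial (Fin 4) K), X_pow_eq_monomial]
  have hXX : (X 1 * X 2 : MvPolynomial (Fin 4) K) = monomial s12 1 := by
    rw [← pow_one (X 1 : MvPolynomial (Fin 4) K), ← pow_one (X 2 : MvPolynomial (Fin 4) K),
      X_pow_eq_monomial, X_pow_eq_monomial, monomial_mul, one_mul]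
  have hJ' : J = Ideal.span ((fun s => monomial s (1 : K)) '' T3) := by
    rw [hJgen]
    congr 1
    rw [hT3, Set.image_insert_eq, Set.image_insert_eq, Set.image_singleton,
      hXX, X_pow_eq_monomial, X_pow_eq_monomial]
  have hsup : J ⊔ Ideal.span {(X 0 : MvPolynomial (Fin 4) K)} =
      Ideal.span ((fun s => monomial s (1 : K)) '' T4) := by
    have himg : ((fun s => monomial s (1 : K)) '' T4) =
        insert (monomial (Finsupp.single 0 1) (1 : K))
          ((fun s => monomial s (1 : K)) '' T3) := by
      rw [hT4, Set.image_insert_eq]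
    rw [himg, Ideal.span_insert, hJ', hX0]
    exact sup_comm _ _
  have hT3_0 : ∀ s ∈ T3, s 0 = 0 := by
    rintro s hs
    rcases hs with rfl | rfl | rfl <;>
      simp [hs12, Finsupp.single_apply, Finsupp.add_apply, (by decide : (1 : Fin 4) ≠ 0),
        (by decide : (2 : Fin 4) ≠ 0)]
  have hT4_3 : ∀ s ∈ T4, s 3 = 0 := by
    rintro s hs
    rcases hs with rfl | rfl | rfl | rfl <;>
      simp [hs12, Finsupp.single_apply, Finsupp.add_apply, (by decide : (0 : Fin 4) ≠ 3),
        (by decide : (1 : Fin 4) ≠ 3), (by decide : (2 : Fin 4) ≠ 3)]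
  -- Step 1: X 0 is regular on T/J
  have hA : IsSMulRegular (MvPolynomial (Fin 4) K ⧸ J) (Ideal.Quotient.mk J (X 0)) := by
    intro p q hpq
    obtain ⟨f, rfl⟩ := Ideal.Quotient.mk_surjective p
    obtain ⟨g, rfl⟩ := Ideal.Quotient.mk_surjective q
    simp only [smul_eq_mul, ← map_mul] at hpq
    rw [Ideal.Quotient.eq] at hpq ⊢
    have hx : X 0 * (f - g) ∈ J := by rw [mul_sub]; exact hpq
    rw [hJ'] at hx ⊢
    exact x_mul_mem_span_monomial hT3_0 hx
  -- Step 2: X 3 is regular on (T/J)/(X 0)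
  have hB : IsSMulRegular
      (QuotSMulTop (Ideal.Quotient.mk J (X 0)) (MvPolynomial (Fin 4) K ⧸ J))
      (Ideal.Quotient.mk J (X 3)) := by
    intro p q hpq
    obtain ⟨z, rfl⟩ := Submodule.Quotient.mk_surjective _ p
    obtain ⟨w, rfl⟩ := Submodule.Quotient.mk_surjective _ q
    dsimp only at hpq
    rw [← Submodule.Quotient.mk_smul, ← Submodule.Quotient.mk_smul,
      Submodule.Quotient.eq, ← smul_sub] at hpq
    obtain ⟨t, ht⟩ := (mem_smul_top_iff' _ _).mp hpq
    obtain ⟨f, hf⟩ := Ideal.Quotient.mk_surjective (z - w)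
    obtain ⟨g, hg⟩ := Ideal.Quotient.mk_surjective t
    have hzw : Ideal.Quotient.mk J (X 3 * f - X 0 * g) = 0 := by
      rw [map_sub, map_mul, map_mul, hf, hg, sub_eq_zero,
        ← smul_eq_mul, ← smul_eq_mul, ← ht]
    rw [Ideal.Quotient.eq_zero_iff_mem] at hzw
    have hmem4 : X 3 * f ∈ Ideal.span ((fun s => monomial s (1 : K)) '' T4) := by
      have h1 : X 3 * f - X 0 * g ∈ Ideal.span ((fun s => monomial s (1 : K)) '' T4) := by
        rw [← hsup]; exact Ideal.mem_sup_left hzw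
      have h2 : X 0 * g ∈ Ideal.span ((fun s => monomial s (1 : K)) '' T4) := by
        rw [← hsup]
        exact Ideal.mem_sup_right (Ideal.mul_mem_right g _ (Ideal.subset_span rfl))
      have := Ideal.add_mem _ h1 h2
      rwa [sub_add_cancel] at this
    have hf4 : f ∈ Ideal.span ((fun s => monomial s (1 : K)) '' T4) :=
      x_mul_mem_span_monomial hT4_3 hmem4
    rw [← hsup] at hf4
    obtain ⟨y, hy, v, hv, hyv⟩ := Submodule.mem_sup.mp hf4
    obtain ⟨h', hh'⟩ := Ideal.mem_span_singleton'.mp hv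
    rw [Submodule.Quotient.eq]
    rw [mem_smul_top_iff']
    refine ⟨Ideal.Quotient.mk J h', ?_⟩
    have : z - w = Ideal.Quotient.mk J (y + h' * X 0) := by rw [← hyv] at hf; rw [← hf, hh']
    rw [this, map_add, Ideal.Quotient.eq_zero_iff_mem.mpr hy, zero_add, map_mul,
      smul_eq_mul, mul_comm]
  -- Step 3: properness
  have hC : (⊤ : Submodule (MvPolynomial (Fin 4) K ⧸ J) (MvPolynomial (Fin 4) K ⧸ J)) ≠
      Ideal.ofList [Ideal.Quotient.mk J (X 0), Ideal.Quotient.mk J (X 3)] • ⊤ := by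
    intro htop
    set I' : Ideal (MvPolynomial (Fin 4) K ⧸ J) :=
      Ideal.ofList [Ideal.Quotient.mk J (X 0), Ideal.Quotient.mk J (X 3)] with hI'
    have h1 : (1 : MvPolynomial (Fin 4) K ⧸ J) ∈ I' • (⊤ : Submodule _ _) :=
      htop ▸ Submodule.mem_top
    have hle : I' • (⊤ : Submodule (MvPolynomial (Fin 4) K ⧸ J) _) ≤ I' :=
      Submodule.smul_le.mpr fun x hx n _ => by
        simpa [smul_eq_mul] using Ideal.mul_mem_right n _ hx
    have h2 : (1 : MvPolynomial (Fin 4) K ⧸ J) ∈ I' := hle h1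
    rw [hI', Ideal.ofList_cons, Ideal.ofList_cons, Ideal.ofList_nil, sup_bot_eq] at h2
    obtain ⟨p, hp, q, hq, hpq⟩ := Submodule.mem_sup.mp h2
    obtain ⟨p', hp'⟩ := Ideal.mem_span_singleton'.mp hp
    obtain ⟨q', hq'⟩ := Ideal.mem_span_singleton'.mp hq
    obtain ⟨pf, hpf⟩ := Ideal.Quotient.mk_surjective p'
    obtain ⟨qf, hqf⟩ := Ideal.Quotient.mk_surjective q'
    have hone : Ideal.Quotient.mk J (pf * X 0 + qf * X 3 - 1) = 0 := by
      rw [map_sub, map_add, map_mul, map_mul, hpf, hqf, map_one, sub_eq_zero, hp', hq', hpq]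
    rw [Ideal.Quotient.eq_zero_iff_mem] at hone
    have hone5 : (1 : MvPolynomial (Fin 4) K) ∈
        Ideal.span ((fun s => monomial s (1 : K)) '' T5) := by
      have hJle : J ≤ Ideal.span ((fun s => monomial s (1 : K)) '' T5) := by
        rw [hJ']
        refine Ideal.span_mono (Set.image_mono ?_)
        intro x hx
        exact Set.mem_insert_of_mem _ (Set.mem_insert_of_mem _ hx)
      have hx0 : (X 0 : MvPolynomial (Fin 4) K) ∈
          Ideal.span ((fun s => monomial s (1 : K)) '' T5) := by
        refine Ideal.subset_span ⟨Finsupp.single 0 1, ?_, hX0.symm⟩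
        exact Set.mem_insert_of_mem _ (Set.mem_insert _ _)
      have hx3 : (X 3 : MvPolynomial (Fin 4) K) ∈
          Ideal.span ((fun s => monomial s (1 : K)) '' T5) := by
        exact Ideal.subset_span ⟨Finsupp.single 3 1, Set.mem_insert _ _, hX3.symm⟩
      have : pf * X 0 + qf * X 3 - (pf * X 0 + qf * X 3 - 1) = 1 := by ring
      rw [← this]
      exact Ideal.sub_mem _
        (Ideal.add_mem _ (Ideal.mul_mem_left _ pf hx0) (Ideal.mul_mem_left _ qf hx3))
        (hJle hone)
    rw [mem_ideal_span_monomial_image] at hone5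
    have h0supp : (0 : Fin 4 →₀ ℕ) ∈ (1 : MvPolynomial (Fin 4) K).support := by
      rw [mem_support_iff, coeff_zero_one]
      exact one_ne_zero
    obtain ⟨s, hsT5, hs0⟩ := hone5 _ h0supp
    have hs : s = 0 := le_antisymm hs0 zero_le
    have hr1 : (1 : ℕ) ≤ r := le_trans (by norm_num) hr
    rcases hsT5 with rfl | rfl | rfl | rfl | rfl
    · have h := DFunLike.congr_fun hs 3
      simp [Finsupp.single_apply] at h
    · have h := DFunLike.congr_fun hs 0
      simp [Finsupp.single_apply] at h
    · have h := DFunLike.congr_fun hs 1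
      simp [hs12, Finsupp.single_apply, Finsupp.add_apply,
        (by decide : (2 : Fin 4) ≠ 1)] at h
    · have h := DFunLike.congr_fun hs 1
      simp [Finsupp.single_apply] at h
      omega
    · have h := DFunLike.congr_fun hs 2
      simp [Finsupp.single_apply] at h
      omega
  refine ⟨?_, hC⟩
  exact RingTheory.Sequence.IsWeaklyRegular.cons hA
    ((RingTheory.Sequence.isWeaklyRegular_singleton_iff _ _).mpr hB)
end
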